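/- arXiv:1103.3759 — 7 statements merged into one kernel-verified Lean document; each statement's English description precedes it below -/
import Mathlib

section
/- Let τ be an infinite cardinal, let X be a τ-collectionwise normal space, let E be a Banach space with topological weight w(E) ≤ τ, let 0 ≤ α < 1, and let φ : X → C'_α(E) be a lower semicontinuous set-valued mapping (i.e., each value φ(x) is either a nonempty compact α-paraconvex subset of E or is E itself). Then φ admits a continuous selection, i.e., a continuous map f : X → E with f(x) ∈ φ(x) for every x ∈ X. -/
open Set Metric Filter Topology Cardinal

universe u v

/-- A set-valued mapping is lower semicontinuous if the preimage
`φ⁻¹(U) = {x | φ x ∩ U ≠ ∅}` is open for every open `U`. -/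
def LowerSemicontinuousSV {X : Type*} {E : Type*} [TopologicalSpace X] [TopologicalSpace E]
    (φ : X → Set E) : Prop :=
  ∀ U : Set E, IsOpen U → IsOpen {x : X | (φ x ∩ U).Nonempty}

/-- An indexed family of sets is discrete if every point has a neighbourhood
meeting at most one member of the family. -/
def IsDiscreteFam {X : Type*} [TopologicalSpace X] {ι : Type*} (D : ι → Set X) : Prop :=
  ∀ x : X, ∃ V ∈ nhds x, ∀ i j : ι, (V ∩ D i).Nonempty → (V ∩ D j).Nonempty → i = j

/-- A space is `τ`-collectionwise normal if every discrete family of at most `τ`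
closed sets can be separated by a discrete family of open sets. -/
def CollectionwiseNormalOfCard (X : Type u) [TopologicalSpace X] (τ : Cardinal.{u}) : Prop :=
  ∀ (ι : Type u) (D : ι → Set X), Cardinal.mk ι ≤ τ → (∀ i, IsClosed (D i)) →
    IsDiscreteFam D →
    ∃ U : ι → Set X, (∀ i, IsOpen (U i) ∧ D i ⊆ U i) ∧ IsDiscreteFam U

/-- The topological weight: the least cardinality of a base of the topology. -/
noncomputable def topWeight (E : Type v) [TopologicalSpace E] : Cardinal.{v} :=
  ⨅ B : {B : Set (Set E) // TopologicalSpace.IsTopologicalBasis B}, Cardinal.mk B.1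

/-- A set `P` is `α`-paraconvex if whenever `r > 0` and `d(p,P) < r`, then
`d(q,P) ≤ α·r` for every `q` in the convex hull of `B_r(p) ∩ P`. -/
def Paraconvex {E : Type*} [NormedAddCommGroup E] [NormedSpace ℝ E] (α : ℝ) (P : Set E) : Prop :=
  ∀ r : ℝ, 0 < r → ∀ p : E, Metric.infDist p P < r →
    ∀ q ∈ convexHull ℝ (Metric.ball p r ∩ P), Metric.infDist q P ≤ α * r

section Helpers

variable {X : Type u} [TopologicalSpace X]

theorem IsDiscreteFam.eq_of_mem {ι : Type*} {D : ι → Set X} (h : IsDiscreteFam D)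
    {i j : ι} {x : X} (hi : x ∈ D i) (hj : x ∈ D j) : i = j := by
  obtain ⟨V, hV, huniq⟩ := h x
  exact huniq i j ⟨x, mem_of_mem_nhds hV, hi⟩ ⟨x, mem_of_mem_nhds hV, hj⟩

theorem IsDiscreteFam.mono {ι : Type*} {D D' : ι → Set X} (h : IsDiscreteFam D)
    (hsub : ∀ i, D' i ⊆ D i) : IsDiscreteFam D' := by
  intro x
  obtain ⟨V, hV, huniq⟩ := h x
  exact ⟨V, hV, fun i j hi hj => huniq i j
    (hi.mono (inter_subset_inter_right V (hsub i)))
    (hj.mono (inter_subset_inter_right V (hsub j)))⟩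

theorem IsDiscreteFam.isClosed_iUnion {ι : Type*} {D : ι → Set X} (h : IsDiscreteFam D)
    (hcl : ∀ i, IsClosed (D i)) : IsClosed (⋃ i, D i) := by
  rw [← isOpen_compl_iff, isOpen_iff_mem_nhds]
  intro x hx
  obtain ⟨V, hV, huniq⟩ := h x
  by_cases hex : ∃ i, (V ∩ D i).Nonempty
  · obtain ⟨i₀, hi₀⟩ := hex
    have hxD : x ∉ D i₀ := fun hmem => hx (mem_iUnion.2 ⟨i₀, hmem⟩)
    refine mem_of_superset (Filter.inter_mem hV ((hcl i₀).isOpen_compl.mem_nhds hxD)) ?_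
    rintro y ⟨hyV, hyc⟩ hyU
    obtain ⟨j, hyj⟩ := mem_iUnion.1 hyU
    have := huniq j i₀ ⟨y, hyV, hyj⟩ hi₀
    exact hyc (this ▸ hyj)
  · refine mem_of_superset hV ?_
    intro y hyV hyU
    obtain ⟨j, hyj⟩ := mem_iUnion.1 hyU
    exact hex ⟨j, y, hyV, hyj⟩

theorem normalSpace_of_cwn [T1Space X] {τ : Cardinal.{u}} (hτ : Cardinal.aleph0 ≤ τ)
    (hX : CollectionwiseNormalOfCard X τ) : NormalSpace X := by
  refine ⟨fun s t hs ht hd => ?_⟩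
  set D : ULift.{u} Bool → Set X := fun b => if b.down then s else t with hD
  have hDcl : ∀ b, IsClosed (D b) := by
    rintro ⟨b⟩; cases b <;> simpa [D]
  have hst : ∀ y, y ∈ s → y ∉ t := fun y hy => Set.disjoint_left.mp hd hy
  have hdisc : IsDiscreteFam D := by
    intro x
    by_cases hxs : x ∈ s
    · refine ⟨tᶜ, ht.isOpen_compl.mem_nhds (hst x hxs), ?_⟩
      rintro ⟨i⟩ ⟨j⟩ hi hj
      cases i <;> cases j <;> first
          | rfl
          | (exfalso;
             first
               | (obtain ⟨y, hy1, hy2⟩ := hi; exact hy1 (by simpa [D] using hy2))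
               | (obtain ⟨y, hy1, hy2⟩ := hj; exact hy1 (by simpa [D] using hy2)))
    · by_cases hxt : x ∈ t
      · refine ⟨sᶜ, hs.isOpen_compl.mem_nhds hxs, ?_⟩
        rintro ⟨i⟩ ⟨j⟩ hi hj
        cases i <;> cases j <;> first
          | rfl
          | (exfalso;
             first
               | (obtain ⟨y, hy1, hy2⟩ := hi; exact hy1 (by simpa [D] using hy2))
               | (obtain ⟨y, hy1, hy2⟩ := hj; exact hy1 (by simpa [D] using hy2)))
      · refine ⟨sᶜ ∩ tᶜ, Filter.inter_mem (hs.isOpen_compl.mem_nhds hxs)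
          (ht.isOpen_compl.mem_nhds hxt), ?_⟩
        rintro ⟨i⟩ ⟨j⟩ hi hj
        exfalso
        obtain ⟨y, hy1, hy2⟩ := hi
        cases i
        · exact hy1.2 (by simpa [D] using hy2)
        · exact hy1.1 (by simpa [D] using hy2)
  obtain ⟨U, hU, hUdisc⟩ := hX (ULift Bool) D (le_trans Cardinal.mk_le_aleph0 hτ) hDcl hdisc
  refine ⟨U ⟨true⟩, U ⟨false⟩, (hU ⟨true⟩).1, (hU ⟨false⟩).1, ?_, ?_, ?_⟩
  · simpa [D] using (hU ⟨true⟩).2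
  · simpa [D] using (hU ⟨false⟩).2
  · rw [Set.disjoint_iff_inter_eq_empty]
    by_contra hne
    obtain ⟨x, hx1, hx2⟩ := nonempty_iff_ne_empty.2 hne
    have := hUdisc.eq_of_mem hx1 hx2
    simpa using congrArg ULift.down this

end Helpers

section Weight

variable {E : Type v} [TopologicalSpace E]

theorem exists_dense_card_le_of_topWeight_le {τ : Cardinal.{v}} (hw : topWeight E ≤ τ) :
    ∃ S : Set E, Dense S ∧ Cardinal.mk S ≤ τ := by
  -- first extract a basis of cardinality ≤ τ
  have hbasis : ∃ B : {B : Set (Set E) // TopologicalSpace.IsTopologicalBasis B},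
      Cardinal.mk B.1 ≤ τ := by
    by_contra hcon
    push_neg at hcon
    haveI : Nonempty {B : Set (Set E) // TopologicalSpace.IsTopologicalBasis B} :=
      ⟨⟨_, TopologicalSpace.isTopologicalBasis_opens⟩⟩
    have : Order.succ τ ≤ topWeight E := le_ciInf fun B => Order.succ_le_of_lt (hcon B)
    exact absurd (lt_of_lt_of_le (Order.lt_succ τ) (le_trans this hw)) (lt_irrefl τ)
  obtain ⟨⟨B, hB⟩, hBcard⟩ := hbasis
  classical
  set pick : {b : Set E // b ∈ B ∧ b.Nonempty} → E := fun b => b.2.2.some with hpick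
  refine ⟨Set.range pick, ?_, ?_⟩
  · rw [dense_iff_inter_open]
    rintro U hU ⟨y, hy⟩
    obtain ⟨v, hvB, hyv, hvU⟩ := hB.exists_subset_of_mem_open hy hU
    exact ⟨pick ⟨v, hvB, ⟨y, hyv⟩⟩, hvU (Set.Nonempty.some_mem _), Set.mem_range_self _⟩
  · calc Cardinal.mk (Set.range pick) ≤ Cardinal.mk {b : Set E // b ∈ B ∧ b.Nonempty} :=
          Cardinal.mk_range_le
      _ ≤ Cardinal.mk B := Cardinal.mk_subtype_le_of_subset (fun b hb => hb.1)
      _ ≤ τ := hBcard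

end Weight

section Card

theorem mk_finset_le {ι : Type u} {τ : Cardinal.{u}} (hτ : Cardinal.aleph0 ≤ τ)
    (h : Cardinal.mk ι ≤ τ) : Cardinal.mk (Finset ι) ≤ τ := by
  by_cases hfin : Finite ι
  · haveI := hfin
    exact le_trans Cardinal.mk_le_aleph0 hτ
  · haveI : Infinite ι := not_finite_iff_infinite.mp hfin
    rw [Cardinal.mk_finset_of_infinite]
    exact h

end Card

section Partition

variable {X : Type u} [TopologicalSpace X] {ι : Type u}

/-- Points contained in at most `m` members of the family `A`. -/
def Xle (A : ι → Set X) (m : ℕ) : Set X :=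
  {x | ∀ F : Finset ι, (∀ i ∈ F, x ∈ A i) → F.card ≤ m}

theorem isClosed_Xle (A : ι → Set X) (hAo : ∀ i, IsOpen (A i)) (m : ℕ) :
    IsClosed (Xle A m) := by
  rw [← isOpen_compl_iff]
  have hc : (Xle A m)ᶜ = ⋃ (F : Finset ι) (_ : m + 1 ≤ F.card), ⋂ i ∈ F, A i := by
    ext x
    simp only [mem_compl_iff, Xle, mem_setOf_eq, mem_iUnion, Set.mem_iInter]
    constructor
    · intro h
      push_neg at h
      obtain ⟨F, hall, hcard⟩ := h
      exact ⟨F, hcard, hall⟩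
    · rintro ⟨F, hcard, hall⟩
      push_neg
      exact ⟨F, hall, hcard⟩
  rw [hc]
  exact isOpen_iUnion fun F => isOpen_iUnion fun _ => isOpen_biInter_finset fun i _ => hAo i

theorem notXle_exists {A : ι → Set X} {m : ℕ} {x : X} (hx : x ∉ Xle A m) :
    ∃ F : Finset ι, (∀ i ∈ F, x ∈ A i) ∧ F.card = m + 1 := by
  simp only [Xle, mem_setOf_eq] at hx
  push_neg at hx
  obtain ⟨F, hall, hcard⟩ := hx
  obtain ⟨F₀, hsub, hc⟩ := Finset.exists_subset_card_eq (Nat.succ_le_of_lt hcard)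
  exact ⟨F₀, fun i hi => hall i (hsub hi), hc⟩

theorem exists_stage [T1Space X] [NormalSpace X] {τ : Cardinal.{u}} (hτ : Cardinal.aleph0 ≤ τ)
    (hX : CollectionwiseNormalOfCard X τ) (hmk : Cardinal.mk ι ≤ τ)
    (A : ι → Set X) (hAo : ∀ i, IsOpen (A i)) (m : ℕ) (G : Set X) :
    ∃ p : (Finset ι → Set X) × (Finset ι → X → ℝ),
      (∀ F, IsOpen (p.1 F)) ∧ (∀ F, Continuous (p.2 F)) ∧
      (∀ F x, p.2 F x ∈ Set.Icc (0:ℝ) 1) ∧ (∀ F x, x ∉ p.1 F → p.2 F x = 0) ∧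
      (IsOpen G → Xle A m ⊆ G →
        (IsDiscreteFam p.1 ∧ (∀ F, p.1 F ⊆ ⋂ i ∈ F, A i) ∧
         (∀ F, (p.1 F).Nonempty → F.card = m + 1) ∧
         (∀ x, x ∈ Xle A (m+1) → x ∉ G → ∃ F, p.2 F x = 1))) := by
  classical
  by_cases hinv : IsOpen G ∧ Xle A m ⊆ G
  case neg =>
    exact ⟨⟨fun _ => ∅, fun _ _ => 0⟩, fun F => isOpen_empty, fun F => continuous_const,
      fun F x => ⟨le_rfl, zero_le_one⟩, fun F x _ => rfl,
      fun h1 h2 => absurd ⟨h1, h2⟩ hinv⟩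
  obtain ⟨hGo, hGinv⟩ := hinv
  have hbig : ∀ x, x ∉ G → ∃ F₀ : Finset ι, (∀ i ∈ F₀, x ∈ A i) ∧ F₀.card = m + 1 :=
    fun x hxG => notXle_exists (fun h => hxG (hGinv h))
  set B : Finset ι → Set X := fun F =>
    if F.card = m + 1 then Xle A (m+1) ∩ (⋂ j, ⋂ (_ : j ∉ F), (A j)ᶜ) ∩ Gᶜ else ∅ with hB
  have hBcl : ∀ F, IsClosed (B F) := by
    intro F
    rw [hB]
    dsimp only
    split
    · exact ((isClosed_Xle A hAo (m+1)).inter (isClosed_iInter fun j =>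
        isClosed_iInter fun _ => (hAo j).isClosed_compl)).inter hGo.isClosed_compl
    · exact isClosed_empty
  have hBmem : ∀ F x, x ∈ B F →
      F.card = m + 1 ∧ x ∈ Xle A (m+1) ∧ (∀ j, j ∉ F → x ∉ A j) ∧ x ∉ G := by
    intro F x hx
    rw [hB] at hx
    dsimp only at hx
    split at hx
    · next hcard =>
      refine ⟨hcard, hx.1.1, ?_, hx.2⟩
      intro j hj
      have := hx.1.2
      simp only [Set.mem_iInter, mem_compl_iff] at this
      exact this j hj
    · exact absurd hx (Set.notMem_empty x)
  have hBsub : ∀ F x, x ∈ B F → ∀ i ∈ F, x ∈ A i := by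
    intro F x hx i hi
    obtain ⟨hcard, _, hout, hxG⟩ := hBmem F x hx
    obtain ⟨F₀, hF₀all, hF₀c⟩ := hbig x hxG
    have hsub : F₀ ⊆ F := fun j hj => by_contra fun hjF => (hout j hjF) (hF₀all j hj)
    have heq : F₀ = F := Finset.eq_of_subset_of_card_le hsub (by rw [hF₀c, hcard])
    exact hF₀all i (heq ▸ hi)
  have hBdisc : IsDiscreteFam B := by
    intro x
    by_cases hxG : x ∈ G
    · refine ⟨G, hGo.mem_nhds hxG, fun F F' hF hF' => ?_⟩
      exfalso
      obtain ⟨y, hyG, hyB⟩ := hF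
      exact (hBmem F y hyB).2.2.2 hyG
    obtain ⟨F₀, hF₀all, hF₀c⟩ := hbig x hxG
    by_cases hxle : x ∈ Xle A (m+1)
    · refine ⟨⋂ i ∈ F₀, A i, (isOpen_biInter_finset fun i _ => hAo i).mem_nhds
        (Set.mem_iInter₂.2 hF₀all), ?_⟩
      have hkey : ∀ F, ((⋂ i ∈ F₀, A i) ∩ B F).Nonempty → F = F₀ := by
        rintro F ⟨y, hyV, hyB⟩
        obtain ⟨hcard, _, hout, _⟩ := hBmem F y hyB
        have hsub : F₀ ⊆ F := by
          intro j hj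
          by_contra hjF
          exact (hout j hjF) (Set.mem_iInter₂.1 hyV j hj)
        exact (Finset.eq_of_subset_of_card_le hsub (by rw [hF₀c, hcard])).symm
      exact fun F F' hF hF' => (hkey F hF).trans (hkey F' hF').symm
    · obtain ⟨F₁, hF₁all, hF₁c⟩ := notXle_exists hxle
      refine ⟨⋂ i ∈ F₁, A i, (isOpen_biInter_finset fun i _ => hAo i).mem_nhds
        (Set.mem_iInter₂.2 hF₁all), ?_⟩
      intro F F' hF hF'
      exfalso
      obtain ⟨y, hyV, hyB⟩ := hF
      obtain ⟨hcard, _, hout, _⟩ := hBmem F y hyB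
      have hsub : F₁ ⊆ F := by
        intro j hj
        by_contra hjF
        exact (hout j hjF) (Set.mem_iInter₂.1 hyV j hj)
      have := Finset.card_le_card hsub
      omega
  obtain ⟨U, hU, hUdisc⟩ := hX (Finset ι) B (mk_finset_le hτ hmk) hBcl hBdisc
  set O : Finset ι → Set X := fun F =>
    if F.card = m + 1 then U F ∩ ⋂ i ∈ F, A i else ∅ with hO
  have hOsubU : ∀ F, O F ⊆ U F := by
    intro F
    rw [hO]
    dsimp only
    split
    · exact Set.inter_subset_left
    · exact Set.empty_subset _
  have hOo : ∀ F, IsOpen (O F) := by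
    intro F
    rw [hO]
    dsimp only
    split
    · exact (hU F).1.inter (isOpen_biInter_finset fun i _ => hAo i)
    · exact isOpen_empty
  have hBO : ∀ F, B F ⊆ O F := by
    intro F x hx
    obtain ⟨hcard, _, _, _⟩ := hBmem F x hx
    rw [hO]
    dsimp only
    rw [if_pos hcard]
    exact ⟨(hU F).2 hx, Set.mem_iInter₂.2 (hBsub F x hx)⟩
  have hq : ∀ F, ∃ q : X → ℝ, Continuous q ∧ (∀ x, q x ∈ Set.Icc (0:ℝ) 1) ∧
      (∀ x, x ∉ O F → q x = 0) ∧ (∀ x ∈ B F, q x = 1) := by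
    intro F
    obtain ⟨f, hf0, hf1, hf01⟩ := exists_continuous_zero_one_of_isClosed
      (hOo F).isClosed_compl (hBcl F)
      (Set.disjoint_left.2 fun y hyc hyB => hyc (hBO F hyB))
    exact ⟨f, f.continuous, hf01, fun x hx => hf0 hx, fun x hx => hf1 hx⟩
  choose q hqc hq01 hq0 hq1 using hq
  refine ⟨⟨O, q⟩, hOo, hqc, fun F x => hq01 F x, fun F x => hq0 F x, fun _ _ => ?_⟩
  refine ⟨hUdisc.mono hOsubU, ?_, ?_, ?_⟩
  · intro F
    rw [hO]
    dsimp only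
    split
    · exact Set.inter_subset_right
    · exact Set.empty_subset _
  · intro F hFne
    by_contra hcard
    rw [hO] at hFne
    dsimp only at hFne
    rw [if_neg hcard] at hFne
    exact Set.not_nonempty_empty hFne
  · intro x hxle hxG
    obtain ⟨F₀, hF₀all, hF₀c⟩ := hbig x hxG
    refine ⟨F₀, hq1 F₀ x ?_⟩
    rw [hB]
    dsimp only
    rw [if_pos hF₀c]
    refine ⟨⟨hxle, ?_⟩, hxG⟩
    simp only [Set.mem_iInter, mem_compl_iff]
    intro j hj hxAj
    -- j ∉ F₀ but x ∈ A j : then F₀ ∪ {j} is a clique of size m+2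
    have hall : ∀ i ∈ insert j F₀, x ∈ A i := by
      intro i hi
      rcases Finset.mem_insert.1 hi with h | h
      · exact h ▸ hxAj
      · exact hF₀all i h
    have hcard : (insert j F₀).card = m + 2 := by
      rw [Finset.card_insert_of_notMem hj, hF₀c]
    have := hxle (insert j F₀) hall
    omega

end Partition

section PartitionMain

variable {X : Type u} [TopologicalSpace X] {ι : Type u}

theorem partition [T1Space X] [NormalSpace X] {τ : Cardinal.{u}} (hτ : Cardinal.aleph0 ≤ τ)
    (hX : CollectionwiseNormalOfCard X τ) (hmk : Cardinal.mk ι ≤ τ)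
    (A : ι → Set X) (hAo : ∀ i, IsOpen (A i)) (hAcov : ∀ x, ∃ i, x ∈ A i) :
    ∃ (O : ℕ → Finset ι → Set X) (Q : ℕ → Finset ι → X → ℝ),
      (∀ m F, IsOpen (O m F)) ∧ (∀ m, IsDiscreteFam (O m)) ∧
      (∀ m F, O m F ⊆ ⋂ i ∈ F, A i) ∧
      (∀ m F, (O m F).Nonempty → F.card = m ∧ 0 < m) ∧
      (∀ m F, Continuous (Q m F)) ∧ (∀ m F x, Q m F x ∈ Set.Icc (0:ℝ) 1) ∧
      (∀ m F x, x ∉ O m F → Q m F x = 0) ∧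
      (∀ x, {i | x ∈ A i}.Finite → ∃ m F, 1/2 < Q m F x) := by
  classical
  set st : ℕ → ((Finset ι → Set X) × (Finset ι → X → ℝ)) × Set X :=
    fun m => Nat.rec ⟨⟨fun _ => ∅, fun _ _ => 0⟩, ∅⟩
      (fun m prev =>
        let p := (exists_stage hτ hX hmk A hAo m prev.2).choose
        ⟨p, prev.2 ∪ ⋃ F, {x | 1/2 < p.2 F x}⟩) m with hst
  have hsucc : ∀ m, st (m+1) =
      ⟨(exists_stage hτ hX hmk A hAo m (st m).2).choose,
        (st m).2 ∪ ⋃ F, {x | 1/2 < (exists_stage hτ hX hmk A hAo m (st m).2).choose.2 F x}⟩ :=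
    fun m => rfl
  have hspec : ∀ m, _ := fun m => (exists_stage hτ hX hmk A hAo m (st m).2).choose_spec
  -- invariant
  have hInv : ∀ m, IsOpen (st m).2 ∧ Xle A m ⊆ (st m).2 := by
    intro m
    induction m with
    | zero =>
      refine ⟨isOpen_empty, ?_⟩
      intro x hx
      obtain ⟨i₀, hi₀⟩ := hAcov x
      have := hx {i₀} (by simpa using hi₀)
      simp at this
    | succ m ih =>
      obtain ⟨ho, hcont, h01, hzero, himp⟩ := hspec m
      obtain ⟨hdisc, hsub, hcard, hcov⟩ := himp ih.1 ih.2
      rw [hsucc m]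
      constructor
      · exact ih.1.union (isOpen_iUnion fun F => isOpen_lt continuous_const (hcont F))
      · intro x hx
        by_cases hxG : x ∈ (st m).2
        · exact Set.mem_union_left _ hxG
        · obtain ⟨F, hF⟩ := hcov x hx hxG
          refine Set.mem_union_right _ (Set.mem_iUnion.2 ⟨F, ?_⟩)
          simp only [mem_setOf_eq, hF]
          norm_num
  have hGcov : ∀ m x, x ∈ (st m).2 → ∃ m' F, 1/2 < (st m').1.2 F x := by
    intro m
    induction m with
    | zero => intro x hx; exact absurd hx (Set.notMem_empty x)
    | succ m ih =>
      intro x hx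
      rw [hsucc m] at hx
      rcases hx with hx | hx
      · exact ih x hx
      · obtain ⟨F, hF⟩ := Set.mem_iUnion.1 hx
        exact ⟨m + 1, F, by rw [hsucc m]; exact hF⟩
  refine ⟨fun m => (st m).1.1, fun m => (st m).1.2, ?_, ?_, ?_, ?_, ?_, ?_, ?_, ?_⟩
  · rintro (_ | m) F
    · exact isOpen_empty
    · exact (hspec m).1 F
  · rintro (_ | m)
    · intro x
      refine ⟨Set.univ, Filter.univ_mem, fun i j hi _ => ?_⟩
      exact absurd hi (by show ¬(Set.univ ∩ (∅ : Set X)).Nonempty; simp)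
    · exact ((hspec m).2.2.2.2 (hInv m).1 (hInv m).2).1
  · rintro (_ | m) F
    · exact Set.empty_subset _
    · exact ((hspec m).2.2.2.2 (hInv m).1 (hInv m).2).2.1 F
  · rintro (_ | m) F hne
    · exact absurd hne Set.not_nonempty_empty
    · exact ⟨((hspec m).2.2.2.2 (hInv m).1 (hInv m).2).2.2.1 F hne, Nat.succ_pos m⟩
  · rintro (_ | m) F
    · exact continuous_const
    · exact (hspec m).2.1 F
  · rintro (_ | m) F x
    · exact ⟨le_rfl, zero_le_one⟩
    · exact (hspec m).2.2.1 F x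
  · rintro (_ | m) F x hx
    · rfl
    · exact (hspec m).2.2.2.1 F x hx
  · intro x hfin
    set Fx := hfin.toFinset with hFx
    have hmem : x ∈ Xle A Fx.card := by
      intro F hall
      refine Finset.card_le_card ?_
      intro i hi
      rw [hFx, Set.Finite.mem_toFinset]
      exact hall i hi
    exact hGcov Fx.card x ((hInv Fx.card).2 hmem)

end PartitionMain

section FinsumHelpers

variable {X : Type*} [TopologicalSpace X] {κ : Type*} {M : Type*} [NormedAddCommGroup M]

/-- For a family supported on a discrete family of sets, at each point either all terms
vanish or there is a single active index. -/
theorem discrete_active {O : κ → Set X} (hdisc : IsDiscreteFam O)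
    {f : κ → X → M} (hsupp : ∀ j x, x ∉ O j → f j x = 0) (x : X) :
    (∀ j, f j x = 0) ∨ ∃ j₀, x ∈ O j₀ ∧ ∀ j, j ≠ j₀ → f j x = 0 := by
  by_cases hex : ∃ j, x ∈ O j
  · obtain ⟨j₀, h₀⟩ := hex
    exact Or.inr ⟨j₀, h₀, fun j hne => hsupp j x
      (fun hmem => hne (hdisc.eq_of_mem hmem h₀))⟩
  · exact Or.inl fun j => hsupp j x (fun h => hex ⟨j, h⟩)

theorem discrete_finsum_eq {O : κ → Set X} (hdisc : IsDiscreteFam O)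
    {f : κ → X → M} (hsupp : ∀ j x, x ∉ O j → f j x = 0) (x : X) :
    (∑ᶠ j, f j x) = 0 ∨ ∃ j₀, x ∈ O j₀ ∧ (∑ᶠ j, f j x) = f j₀ x := by
  rcases discrete_active hdisc hsupp x with h | ⟨j₀, hj₀, h⟩
  · exact Or.inl (finsum_eq_zero_of_forall_eq_zero h)
  · exact Or.inr ⟨j₀, hj₀, finsum_eq_single (fun j => f j x) j₀ h⟩

/-- Local structure of a finsum over a discrete family: near every point it agrees
with `0` or with a single term. -/
theorem discrete_finsum_local {O : κ → Set X} (hdisc : IsDiscreteFam O)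
    {f : κ → X → M} (hsupp : ∀ j x, x ∉ O j → f j x = 0) (x : X) :
    ∃ V ∈ nhds x, (∀ y ∈ V, (∑ᶠ j, f j y) = 0) ∨
      ∃ j₀, ∀ y ∈ V, (∑ᶠ j, f j y) = f j₀ y := by
  obtain ⟨V, hV, huniq⟩ := hdisc x
  by_cases hex : ∃ j, (V ∩ O j).Nonempty
  · obtain ⟨j₀, hj₀⟩ := hex
    refine ⟨V, hV, Or.inr ⟨j₀, fun y hy => ?_⟩⟩
    refine finsum_eq_single (fun j => f j y) j₀ fun j hne => ?_
    refine hsupp j y fun hmem => hne (huniq j j₀ ⟨y, hy, hmem⟩ hj₀)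
  · refine ⟨V, hV, Or.inl fun y hy => finsum_eq_zero_of_forall_eq_zero fun j => ?_⟩
    exact hsupp j y fun hmem => hex ⟨j, y, hy, hmem⟩

theorem discrete_finsum_continuous {O : κ → Set X} (hdisc : IsDiscreteFam O)
    {f : κ → X → M} (hsupp : ∀ j x, x ∉ O j → f j x = 0)
    (hcont : ∀ j, Continuous (f j)) : Continuous fun x => ∑ᶠ j, f j x := by
  rw [continuous_iff_continuousAt]
  intro x
  obtain ⟨V, hV, hloc⟩ := discrete_finsum_local hdisc hsupp x
  rcases hloc with h | ⟨j₀, h⟩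
  · exact ContinuousAt.congr continuousAt_const
      (Filter.eventuallyEq_of_mem hV fun y hy => (h y hy).symm)
  · exact ContinuousAt.congr (hcont j₀).continuousAt
      (Filter.eventuallyEq_of_mem hV fun y hy => (h y hy).symm)

theorem discrete_finsum_norm_le {O : κ → Set X} (hdisc : IsDiscreteFam O)
    {f : κ → X → M} (hsupp : ∀ j x, x ∉ O j → f j x = 0)
    {b : X → ℝ} (hb : ∀ x, 0 ≤ b x) (hfb : ∀ j x, ‖f j x‖ ≤ b x) (x : X) :
    ‖∑ᶠ j, f j x‖ ≤ b x := by
  rcases discrete_finsum_eq hdisc hsupp x with h | ⟨j₀, _, h⟩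
  · rw [h]; simpa using hb x
  · rw [h]; exact hfb j₀ x

end FinsumHelpers

section TsumHelpers

theorem continuous_tsum_local {X : Type*} [TopologicalSpace X] {F : Type*}
    [NormedAddCommGroup F] [CompleteSpace F]
    {f : ℕ → X → F} (hf : ∀ n, Continuous (f n))
    (hloc : ∀ x : X, ∃ V ∈ nhds x, ∃ u : ℕ → ℝ, Summable u ∧ ∀ n, ∀ y ∈ V, ‖f n y‖ ≤ u n) :
    Continuous fun x => ∑' n, f n x := by
  rw [continuous_iff_continuousAt]
  intro x
  obtain ⟨V, hV, u, hu, hub⟩ := hloc x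
  have hconts : ContinuousOn (fun y => ∑' n, f n y) (interior V) :=
    (tendstoUniformlyOn_tsum hu fun n y hy => hub n y (interior_subset hy)).continuousOn
      (Filter.Frequently.of_forall fun t =>
        (continuous_finset_sum t fun n _ => hf n).continuousOn)
  exact hconts.continuousAt (interior_mem_nhds.2 hV)

end TsumHelpers

section WitnessSets

variable {X : Type u} {E : Type u} [TopologicalSpace X]
  [NormedAddCommGroup E] [NormedSpace ℝ E] {φ : X → Set E}

theorem isOpen_witness (hφ : LowerSemicontinuousSV φ) {g : X → E} (hg : Continuous g)
    {ρ : X → ℝ} (hρ : Continuous ρ) {V : Set E} (hV : IsOpen V) :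
    IsOpen {x | (φ x ∩ V ∩ ball (g x) (ρ x)).Nonempty} := by
  rw [isOpen_iff_mem_nhds]
  rintro x₀ ⟨z, ⟨hzφ, hzV⟩, hzb⟩
  rw [mem_ball] at hzb
  set t := ρ x₀ - dist z (g x₀) with ht
  have ht0 : 0 < t := by rw [ht]; linarith
  obtain ⟨δV, hδV0, hδVsub⟩ := Metric.isOpen_iff.1 hV z hzV
  set δ := min δV (t/4) with hδ
  have hδ0 : 0 < δ := lt_min hδV0 (by linarith)
  have hmem : {x | (φ x ∩ ball z δ).Nonempty} ∈ nhds x₀ :=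
    (hφ _ isOpen_ball).mem_nhds ⟨z, hzφ, by simpa [mem_ball] using hδ0⟩
  have hg' : {x | dist (g x) (g x₀) < t/4} ∈ nhds x₀ := by
    have : Filter.Tendsto g (nhds x₀) (nhds (g x₀)) := hg.continuousAt
    exact this (Metric.ball_mem_nhds _ (by linarith))
  have hρ' : {x | ρ x₀ - t/4 < ρ x} ∈ nhds x₀ := by
    have : Filter.Tendsto ρ (nhds x₀) (nhds (ρ x₀)) := hρ.continuousAt
    exact this (Ioi_mem_nhds (by linarith))
  filter_upwards [hmem, hg', hρ'] with x hx1 hx2 hx3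
  obtain ⟨z', hz'φ, hz'b⟩ := hx1
  rw [mem_ball] at hz'b
  refine ⟨z', ⟨hz'φ, hδVsub (mem_ball.2 (lt_of_lt_of_le hz'b (min_le_left _ _)))⟩, ?_⟩
  rw [mem_ball]
  have h1 : dist z' z < δ := hz'b
  have h2 : dist z' (g x) ≤ dist z' z + dist z (g x₀) + dist (g x₀) (g x) :=
    dist_triangle4 z' z (g x₀) (g x)
  have h3 : dist (g x₀) (g x) = dist (g x) (g x₀) := dist_comm _ _
  have h4 : δ ≤ t/4 := min_le_right _ _
  calc dist z' (g x) ≤ dist z' z + dist z (g x₀) + dist (g x₀) (g x) := h2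
    _ < t/4 + (ρ x₀ - t) + t/4 := by rw [h3]; push_cast; linarith
    _ ≤ ρ x := by linarith

theorem paraconvex_univ {E : Type*} [NormedAddCommGroup E] [NormedSpace ℝ E]
    {α : ℝ} (hα0 : 0 ≤ α) : Paraconvex α (Set.univ : Set E) := by
  intro r hr p hp q hq
  rw [Metric.infDist_zero_of_mem (Set.mem_univ q)]
  positivity

end WitnessSets

section Improve

variable {X : Type u} {E : Type u} [TopologicalSpace X] [T1Space X]
  [NormedAddCommGroup E] [NormedSpace ℝ E] [CompleteSpace E]

theorem improve_step [NormalSpace X] {τ : Cardinal.{u}} (hτ : Cardinal.aleph0 ≤ τ)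
    (hXc : CollectionwiseNormalOfCard X τ)
    {S : Set E} (hS : Dense S) (hSc : Cardinal.mk S ≤ τ)
    {φ : X → Set E} (hφ : LowerSemicontinuousSV φ)
    {α : ℝ} (hα0 : 0 ≤ α)
    (hφval : ∀ x, (IsCompact (φ x) ∧ (φ x).Nonempty ∧ Paraconvex α (φ x)) ∨ φ x = Set.univ)
    {g : X → E} (hg : Continuous g) {r : X → ℝ} (hr : Continuous r) (hr0 : ∀ x, 0 < r x)
    {ε : ℝ} (hε : 0 < ε) (happ : ∀ x, Metric.infDist (g x) (φ x) < r x) :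
    ∃ h : X → E, Continuous h ∧ (∀ x, Metric.infDist (h x) (φ x) ≤ α * (r x + 2*ε) + ε) ∧
      (∀ x, ‖h x - g x‖ ≤ r x + 2*ε) := by
  classical
  have hφne : ∀ x, (φ x).Nonempty := by
    intro x
    rcases hφval x with ⟨_, hne, _⟩ | hu
    · exact hne
    · rw [hu]; exact ⟨0, trivial⟩
  have hpc : ∀ x, Paraconvex α (φ x) := by
    intro x
    rcases hφval x with ⟨_, _, hp⟩ | hu
    · exact hp
    · rw [hu]; exact paraconvex_univ hα0
  have hz₀ : ∀ x : X, ∃ z₀ ∈ φ x, dist (g x) z₀ < r x :=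
    fun x => (Metric.infDist_lt_iff (hφne x)).1 (happ x)
  -- locally finite refinement of the ε-ball cover of E
  have hcov : ⋃ s : S, ball (s : E) ε = Set.univ := by
    ext y
    simp only [Set.mem_iUnion, Set.mem_univ, iff_true]
    obtain ⟨s, hsS, hsd⟩ := hS.exists_dist_lt y hε
    exact ⟨⟨s, hsS⟩, mem_ball.2 hsd⟩
  obtain ⟨V, hVo, hVcov, hVloc, hVsub⟩ :=
    precise_refinement (fun s : S => ball (s : E) ε) (fun s => isOpen_ball) hcov
  -- the cover of X
  set A : Option S → Set X := fun o =>
    Option.elim o {x | (φ x ∩ Set.univ ∩ ball (g x) ε).Nonempty}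
      (fun s => {x | (φ x ∩ V s ∩ ball (g x) (r x + ε)).Nonempty}) with hA
  have hAo : ∀ o, IsOpen (A o) := by
    rintro (_ | s)
    · exact isOpen_witness hφ hg continuous_const isOpen_univ
    · exact isOpen_witness hφ hg (hr.add continuous_const) (hVo s)
  have hAnone : ∀ x, φ x = Set.univ → x ∈ A none := by
    intro x hu
    exact ⟨g x, ⟨by rw [hu]; trivial, trivial⟩, mem_ball_self hε⟩
  have hAcov : ∀ x, ∃ o, x ∈ A o := by
    intro x
    obtain ⟨z, hzφ, hzd⟩ := hz₀ x
    have hzmem : z ∈ ⋃ s : S, V s := by rw [hVcov]; trivial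
    obtain ⟨s, hzs⟩ := Set.mem_iUnion.1 hzmem
    refine ⟨some s, ⟨z, ⟨hzφ, hzs⟩, mem_ball.2 ?_⟩⟩
    rw [dist_comm] at hzd
    linarith
  have hmkA : Cardinal.mk (Option S) ≤ τ := by
    rw [Cardinal.mk_option]
    calc Cardinal.mk S + 1 ≤ τ + τ :=
          add_le_add hSc (le_trans Cardinal.one_le_aleph0 hτ)
      _ = τ := Cardinal.add_eq_self hτ
  obtain ⟨O, Q, hOo, hOdisc, hOsub, hOcard, hQc, hQ01, hQ0, hQcov⟩ :=
    partition hτ hXc hmkA A hAo hAcov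
  -- tags
  set sel : Finset (Option S) → Option S :=
    fun F => if h : F.Nonempty then h.choose else none with hseldef
  have hsel : ∀ F : Finset (Option S), F.Nonempty → sel F ∈ F := by
    intro F h
    rw [hseldef]
    dsimp only
    rw [dif_pos h]
    exact h.choose_spec
  set tagv : Finset (Option S) → X → E :=
    fun F x => Option.elim (sel F) (g x) (fun s => (s : E)) with htagv
  have htagc : ∀ F, Continuous (tagv F) := by
    intro F
    rw [htagv]
    dsimp only
    rcases sel F with _ | s
    · exact hg
    · exact continuous_const
  have hQmem : ∀ m F x, Q m F x ≠ 0 → x ∈ O m F :=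
    fun m F x hne => by_contra fun hx => hne (hQ0 m F x hx)
  have hFne : ∀ m F, (O m F).Nonempty → F.Nonempty := by
    intro m F hx
    have := hOcard m F hx
    exact Finset.card_pos.1 (by omega)
  have hqual : ∀ m F x, x ∈ O m F →
      ∃ z, z ∈ φ x ∧ dist z (tagv F x) < ε ∧ dist z (g x) < r x + ε := by
    intro m F x hx
    have hne : F.Nonempty := hFne m F ⟨x, hx⟩
    have hmemA : x ∈ A (sel F) := Set.mem_iInter₂.1 (hOsub m F hx) (sel F) (hsel F hne)
    rcases hsf : sel F with _ | s
    · rw [hsf] at hmemA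
      obtain ⟨z, ⟨hzφ, -⟩, hzb⟩ := hmemA
      rw [mem_ball] at hzb
      refine ⟨z, hzφ, ?_, by linarith [hr0 x]⟩
      rw [htagv]
      dsimp only
      rw [hsf]
      exact hzb
    · rw [hsf] at hmemA
      obtain ⟨z, ⟨hzφ, hzV⟩, hzb⟩ := hmemA
      rw [mem_ball] at hzb
      have hzs : dist z (s : E) < ε := mem_ball.1 (hVsub s hzV)
      refine ⟨z, hzφ, ?_, hzb⟩
      rw [htagv]
      dsimp only
      rw [hsf]
      exact hzs
  -- the weighted sums
  set w : ℕ → ℝ := fun m => (1/2 : ℝ)^m with hw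
  have hw0 : ∀ m, 0 < w m := fun m => pow_pos (by norm_num) m
  have hwsum : Summable w := summable_geometric_of_lt_one (by norm_num) (by norm_num)
  set σf : ℕ → X → ℝ := fun m x => ∑ᶠ F, Q m F x with hσf
  set vf : ℕ → X → E := fun m x => ∑ᶠ F, Q m F x • (tagv F x - g x) with hvf
  have hQsupp : ∀ m, ∀ (F) (x : X), x ∉ O m F → Q m F x = 0 := fun m F x hx => hQ0 m F x hx
  have hvsupp : ∀ m, ∀ (F) (x : X), x ∉ O m F → Q m F x • (tagv F x - g x) = 0 :=
    fun m F x hx => by rw [hQ0 m F x hx, zero_smul]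
  have hσcont : ∀ m, Continuous (σf m) := fun m =>
    discrete_finsum_continuous (hOdisc m) (hQsupp m) (fun F => hQc m F)
  have hvfc : ∀ m, Continuous (vf m) := fun m =>
    discrete_finsum_continuous (hOdisc m) (hvsupp m)
      (fun F => (hQc m F).smul ((htagc F).sub hg))
  have hσ01 : ∀ m x, 0 ≤ σf m x ∧ σf m x ≤ 1 := by
    intro m x
    rcases discrete_finsum_eq (hOdisc m) (hQsupp m) x with hzero | ⟨F₀, -, heq⟩
    · rw [hσf]; dsimp only; rw [hzero]; exact ⟨le_rfl, zero_le_one⟩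
    · rw [hσf]; dsimp only; rw [heq]; exact ⟨(hQ01 m F₀ x).1, (hQ01 m F₀ x).2⟩
  have hclaim : ∀ x m, ∃ z, z ∈ φ x ∧ dist z (g x) < r x + ε ∧
      ‖vf m x - σf m x • (z - g x)‖ ≤ σf m x * ε := by
    intro x m
    obtain ⟨z₀, hz₀φ, hz₀d⟩ := hz₀ x
    have hz₀' : dist z₀ (g x) < r x + ε := by rw [dist_comm] at hz₀d; linarith
    rcases discrete_active (hOdisc m) (hQsupp m) x with hall | ⟨F₀, hF₀, hrest⟩
    · have h1 : σf m x = 0 := by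
        rw [hσf]; exact finsum_eq_zero_of_forall_eq_zero hall
      have h2 : vf m x = 0 := by
        rw [hvf]
        exact finsum_eq_zero_of_forall_eq_zero (fun F => by rw [hall F, zero_smul])
      refine ⟨z₀, hz₀φ, hz₀', ?_⟩
      rw [h1, h2]
      simp
    · have h1 : σf m x = Q m F₀ x := by
        rw [hσf]; exact finsum_eq_single _ F₀ hrest
      have h2 : vf m x = Q m F₀ x • (tagv F₀ x - g x) := by
        rw [hvf]
        exact finsum_eq_single _ F₀ (fun F hne => by rw [hrest F hne, zero_smul])
      obtain ⟨z, hzφ, hzt, hzb⟩ := hqual m F₀ x hF₀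
      refine ⟨z, hzφ, hzb, ?_⟩
      rw [h1, h2, ← smul_sub, norm_smul, Real.norm_eq_abs, abs_of_nonneg (hQ01 m F₀ x).1]
      have heq : tagv F₀ x - g x - (z - g x) = tagv F₀ x - z := by abel
      rw [heq]
      refine mul_le_mul_of_nonneg_left ?_ (hQ01 m F₀ x).1
      rw [← dist_eq_norm, dist_comm]
      exact le_of_lt hzt
  have hvfb : ∀ m x, ‖vf m x‖ ≤ σf m x * (r x + 2*ε) := by
    intro m x
    obtain ⟨z, hzφ, hzb, hvz⟩ := hclaim x m
    have h1 : ‖σf m x • (z - g x)‖ ≤ σf m x * (r x + ε) := by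
      rw [norm_smul, Real.norm_eq_abs, abs_of_nonneg (hσ01 m x).1]
      refine mul_le_mul_of_nonneg_left ?_ (hσ01 m x).1
      rw [← dist_eq_norm]
      exact le_of_lt hzb
    have h2 : ‖vf m x‖ ≤ ‖vf m x - σf m x • (z - g x)‖ + ‖σf m x • (z - g x)‖ := by
      have h3 := norm_add_le (vf m x - σf m x • (z - g x)) (σf m x • (z - g x))
      rwa [sub_add_cancel] at h3
    calc ‖vf m x‖ ≤ ‖vf m x - σf m x • (z - g x)‖ + ‖σf m x • (z - g x)‖ := h2
      _ ≤ σf m x * ε + σf m x * (r x + ε) := add_le_add hvz h1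
      _ = σf m x * (r x + 2*ε) := by ring
  set T : X → ℝ := fun x => ∑' m, w m * σf m x with hT
  have hTterm0 : ∀ x m, 0 ≤ w m * σf m x :=
    fun x m => mul_nonneg (le_of_lt (hw0 m)) (hσ01 m x).1
  have hTsummand : ∀ x, Summable (fun m => w m * σf m x) := by
    intro x
    refine Summable.of_norm_bounded (g := w) hwsum (fun m => ?_)
    rw [Real.norm_eq_abs, abs_of_nonneg (hTterm0 x m)]
    calc w m * σf m x ≤ w m * 1 :=
          mul_le_mul_of_nonneg_left (hσ01 m x).2 (le_of_lt (hw0 m))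
      _ = w m := mul_one _
  have hTc : Continuous T := by
    rw [hT]
    refine continuous_tsum (fun m => continuous_const.mul (hσcont m)) hwsum (fun m x => ?_)
    rw [Real.norm_eq_abs, abs_of_nonneg (hTterm0 x m)]
    calc w m * σf m x ≤ w m * 1 :=
          mul_le_mul_of_nonneg_left (hσ01 m x).2 (le_of_lt (hw0 m))
      _ = w m := mul_one _
  have hT0 : ∀ x, 0 ≤ T x := fun x => tsum_nonneg (hTterm0 x)
  have hZcl : IsClosed {x | T x = 0} := isClosed_eq hTc continuous_const
  have hZsub : {x | T x = 0} ⊆ A none := by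
    intro x hxZ
    by_cases hfin : {o : Option S | x ∈ A o}.Finite
    · exfalso
      obtain ⟨m, F, hQF⟩ := hQcov x hfin
      have hx0 : x ∈ O m F := hQmem m F x (by linarith)
      have hσpos : 0 < σf m x := by
        rcases discrete_active (hOdisc m) (hQsupp m) x with hall | ⟨F₀, hF₀, hrest⟩
        · linarith [hall F]
        · have hFF : F = F₀ := (hOdisc m).eq_of_mem hx0 hF₀
          have h1 : σf m x = Q m F₀ x := by
            rw [hσf]; exact finsum_eq_single _ F₀ hrest
          rw [h1, ← hFF]
          linarith
      have hTpos : 0 < T x := by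
        have hle : w m * σf m x ≤ T x := by
          rw [hT]
          exact Summable.le_tsum (hTsummand x) m (fun m' _ => hTterm0 x m')
        have := mul_pos (hw0 m) hσpos
        linarith
      rw [Set.mem_setOf_eq] at hxZ
      linarith
    · have hnc : ¬ IsCompact (φ x) := by
        intro hc
        apply hfin
        have hK : IsCompact (φ x ∩ closedBall (g x) (r x + ε)) :=
          hc.inter_right Metric.isClosed_closedBall
        have hfin2 := hVloc.finite_nonempty_inter_compact hK
        refine Set.Finite.subset ((hfin2.image some).insert none) ?_
        rintro (_ | s) ho
        · exact Set.mem_insert _ _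
        · refine Set.mem_insert_of_mem _ (Set.mem_image_of_mem some ?_)
          obtain ⟨z, ⟨hzφ, hzV⟩, hzb⟩ := ho
          exact ⟨z, hzV, ⟨hzφ, ball_subset_closedBall hzb⟩⟩
      rcases hφval x with ⟨hc, -, -⟩ | hu
      · exact absurd hc hnc
      · exact hAnone x hu
  obtain ⟨qs, hqs0, hqs1, hqs01⟩ := exists_continuous_zero_one_of_isClosed
    (hAo none).isClosed_compl hZcl
    (Set.disjoint_left.2 fun y hyc hyZ => hyc (hZsub hyZ))
  set D : X → ℝ := fun x => qs x + T x with hD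
  have hqsnn : ∀ x : X, 0 ≤ qs x := fun x => (hqs01 x).1
  have hD0 : ∀ x, 0 < D x := by
    intro x
    rw [hD]
    dsimp only
    by_cases hx : T x = 0
    · have h1 : qs x = 1 := hqs1 hx
      rw [h1, hx]
      norm_num
    · have h1 : 0 < T x := lt_of_le_of_ne (hT0 x) (Ne.symm hx)
      have h2 := hqsnn x
      linarith
  have hDc : Continuous D := by
    rw [hD]; exact qs.continuous.add hTc
  set num : X → E := fun x => ∑' m, w m • vf m x with hnum
  have hnumterm : ∀ x m, ‖w m • vf m x‖ ≤ w m * (σf m x * (r x + 2*ε)) := by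
    intro x m
    rw [norm_smul, Real.norm_eq_abs, abs_of_nonneg (le_of_lt (hw0 m))]
    exact mul_le_mul_of_nonneg_left (hvfb m x) (le_of_lt (hw0 m))
  have hnums : ∀ x, Summable (fun m => w m • vf m x) := by
    intro x
    refine Summable.of_norm_bounded (g := fun m => w m * (r x + 2*ε))
      (hwsum.mul_right _) (fun m => ?_)
    refine le_trans (hnumterm x m) ?_
    refine mul_le_mul_of_nonneg_left ?_ (le_of_lt (hw0 m))
    calc σf m x * (r x + 2*ε) ≤ 1 * (r x + 2*ε) :=
          mul_le_mul_of_nonneg_right (hσ01 m x).2 (by linarith [hr0 x])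
      _ = r x + 2*ε := one_mul _
  have hnumc : Continuous num := by
    rw [hnum]
    refine continuous_tsum_local (fun m => continuous_const.smul (hvfc m)) ?_
    intro x₀
    refine ⟨{y | r y < r x₀ + 1}, (isOpen_lt hr continuous_const).mem_nhds (by simp),
      fun m => w m * ((r x₀ + 1) + 2*ε), hwsum.mul_right _, fun m y hy => ?_⟩
    refine le_trans (hnumterm y m) ?_
    refine mul_le_mul_of_nonneg_left ?_ (le_of_lt (hw0 m))
    have h1 : σf m y * (r y + 2*ε) ≤ 1 * (r y + 2*ε) :=
      mul_le_mul_of_nonneg_right (hσ01 m y).2 (by linarith [hr0 y])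
    have h2 : r y < r x₀ + 1 := hy
    calc σf m y * (r y + 2*ε) ≤ 1 * (r y + 2*ε) := h1
      _ = r y + 2*ε := one_mul _
      _ ≤ (r x₀ + 1) + 2*ε := by linarith
  set h : X → E := fun x => g x + (D x)⁻¹ • num x with hh
  have hhc : Continuous h := by
    rw [hh]
    exact hg.add ((hDc.inv₀ (fun x => ne_of_gt (hD0 x))).smul hnumc)
  have hTleD : ∀ x, T x ≤ D x := by
    intro x; rw [hD]; dsimp only; linarith [hqsnn x]
  have hnumb : ∀ x, ‖num x‖ ≤ T x * (r x + 2*ε) := by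
    intro x
    have hsn : Summable (fun m => ‖w m • vf m x‖) := by
      refine Summable.of_norm_bounded (g := fun m => w m * (r x + 2*ε))
        (hwsum.mul_right _) (fun m => ?_)
      rw [Real.norm_eq_abs, abs_of_nonneg (norm_nonneg _)]
      refine le_trans (hnumterm x m) ?_
      refine mul_le_mul_of_nonneg_left ?_ (le_of_lt (hw0 m))
      calc σf m x * (r x + 2*ε) ≤ 1 * (r x + 2*ε) :=
            mul_le_mul_of_nonneg_right (hσ01 m x).2 (by linarith [hr0 x])
        _ = r x + 2*ε := one_mul _
    calc ‖num x‖ ≤ ∑' m, ‖w m • vf m x‖ := norm_tsum_le_tsum_norm hsn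
      _ ≤ ∑' m, (w m * σf m x) * (r x + 2*ε) := by
          refine Summable.tsum_le_tsum (fun m => ?_) hsn ((hTsummand x).mul_right _)
          rw [mul_assoc]
          exact hnumterm x m
      _ = (∑' m, w m * σf m x) * (r x + 2*ε) := tsum_mul_right
      _ = T x * (r x + 2*ε) := by rw [hT]
  have hnormest : ∀ x, ‖h x - g x‖ ≤ r x + 2*ε := by
    intro x
    have h1 : h x - g x = (D x)⁻¹ • num x := by rw [hh]; dsimp only; abel
    rw [h1, norm_smul, Real.norm_eq_abs, abs_of_nonneg (inv_nonneg.2 (le_of_lt (hD0 x)))]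
    calc (D x)⁻¹ * ‖num x‖ ≤ (D x)⁻¹ * (D x * (r x + 2*ε)) := by
          refine mul_le_mul_of_nonneg_left ?_ (inv_nonneg.2 (le_of_lt (hD0 x)))
          refine le_trans (hnumb x) ?_
          exact mul_le_mul_of_nonneg_right (hTleD x) (by linarith [hr0 x])
      _ = r x + 2*ε := by
          rw [← mul_assoc, inv_mul_cancel₀ (ne_of_gt (hD0 x)), one_mul]
  refine ⟨h, hhc, ?_, hnormest⟩
  intro x
  set ρ : ℝ := r x + 2*ε with hρ
  have hρ0 : 0 < ρ := by rw [hρ]; linarith [hr0 x]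
  choose zf hzfφ hzfb hzfv using hclaim x
  obtain ⟨z₀, hz₀φ, hz₀d⟩ := hz₀ x
  have hstar : ∃ zs, zs ∈ φ x ∧ dist zs (g x) < r x + ε ∧ (qs x ≠ 0 → dist zs (g x) < ε) := by
    by_cases hq : qs x = 0
    · refine ⟨z₀, hz₀φ, ?_, fun hne => absurd hq hne⟩
      rw [dist_comm] at hz₀d
      linarith
    · have hxA : x ∈ A none := by
        by_contra hxA
        exact hq (hqs0 hxA)
      obtain ⟨z, ⟨hzφ, -⟩, hzb⟩ := hxA
      rw [mem_ball] at hzb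
      exact ⟨z, hzφ, by linarith [hr0 x], fun _ => hzb⟩
  obtain ⟨zs, hzsφ, hzsb, hzsq⟩ := hstar
  set aseq : ℕ → ℝ := fun n => Nat.casesOn n (qs x) (fun m => w m * σf m x) with haseq
  set yseq : ℕ → E := fun n => Nat.casesOn n zs (fun m => zf m) with hyseq
  have haseq0 : ∀ n, 0 ≤ aseq n := by
    rintro (_ | m)
    · exact hqsnn x
    · exact hTterm0 x m
  have hasum : Summable aseq := by
    have h1 : Summable (fun n => aseq (n + 1)) := hTsummand x
    exact (summable_nat_add_iff 1).1 h1
  have hyball : ∀ n, dist (yseq n) (g x) < r x + ε := by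
    rintro (_ | m)
    · exact hzsb
    · exact hzfb m
  have hynorm : ∀ n, ‖yseq n‖ ≤ ‖g x‖ + (r x + ε) := by
    intro n
    calc ‖yseq n‖ = ‖g x + (yseq n - g x)‖ := by rw [add_sub_cancel]
      _ ≤ ‖g x‖ + ‖yseq n - g x‖ := norm_add_le _ _
      _ ≤ ‖g x‖ + (r x + ε) := by
          have := hyball n
          rw [dist_eq_norm] at this
          linarith
  have hysum : Summable (fun n => aseq n • yseq n) := by
    refine Summable.of_norm_bounded (g := fun n => aseq n * (‖g x‖ + (r x + ε)))
      (hasum.mul_right _) (fun n => ?_)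
    rw [norm_smul, Real.norm_eq_abs, abs_of_nonneg (haseq0 n)]
    exact mul_le_mul_of_nonneg_left (hynorm n) (haseq0 n)
  have hDsum : D x = ∑' n, aseq n := by
    rw [Summable.tsum_eq_zero_add hasum, hD]
    rfl
  set c : E := (D x)⁻¹ • (∑' n, aseq n • yseq n) with hc
  set K : Set E := ball (g x) ρ ∩ φ x with hK
  have hyK : ∀ n, yseq n ∈ K := by
    intro n
    refine ⟨mem_ball.2 ?_, ?_⟩
    · have := hyball n
      rw [hρ]
      linarith
    · rcases n with _ | m
      · exact hzsφ
      · exact hzfφ m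
  have hcc : c ∈ closure (convexHull ℝ K) := by
    set dN : ℕ → ℝ := fun N => ∑ n ∈ Finset.range N, aseq n with hdN
    have hdD : Filter.Tendsto dN Filter.atTop (nhds (D x)) := by
      rw [hDsum]
      exact hasum.hasSum.tendsto_sum_nat
    have hvN : Filter.Tendsto (fun N => ∑ n ∈ Finset.range N, aseq n • yseq n)
        Filter.atTop (nhds (∑' n, aseq n • yseq n)) := hysum.hasSum.tendsto_sum_nat
    have hcN : Filter.Tendsto
        (fun N => (dN N)⁻¹ • (∑ n ∈ Finset.range N, aseq n • yseq n))
        Filter.atTop (nhds c) := by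
      rw [hc]
      exact (hdD.inv₀ (ne_of_gt (hD0 x))).smul hvN
    refine mem_closure_of_tendsto hcN ?_
    have hev : ∀ᶠ N in Filter.atTop, D x / 2 < dN N :=
      hdD.eventually (eventually_gt_nhds (half_lt_self (hD0 x)))
    filter_upwards [hev] with N hN
    have hdN0 : 0 < dN N := lt_trans (half_pos (hD0 x)) hN
    have hrw : (dN N)⁻¹ • (∑ n ∈ Finset.range N, aseq n • yseq n) =
        ∑ n ∈ Finset.range N, (aseq n / dN N) • yseq n := by
      rw [Finset.smul_sum]
      refine Finset.sum_congr rfl fun n _ => ?_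
      rw [smul_smul, div_eq_inv_mul]
    rw [hrw]
    refine Convex.sum_mem (convex_convexHull ℝ K)
      (fun n _ => div_nonneg (haseq0 n) (le_of_lt hdN0)) ?_
      (fun n _ => subset_convexHull ℝ K (hyK n))
    rw [← Finset.sum_div, div_self (ne_of_gt hdN0)]
  have hsub : convexHull ℝ K ⊆ {y | Metric.infDist y (φ x) ≤ α * ρ} := by
    intro q hq
    refine hpc x ρ hρ0 (g x) ?_ q hq
    rw [hρ]
    linarith [happ x]
  have hclosed : IsClosed {y | Metric.infDist y (φ x) ≤ α * ρ} :=
    isClosed_le (continuous_infDist_pt _) continuous_const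
  have hcmem : Metric.infDist c (φ x) ≤ α * ρ :=
    (hclosed.closure_subset_iff.2 hsub) hcc
  -- ‖h x - c‖ ≤ ε
  have hdiffterm : ∀ n : ℕ,
      ‖(Nat.casesOn n 0 (fun m => w m • vf m x) : E) + aseq n • g x - aseq n • yseq n‖
        ≤ aseq n * ε := by
    rintro (_ | m)
    · show ‖(0 : E) + qs x • g x - qs x • zs‖ ≤ qs x * ε
      by_cases hq : qs x = 0
      · rw [hq]; simp
      · rw [zero_add, ← smul_sub, norm_smul, Real.norm_eq_abs, abs_of_nonneg (hqsnn x)]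
        refine mul_le_mul_of_nonneg_left ?_ (hqsnn x)
        rw [← dist_eq_norm, dist_comm]
        exact le_of_lt (hzsq hq)
    · show ‖w m • vf m x + (w m * σf m x) • g x - (w m * σf m x) • zf m‖
        ≤ (w m * σf m x) * ε
      have halg : w m • vf m x + (w m * σf m x) • g x - (w m * σf m x) • zf m
          = w m • (vf m x - σf m x • (zf m - g x)) := by
        rw [smul_sub, smul_smul, smul_sub]
        abel
      rw [halg, norm_smul, Real.norm_eq_abs, abs_of_nonneg (le_of_lt (hw0 m)), mul_assoc]
      exact mul_le_mul_of_nonneg_left (hzfv m) (le_of_lt (hw0 m))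
  set useq : ℕ → E := fun n => Nat.casesOn n 0 (fun m => w m • vf m x) with hu
  have husum : Summable useq := by
    have h1 : Summable (fun n => useq (n + 1)) := hnums x
    exact (summable_nat_add_iff 1).1 h1
  have hnumu : num x = ∑' n, useq n := by
    rw [Summable.tsum_eq_zero_add husum]
    show num x = 0 + ∑' n, w n • vf n x
    rw [zero_add, hnum]
  have hgsum : Summable (fun n => aseq n • g x) := by
    refine Summable.of_norm_bounded (g := fun n => aseq n * ‖g x‖) (hasum.mul_right _) (fun n => ?_)
    rw [norm_smul, Real.norm_eq_abs, abs_of_nonneg (haseq0 n)]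
  have hsplit : num x + (∑' n, aseq n • g x) - (∑' n, aseq n • yseq n)
      = ∑' n, (useq n + aseq n • g x - aseq n • yseq n) := by
    rw [hnumu, ← Summable.tsum_add husum hgsum, ← Summable.tsum_sub (husum.add hgsum) hysum]
  have hgx : g x = (D x)⁻¹ • (∑' n, aseq n • g x) := by
    rw [Summable.tsum_smul_const hasum, ← hDsum, smul_smul, inv_mul_cancel₀ (ne_of_gt (hD0 x)), one_smul]
  have hhxc : h x - c = (D x)⁻¹ •
      (num x + (∑' n, aseq n • g x) - (∑' n, aseq n • yseq n)) := by
    rw [hh]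
    dsimp only
    rw [hc, smul_sub, smul_add, ← hgx]
    abel
  have hdistc : ‖h x - c‖ ≤ ε := by
    rw [hhxc, hsplit, norm_smul, Real.norm_eq_abs,
      abs_of_nonneg (inv_nonneg.2 (le_of_lt (hD0 x)))]
    have hsn : Summable (fun n => ‖useq n + aseq n • g x - aseq n • yseq n‖) := by
      refine Summable.of_norm_bounded (g := fun n => aseq n * ε) (hasum.mul_right _) (fun n => ?_)
      rw [Real.norm_eq_abs, abs_of_nonneg (norm_nonneg _)]
      exact hdiffterm n
    have hb : ‖∑' n, (useq n + aseq n • g x - aseq n • yseq n)‖ ≤ D x * ε := by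
      calc ‖∑' n, (useq n + aseq n • g x - aseq n • yseq n)‖
          ≤ ∑' n, ‖useq n + aseq n • g x - aseq n • yseq n‖ := norm_tsum_le_tsum_norm hsn
        _ ≤ ∑' n, aseq n * ε := Summable.tsum_le_tsum (fun n => hdiffterm n) hsn (hasum.mul_right _)
        _ = (∑' n, aseq n) * ε := tsum_mul_right
        _ = D x * ε := by rw [← hDsum]
    calc (D x)⁻¹ * ‖∑' n, (useq n + aseq n • g x - aseq n • yseq n)‖
        ≤ (D x)⁻¹ * (D x * ε) :=
          mul_le_mul_of_nonneg_left hb (inv_nonneg.2 (le_of_lt (hD0 x)))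
      _ = ε := by rw [← mul_assoc, inv_mul_cancel₀ (ne_of_gt (hD0 x)), one_mul]
  calc Metric.infDist (h x) (φ x) ≤ Metric.infDist c (φ x) + dist (h x) c :=
        Metric.infDist_le_infDist_add_dist
    _ ≤ α * ρ + ε := add_le_add hcmem (by rw [dist_eq_norm]; exact hdistc)
    _ = α * (r x + 2*ε) + ε := by rw [hρ]

end Improve

section Base

variable {X : Type u} {E : Type u} [TopologicalSpace X] [T1Space X]
  [NormedAddCommGroup E] [NormedSpace ℝ E] [CompleteSpace E]

theorem base_step [NormalSpace X] {τ : Cardinal.{u}} (hτ : Cardinal.aleph0 ≤ τ)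
    (hXc : CollectionwiseNormalOfCard X τ)
    {S : Set E} (hS : Dense S) (hSc : Cardinal.mk S ≤ τ)
    {φ : X → Set E} (hφ : LowerSemicontinuousSV φ)
    (hφc : ∀ x, IsCompact (φ x) ∨ φ x = Set.univ)
    (hφne : ∀ x, (φ x).Nonempty) :
    ∃ r₀ : X → ℝ, Continuous r₀ ∧ (∀ x, 0 < r₀ x) ∧
      ∀ x, Metric.infDist (0 : E) (φ x) < r₀ x := by
  classical
  have hcov : ⋃ s : S, ball (s : E) 1 = Set.univ := by
    ext y
    simp only [Set.mem_iUnion, Set.mem_univ, iff_true]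
    obtain ⟨s, hsS, hsd⟩ := hS.exists_dist_lt y one_pos
    exact ⟨⟨s, hsS⟩, mem_ball.2 hsd⟩
  obtain ⟨V, hVo, hVcov, hVloc, hVsub⟩ :=
    precise_refinement (fun s : S => ball (s : E) 1) (fun s => isOpen_ball) hcov
  set A : Option S → Set X := fun o =>
    Option.elim o {x | (φ x ∩ ball (0 : E) 1).Nonempty}
      (fun s => {x | (φ x ∩ V s).Nonempty}) with hA
  have hAo : ∀ o, IsOpen (A o) := by
    rintro (_ | s)
    · exact hφ _ isOpen_ball
    · exact hφ _ (hVo s)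
  have hAnone : ∀ x, φ x = Set.univ → x ∈ A none := by
    intro x hu
    exact ⟨0, by rw [hu]; trivial, mem_ball_self one_pos⟩
  have hAcov : ∀ x, ∃ o, x ∈ A o := by
    intro x
    obtain ⟨z, hzφ⟩ := hφne x
    have hzmem : z ∈ ⋃ s : S, V s := by rw [hVcov]; trivial
    obtain ⟨s, hzs⟩ := Set.mem_iUnion.1 hzmem
    exact ⟨some s, ⟨z, hzφ, hzs⟩⟩
  have hmkA : Cardinal.mk (Option S) ≤ τ := by
    rw [Cardinal.mk_option]
    calc Cardinal.mk S + 1 ≤ τ + τ :=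
          add_le_add hSc (le_trans Cardinal.one_le_aleph0 hτ)
      _ = τ := Cardinal.add_eq_self hτ
  obtain ⟨O, Q, hOo, hOdisc, hOsub, hOcard, hQc, hQ01, hQ0, hQcov⟩ :=
    partition hτ hXc hmkA A hAo hAcov
  set sel : Finset (Option S) → Option S :=
    fun F => if h : F.Nonempty then h.choose else none with hseldef
  have hsel : ∀ F : Finset (Option S), F.Nonempty → sel F ∈ F := by
    intro F h
    rw [hseldef]
    dsimp only
    rw [dif_pos h]
    exact h.choose_spec
  set tagp : Option S → E := fun o => Option.elim o 0 (fun s => (s : E)) with htagp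
  set w2 : Finset (Option S) → ℝ :=
    fun F => (1/2 : ℝ)^(F.card) * (1 + ‖tagp (sel F)‖)⁻¹ with hw2
  have htnn : ∀ F, (0:ℝ) < 1 + ‖tagp (sel F)‖ := by
    intro F
    have := norm_nonneg (tagp (sel F))
    linarith
  have hw2pos : ∀ F, 0 < w2 F := by
    intro F
    rw [hw2]
    exact mul_pos (pow_pos (by norm_num) _) (inv_pos.2 (htnn F))
  have hw2le : ∀ F, w2 F ≤ (1/2 : ℝ)^(F.card) := by
    intro F
    rw [hw2]
    dsimp only
    calc (1/2 : ℝ)^(F.card) * (1 + ‖tagp (sel F)‖)⁻¹ ≤ (1/2 : ℝ)^(F.card) * 1 := by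
          refine mul_le_mul_of_nonneg_left ?_ (le_of_lt (pow_pos (by norm_num) _))
          rw [inv_le_one_iff₀]
          right
          linarith [norm_nonneg (tagp (sel F))]
      _ = (1/2 : ℝ)^(F.card) := mul_one _
  have hw2t : ∀ F, w2 F * ‖tagp (sel F)‖ ≤ (1/2 : ℝ)^(F.card) := by
    intro F
    rw [hw2]
    dsimp only
    rw [mul_assoc]
    calc (1/2 : ℝ)^(F.card) * ((1 + ‖tagp (sel F)‖)⁻¹ * ‖tagp (sel F)‖)
        ≤ (1/2 : ℝ)^(F.card) * 1 := by
          refine mul_le_mul_of_nonneg_left ?_ (le_of_lt (pow_pos (by norm_num) _))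
          rw [inv_mul_le_iff₀ (htnn F), mul_one]
          linarith [norm_nonneg (tagp (sel F))]
      _ = (1/2 : ℝ)^(F.card) := mul_one _
  have hQmem : ∀ m F x, Q m F x ≠ 0 → x ∈ O m F :=
    fun m F x hne => by_contra fun hx => hne (hQ0 m F x hx)
  have hFne : ∀ m F, (O m F).Nonempty → F.Nonempty := by
    intro m F hx
    have := hOcard m F hx
    exact Finset.card_pos.1 (by omega)
  have hqual : ∀ m F x, x ∈ O m F →
      ∃ z, z ∈ φ x ∧ ‖z‖ ≤ 1 + ‖tagp (sel F)‖ := by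
    intro m F x hx
    have hne : F.Nonempty := hFne m F ⟨x, hx⟩
    have hmemA : x ∈ A (sel F) := Set.mem_iInter₂.1 (hOsub m F hx) (sel F) (hsel F hne)
    rcases hsf : sel F with _ | s
    · rw [hsf] at hmemA
      obtain ⟨z, hzφ, hzb⟩ := hmemA
      rw [mem_ball, dist_zero_right] at hzb
      refine ⟨z, hzφ, ?_⟩
      rw [htagp]
      show ‖z‖ ≤ 1 + ‖(0:E)‖
      rw [norm_zero]
      linarith
    · rw [hsf] at hmemA
      obtain ⟨z, hzφ, hzV⟩ := hmemA
      have hzs : dist z (s : E) < 1 := mem_ball.1 (hVsub s hzV)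
      refine ⟨z, hzφ, ?_⟩
      rw [htagp]
      show ‖z‖ ≤ 1 + ‖(s:E)‖
      calc ‖z‖ = ‖(z - (s:E)) + (s:E)‖ := by rw [sub_add_cancel]
        _ ≤ ‖z - (s:E)‖ + ‖(s:E)‖ := norm_add_le _ _
        _ ≤ 1 + ‖(s:E)‖ := by
            rw [← dist_eq_norm] at *
            linarith
  set σb : ℕ → X → ℝ := fun m x => ∑ᶠ F, w2 F * Q m F x with hσb
  set Nb : ℕ → X → ℝ := fun m x => ∑ᶠ F, (w2 F * Q m F x) * ‖tagp (sel F)‖ with hNb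
  have hσsupp : ∀ m, ∀ (F) (x : X), x ∉ O m F → w2 F * Q m F x = 0 :=
    fun m F x hx => by rw [hQ0 m F x hx, mul_zero]
  have hNsupp : ∀ m, ∀ (F) (x : X), x ∉ O m F → (w2 F * Q m F x) * ‖tagp (sel F)‖ = 0 :=
    fun m F x hx => by rw [hQ0 m F x hx, mul_zero, zero_mul]
  have hσcont : ∀ m, Continuous (σb m) := fun m =>
    discrete_finsum_continuous (hOdisc m) (hσsupp m)
      (fun F => continuous_const.mul (hQc m F))
  have hNcont : ∀ m, Continuous (Nb m) := fun m =>
    discrete_finsum_continuous (hOdisc m) (hNsupp m)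
      (fun F => (continuous_const.mul (hQc m F)).mul continuous_const)
  have hσ0 : ∀ m x, 0 ≤ σb m x := by
    intro m x
    rcases discrete_finsum_eq (hOdisc m) (hσsupp m) x with hz | ⟨F₀, -, heq⟩
    · rw [hσb]; dsimp only; rw [hz]
    · rw [hσb]; dsimp only; rw [heq]
      exact mul_nonneg (le_of_lt (hw2pos F₀)) (hQ01 m F₀ x).1
  have hσle : ∀ m x, σb m x ≤ (1/2 : ℝ)^m := by
    intro m x
    rcases discrete_finsum_eq (hOdisc m) (hσsupp m) x with hz | ⟨F₀, hF₀, heq⟩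
    · rw [hσb]; dsimp only; rw [hz]
      exact le_of_lt (pow_pos (by norm_num) m)
    · rw [hσb]; dsimp only; rw [heq]
      have hcard : F₀.card = m := (hOcard m F₀ ⟨x, hF₀⟩).1
      calc w2 F₀ * Q m F₀ x ≤ w2 F₀ * 1 :=
            mul_le_mul_of_nonneg_left (hQ01 m F₀ x).2 (le_of_lt (hw2pos F₀))
        _ = w2 F₀ := mul_one _
        _ ≤ (1/2:ℝ)^(F₀.card) := hw2le F₀
        _ = (1/2:ℝ)^m := by rw [hcard]
  have hN0 : ∀ m x, 0 ≤ Nb m x := by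
    intro m x
    rcases discrete_finsum_eq (hOdisc m) (hNsupp m) x with hz | ⟨F₀, -, heq⟩
    · rw [hNb]; dsimp only; rw [hz]
    · rw [hNb]; dsimp only; rw [heq]
      exact mul_nonneg (mul_nonneg (le_of_lt (hw2pos F₀)) (hQ01 m F₀ x).1) (norm_nonneg _)
  have hNle : ∀ m x, Nb m x ≤ (1/2 : ℝ)^m := by
    intro m x
    rcases discrete_finsum_eq (hOdisc m) (hNsupp m) x with hz | ⟨F₀, hF₀, heq⟩
    · rw [hNb]; dsimp only; rw [hz]
      exact le_of_lt (pow_pos (by norm_num) m)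
    · rw [hNb]; dsimp only; rw [heq]
      have hcard : F₀.card = m := (hOcard m F₀ ⟨x, hF₀⟩).1
      calc (w2 F₀ * Q m F₀ x) * ‖tagp (sel F₀)‖
          ≤ (w2 F₀ * 1) * ‖tagp (sel F₀)‖ := by
            refine mul_le_mul_of_nonneg_right ?_ (norm_nonneg _)
            exact mul_le_mul_of_nonneg_left (hQ01 m F₀ x).2 (le_of_lt (hw2pos F₀))
        _ = w2 F₀ * ‖tagp (sel F₀)‖ := by rw [mul_one]
        _ ≤ (1/2:ℝ)^(F₀.card) := hw2t F₀
        _ = (1/2:ℝ)^m := by rw [hcard]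
  have hhalf : Summable (fun m : ℕ => (1/2 : ℝ)^m) :=
    summable_geometric_of_lt_one (by norm_num) (by norm_num)
  have hσsum : ∀ x, Summable (fun m => σb m x) := by
    intro x
    refine Summable.of_norm_bounded hhalf (fun m => ?_)
    rw [Real.norm_eq_abs, abs_of_nonneg (hσ0 m x)]
    exact hσle m x
  have hNsum : ∀ x, Summable (fun m => Nb m x) := by
    intro x
    refine Summable.of_norm_bounded hhalf (fun m => ?_)
    rw [Real.norm_eq_abs, abs_of_nonneg (hN0 m x)]
    exact hNle m x
  set T : X → ℝ := fun x => ∑' m, σb m x with hT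
  set Num : X → ℝ := fun x => ∑' m, Nb m x with hNum
  have hTc : Continuous T := by
    rw [hT]
    refine continuous_tsum hσcont hhalf (fun m x => ?_)
    rw [Real.norm_eq_abs, abs_of_nonneg (hσ0 m x)]
    exact hσle m x
  have hNumc : Continuous Num := by
    rw [hNum]
    refine continuous_tsum hNcont hhalf (fun m x => ?_)
    rw [Real.norm_eq_abs, abs_of_nonneg (hN0 m x)]
    exact hNle m x
  have hT0 : ∀ x, 0 ≤ T x := fun x => tsum_nonneg (fun m => hσ0 m x)
  have hNum0 : ∀ x, 0 ≤ Num x := fun x => tsum_nonneg (fun m => hN0 m x)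
  have hZcl : IsClosed {x | T x = 0} := isClosed_eq hTc continuous_const
  have hZsub : {x | T x = 0} ⊆ A none := by
    intro x hxZ
    by_cases hfin : {o : Option S | x ∈ A o}.Finite
    · exfalso
      obtain ⟨m, F, hQF⟩ := hQcov x hfin
      have hx0 : x ∈ O m F := hQmem m F x (by linarith)
      have hσpos : 0 < σb m x := by
        rcases discrete_active (hOdisc m) (hσsupp m) x with hall | ⟨F₀, hF₀, hrest⟩
        · have := hall F
          have hQpos : 0 < Q m F x := by linarith
          have := mul_pos (hw2pos F) hQpos
          linarith [hall F]
        · have hFF : F = F₀ := (hOdisc m).eq_of_mem hx0 hF₀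
          have h1 : σb m x = w2 F₀ * Q m F₀ x := by
            rw [hσb]; exact finsum_eq_single _ F₀ hrest
          rw [h1, ← hFF]
          exact mul_pos (hw2pos F) (by linarith)
      have hTpos : 0 < T x := by
        have hle : σb m x ≤ T x := by
          rw [hT]
          exact Summable.le_tsum (hσsum x) m (fun m' _ => hσ0 m' x)
        linarith
      rw [Set.mem_setOf_eq] at hxZ
      linarith
    · have hnc : ¬ IsCompact (φ x) := by
        intro hc
        apply hfin
        have hfin2 := hVloc.finite_nonempty_inter_compact hc
        refine Set.Finite.subset ((hfin2.image some).insert none) ?_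
        rintro (_ | s) ho
        · exact Set.mem_insert _ _
        · refine Set.mem_insert_of_mem _ (Set.mem_image_of_mem some ?_)
          obtain ⟨z, hzφ, hzV⟩ := ho
          exact ⟨z, hzV, hzφ⟩
      rcases hφc x with hc | hu
      · exact absurd hc hnc
      · exact hAnone x hu
  obtain ⟨qs, hqs0, hqs1, hqs01⟩ := exists_continuous_zero_one_of_isClosed
    (hAo none).isClosed_compl hZcl
    (Set.disjoint_left.2 fun y hyc hyZ => hyc (hZsub hyZ))
  have hqsnn : ∀ x : X, 0 ≤ qs x := fun x => (hqs01 x).1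
  set D : X → ℝ := fun x => qs x + T x with hD
  have hD0 : ∀ x, 0 < D x := by
    intro x
    rw [hD]
    dsimp only
    by_cases hx : T x = 0
    · have h1 : qs x = 1 := hqs1 hx
      rw [h1, hx]
      norm_num
    · have h1 : 0 < T x := lt_of_le_of_ne (hT0 x) (Ne.symm hx)
      linarith [hqsnn x]
  have hDc : Continuous D := by rw [hD]; exact qs.continuous.add hTc
  refine ⟨fun x => (D x)⁻¹ * Num x + 2,
    ((hDc.inv₀ (fun x => ne_of_gt (hD0 x))).mul hNumc).add continuous_const,
    fun x => by
      have h1 := mul_nonneg (inv_nonneg.2 (le_of_lt (hD0 x))) (hNum0 x)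
      linarith,
    ?_⟩
  intro x
  -- key inequality:  infDist 0 (φ x) * D x ≤ D x + Num x
  set dd := Metric.infDist (0 : E) (φ x) with hdd
  have hdd0 : 0 ≤ dd := Metric.infDist_nonneg
  have hterm : ∀ m, dd * σb m x ≤ σb m x + Nb m x := by
    intro m
    rcases discrete_active (hOdisc m) (hσsupp m) x with hall | ⟨F₀, hF₀, hrest⟩
    · have h1 : σb m x = 0 := by
        rw [hσb]; exact finsum_eq_zero_of_forall_eq_zero hall
      rw [h1, mul_zero, zero_add]
      exact hN0 m x
    · have h1 : σb m x = w2 F₀ * Q m F₀ x := by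
        rw [hσb]; exact finsum_eq_single _ F₀ hrest
      have h2 : Nb m x = (w2 F₀ * Q m F₀ x) * ‖tagp (sel F₀)‖ := by
        rw [hNb]
        refine finsum_eq_single _ F₀ (fun F hne => ?_)
        rw [hrest F hne, zero_mul]
      obtain ⟨z, hzφ, hzn⟩ := hqual m F₀ x hF₀
      have hdz : dd ≤ 1 + ‖tagp (sel F₀)‖ := by
        refine le_trans (Metric.infDist_le_dist_of_mem hzφ) ?_
        rw [dist_zero_left]
        exact hzn
      have hσnn : 0 ≤ w2 F₀ * Q m F₀ x :=
        mul_nonneg (le_of_lt (hw2pos F₀)) (hQ01 m F₀ x).1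
      calc dd * σb m x ≤ (1 + ‖tagp (sel F₀)‖) * σb m x := by
            refine mul_le_mul_of_nonneg_right hdz ?_
            rw [h1]; exact hσnn
        _ = σb m x + σb m x * ‖tagp (sel F₀)‖ := by ring
        _ = σb m x + Nb m x := by rw [h1, h2]
  have hqsterm : dd * qs x ≤ qs x := by
    by_cases hq : qs x = 0
    · rw [hq, mul_zero]
    · have hxA : x ∈ A none := by
        by_contra hxA
        exact hq (hqs0 hxA)
      obtain ⟨z, hzφ, hzb⟩ := hxA
      rw [mem_ball, dist_zero_right] at hzb
      have hdz : dd ≤ 1 := by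
        refine le_trans (Metric.infDist_le_dist_of_mem hzφ) ?_
        rw [dist_zero_left]
        exact le_of_lt hzb
      calc dd * qs x ≤ 1 * qs x := mul_le_mul_of_nonneg_right hdz (hqsnn x)
        _ = qs x := one_mul _
  have hkey : dd * D x ≤ D x + Num x := by
    have hTineq : dd * T x ≤ T x + Num x := by
      rw [hT, hNum]
      dsimp only
      rw [← tsum_mul_left, ← Summable.tsum_add (hσsum x) (hNsum x)]
      exact Summable.tsum_le_tsum hterm ((hσsum x).mul_left dd) ((hσsum x).add (hNsum x))
    rw [hD]
    dsimp only
    calc dd * (qs x + T x) = dd * qs x + dd * T x := by ring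
      _ ≤ qs x + (T x + Num x) := add_le_add hqsterm hTineq
      _ = qs x + T x + Num x := by ring
  have hfinal : dd ≤ 1 + (D x)⁻¹ * Num x := by
    have h1 := mul_le_mul_of_nonneg_right hkey (inv_nonneg.2 (le_of_lt (hD0 x)))
    rw [mul_assoc, mul_inv_cancel₀ (ne_of_gt (hD0 x)), mul_one] at h1
    calc dd ≤ (D x + Num x) * (D x)⁻¹ := h1
      _ = D x * (D x)⁻¹ + Num x * (D x)⁻¹ := by ring
      _ = 1 + (D x)⁻¹ * Num x := by
          rw [mul_inv_cancel₀ (ne_of_gt (hD0 x))]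
          ring
  show dd < (D x)⁻¹ * Num x + 2
  linarith

end Base

/-- selections for C'_α(E)-valued l.s.c. mappings on
τ-collectionwise normal spaces. -/
theorem paraconvex_selection_collectionwiseNormal
    (τ : Cardinal.{u}) (hτ : Cardinal.aleph0 ≤ τ)
    (X : Type u) [TopologicalSpace X] [T1Space X]
    (hX : CollectionwiseNormalOfCard X τ)
    (E : Type u) [NormedAddCommGroup E] [NormedSpace ℝ E] [CompleteSpace E]
    (hw : topWeight E ≤ τ)
    (α : ℝ) (hα0 : 0 ≤ α) (hα1 : α < 1)
    (φ : X → Set E)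
    (hφval : ∀ x, (IsCompact (φ x) ∧ (φ x).Nonempty ∧ Paraconvex α (φ x)) ∨ φ x = Set.univ)
    (hφ : LowerSemicontinuousSV φ) :
    ∃ f : X → E, Continuous f ∧ ∀ x, f x ∈ φ x := by
  classical
  haveI : NormalSpace X := normalSpace_of_cwn hτ hX
  obtain ⟨S, hS, hSc⟩ := exists_dense_card_le_of_topWeight_le hw
  have hφne : ∀ x, (φ x).Nonempty := by
    intro x
    rcases hφval x with ⟨-, hne, -⟩ | hu
    · exact hne
    · rw [hu]; exact ⟨0, trivial⟩
  have hφc : ∀ x, IsCompact (φ x) ∨ φ x = Set.univ := by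
    intro x
    rcases hφval x with ⟨hc, -, -⟩ | hu
    · exact Or.inl hc
    · exact Or.inr hu
  obtain ⟨r₀, hr₀c, hr₀0, hbase⟩ := base_step hτ hX hS hSc hφ hφc hφne
  -- one improvement step, made total
  have hstep : ∀ (g : X → E) (r : X → ℝ) (ε : ℝ), 0 < ε →
      ∃ p : (X → E) × (X → ℝ),
        (p.2 = fun x => α * (r x + 2*ε) + 2*ε) ∧
        ((Continuous g ∧ Continuous r ∧ (∀ x, 0 < r x) ∧
          (∀ x, Metric.infDist (g x) (φ x) < r x)) →
         (Continuous p.1 ∧ (∀ x, Metric.infDist (p.1 x) (φ x) < p.2 x) ∧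
          (∀ x, ‖p.1 x - g x‖ ≤ r x + 2*ε))) := by
    intro g r ε hε
    by_cases hgood : Continuous g ∧ Continuous r ∧ (∀ x, 0 < r x) ∧
      (∀ x, Metric.infDist (g x) (φ x) < r x)
    · obtain ⟨hg, hr, hr0, happ⟩ := hgood
      obtain ⟨h, hhc, hest, hnorm⟩ :=
        improve_step hτ hX hS hSc hφ hα0 hφval hg hr hr0 hε happ
      refine ⟨⟨h, fun x => α * (r x + 2*ε) + 2*ε⟩, rfl, fun _ => ⟨hhc, fun x => ?_, hnorm⟩⟩
      have h1 := hest x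
      show Metric.infDist (h x) (φ x) < α * (r x + 2*ε) + 2*ε
      linarith
    · exact ⟨⟨g, fun x => α * (r x + 2*ε) + 2*ε⟩, rfl, fun hg => absurd hg hgood⟩
  set seq : ℕ → (X → E) × (X → ℝ) :=
    fun k => Nat.rec (⟨fun _ => 0, r₀⟩)
      (fun k p => (hstep p.1 p.2 ((1/2 : ℝ)^k) (pow_pos one_half_pos k)).choose) k with hseq
  have hspec : ∀ k, _ :=
    fun k => (hstep (seq k).1 (seq k).2 ((1/2 : ℝ)^k) (pow_pos one_half_pos k)).choose_spec
  have hseqsucc : ∀ k, seq (k+1) =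
      (hstep (seq k).1 (seq k).2 ((1/2 : ℝ)^k) (pow_pos one_half_pos k)).choose :=
    fun k => rfl
  have hGood : ∀ k, Continuous (seq k).1 ∧ Continuous (seq k).2 ∧
      (∀ x, 0 < (seq k).2 x) ∧ (∀ x, Metric.infDist ((seq k).1 x) (φ x) < (seq k).2 x) := by
    intro k
    induction k with
    | zero => exact ⟨continuous_const, hr₀c, hr₀0, hbase⟩
    | succ k ih =>
      obtain ⟨heq, himp⟩ := hspec k
      obtain ⟨hc, happx, hnorm⟩ := himp ih
      rw [hseqsucc k]
      refine ⟨hc, ?_, ?_, happx⟩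
      · rw [heq]
        exact (continuous_const.mul (ih.2.1.add continuous_const)).add continuous_const
      · intro x
        rw [heq]
        have h1 := (ih.2.2.1) x
        have h2 : (0:ℝ) < (1/2:ℝ)^k := pow_pos one_half_pos k
        have h3 : 0 ≤ α * ((seq k).2 x + 2*(1/2:ℝ)^k) := by positivity
        dsimp only
        linarith
  have hreq : ∀ k, (seq (k+1)).2 =
      fun x => α * ((seq k).2 x + 2*(1/2:ℝ)^k) + 2*(1/2:ℝ)^k := fun k => (hspec k).1
  have hInc : ∀ k x, ‖(seq (k+1)).1 x - (seq k).1 x‖ ≤ (seq k).2 x + 2*(1/2:ℝ)^k :=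
    fun k => ((hspec k).2 (hGood k)).2.2
  -- geometric decay
  set γ : ℝ := max α (1/2) with hγ
  have hγ1 : γ < 1 := max_lt hα1 (by norm_num)
  have hγ0 : (0:ℝ) ≤ γ := le_trans (by norm_num) (le_max_right _ _)
  have hγhalfpos : (0:ℝ) < γ := lt_of_lt_of_le (by norm_num) (le_max_right _ _)
  have hhalfγ : ∀ k : ℕ, ((1/2:ℝ))^k ≤ γ^k :=
    fun k => pow_le_pow_left₀ (by norm_num) (le_max_right _ _) k
  have hαγ : α ≤ γ := le_max_left _ _
  have hpow2 : ∀ k : ℕ, γ^(k-1) ≤ 2*γ^k := by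
    rintro (_ | k)
    · norm_num
    · show γ^k ≤ 2*γ^(k+1)
      rw [pow_succ]
      have h1 : (1:ℝ) ≤ 2*γ := by
        have := le_max_right α (1/2 : ℝ)
        rw [hγ]
        linarith
      calc γ^k = γ^k * 1 := (mul_one _).symm
        _ ≤ γ^k * (2*γ) := by
            refine mul_le_mul_of_nonneg_left h1 (pow_nonneg hγ0 k)
        _ = 2*(γ^k*γ) := by ring
  have hRb : ∀ k x, (seq k).2 x ≤ γ^k * r₀ x + 4*k*γ^(k-1) := by
    intro k
    induction k with
    | zero =>
      intro x
      show r₀ x ≤ γ^0 * r₀ x + 4*((0:ℕ):ℝ)*γ^(0-1)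
      norm_num
    | succ k ih =>
      intro x
      have h1 : (seq (k+1)).2 x = α * ((seq k).2 x + 2*(1/2:ℝ)^k) + 2*(1/2:ℝ)^k := by
        rw [hreq k]
      have h2 := ih x
      have h3 : (0:ℝ) < (1/2:ℝ)^k := pow_pos one_half_pos k
      have h4 := hhalfγ k
      have h5 : (0:ℝ) ≤ γ^k := pow_nonneg hγ0 k
      have h6 : 0 < (seq k).2 x := (hGood k).2.2.1 x
      have hαk : α * (seq k).2 x ≤ γ * (seq k).2 x :=
        mul_le_mul_of_nonneg_right hαγ (le_of_lt h6)
      have hγmul : γ * ((seq k).2 x) ≤ γ * (γ^k * r₀ x + 4*k*γ^(k-1)) :=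
        mul_le_mul_of_nonneg_left h2 hγ0
      have hkk : (k:ℝ) * (γ * γ^(k-1)) ≤ (k:ℝ) * γ^k := by
        rcases k with _ | k'
        · simp
        · have : γ * γ^(k'+1-1) = γ^(k'+1) := by
            show γ * γ^k' = γ^(k'+1)
            rw [pow_succ]
            ring
          rw [this]
      have hε2 : α * (2*(1/2:ℝ)^k) + 2*(1/2:ℝ)^k ≤ 4*γ^k := by
        have : α * (2*(1/2:ℝ)^k) ≤ 1 * (2*(1/2:ℝ)^k) :=
          mul_le_mul_of_nonneg_right (le_of_lt hα1) (by linarith)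
        have h7 := hhalfγ k
        linarith
      calc (seq (k+1)).2 x = α * (seq k).2 x + (α * (2*(1/2:ℝ)^k) + 2*(1/2:ℝ)^k) := by
            rw [h1]; ring
        _ ≤ γ * (seq k).2 x + 4*γ^k := by linarith
        _ ≤ γ * (γ^k * r₀ x + 4*k*γ^(k-1)) + 4*γ^k := by linarith
        _ = γ^(k+1) * r₀ x + 4*((k:ℝ) * (γ * γ^(k-1))) + 4*γ^k := by
            rw [pow_succ]; ring
        _ ≤ γ^(k+1) * r₀ x + 4*((k:ℝ) * γ^k) + 4*γ^k := by linarith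
        _ = γ^(k+1) * r₀ x + 4*((k:ℝ)+1)*γ^k := by ring
        _ = γ^(k+1) * r₀ x + 4*(↑(k+1))*γ^((k+1)-1) := by
            rw [Nat.add_sub_cancel]
            push_cast
            ring
  -- the increments and the limit
  set d : ℕ → X → E := fun k x => (seq (k+1)).1 x - (seq k).1 x with hd
  have hdc : ∀ k, Continuous (d k) := fun k => ((hGood (k+1)).1.sub (hGood k).1)
  have hdb : ∀ k x, ‖d k x‖ ≤ γ^k * r₀ x + 4*k*γ^(k-1) + 2*γ^k := by
    intro k x
    have h1 := hInc k x
    have h2 := hRb k x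
    have h3 := hhalfγ k
    rw [hd]
    dsimp only
    linarith
  have hsum1 : Summable (fun k:ℕ => (k:ℝ) * γ^k) := by
    have := summable_pow_mul_geometric_of_norm_lt_one 1
      (show ‖γ‖ < 1 by rwa [Real.norm_eq_abs, abs_of_nonneg hγ0])
    simpa [pow_one] using this
  have hsum2 : Summable (fun k:ℕ => γ^k) := summable_geometric_of_lt_one hγ0 hγ1
  have hBsum : ∀ C : ℝ, Summable (fun k:ℕ => γ^k * C + 4*k*γ^(k-1) + 2*γ^k) := by
    intro C
    refine Summable.add (Summable.add (hsum2.mul_right C) ?_) (hsum2.mul_left 2)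
    refine Summable.of_norm_bounded (g := fun k => 8*((k:ℝ)*γ^k)) (hsum1.mul_left 8) (fun k => ?_)
    have h1 : (0:ℝ) ≤ (k:ℝ) := Nat.cast_nonneg k
    have h2 : (0:ℝ) ≤ γ^(k-1) := pow_nonneg hγ0 _
    rw [Real.norm_eq_abs, abs_of_nonneg (by positivity)]
    have h3 := hpow2 k
    calc 4*(k:ℝ)*γ^(k-1) ≤ 4*(k:ℝ)*(2*γ^k) := by
          rw [mul_assoc, mul_assoc]
          exact mul_le_mul_of_nonneg_left
            (mul_le_mul_of_nonneg_left h3 h1) (by norm_num)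
      _ = 8*((k:ℝ)*γ^k) := by ring
  have hdsumX : ∀ x, Summable (fun k => d k x) := by
    intro x
    exact Summable.of_norm_bounded (hBsum (r₀ x)) (fun k => hdb k x)
  set f : X → E := fun x => ∑' k, d k x with hf
  have hfc : Continuous f := by
    rw [hf]
    refine continuous_tsum_local hdc ?_
    intro x₀
    refine ⟨{y | r₀ y < r₀ x₀ + 1}, (isOpen_lt hr₀c continuous_const).mem_nhds (by
      simp only [Set.mem_setOf_eq]; linarith), fun k => γ^k * (r₀ x₀ + 1) + 4*k*γ^(k-1) + 2*γ^k,
      hBsum _, fun k y hy => ?_⟩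
    have h1 := hdb k y
    have h2 : r₀ y ≤ r₀ x₀ + 1 := le_of_lt hy
    have h3 : γ^k * r₀ y ≤ γ^k * (r₀ x₀ + 1) :=
      mul_le_mul_of_nonneg_left h2 (pow_nonneg hγ0 k)
    show ‖d k y‖ ≤ γ^k * (r₀ x₀ + 1) + 4*k*γ^(k-1) + 2*γ^k
    linarith
  have hpart : ∀ x n, ∑ k ∈ Finset.range n, d k x = (seq n).1 x := by
    intro x n
    induction n with
    | zero => simp [hseq]
    | succ n ih =>
      rw [Finset.sum_range_succ, ih, hd]
      dsimp only
      abel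
  have htendf : ∀ x, Filter.Tendsto (fun n => (seq n).1 x) Filter.atTop (nhds (f x)) := by
    intro x
    have h1 := (hdsumX x).hasSum.tendsto_sum_nat
    rw [hf]
    dsimp only
    exact h1.congr (fun n => hpart x n)
  have hrtend : ∀ x, Filter.Tendsto (fun n => (seq n).2 x) Filter.atTop (nhds 0) := by
    intro x
    refine squeeze_zero (fun n => le_of_lt ((hGood n).2.2.1 x)) (fun n => hRb n x) ?_
    have h1 : Filter.Tendsto (fun n:ℕ => γ^n * r₀ x) Filter.atTop (nhds 0) := by
      have := (tendsto_pow_atTop_nhds_zero_of_lt_one hγ0 hγ1).mul_const (r₀ x)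
      simpa using this
    have h2 : Filter.Tendsto (fun n:ℕ => 4*(n:ℝ)*γ^(n-1)) Filter.atTop (nhds 0) := by
      have hb : ∀ n:ℕ, 4*(n:ℝ)*γ^(n-1) ≤ 8*((n:ℝ)*γ^n) := by
        intro n
        have h3 := hpow2 n
        have h4 : (0:ℝ) ≤ (n:ℝ) := Nat.cast_nonneg n
        calc 4*(n:ℝ)*γ^(n-1) ≤ 4*(n:ℝ)*(2*γ^n) := by
              rw [mul_assoc, mul_assoc]
              exact mul_le_mul_of_nonneg_left
                (mul_le_mul_of_nonneg_left h3 h4) (by norm_num)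
          _ = 8*((n:ℝ)*γ^n) := by ring
      have hnn : ∀ n:ℕ, 0 ≤ 4*(n:ℝ)*γ^(n-1) := by
        intro n
        have := pow_nonneg hγ0 (n-1)
        positivity
      refine squeeze_zero hnn hb ?_
      have := (hsum1.mul_left 8).tendsto_atTop_zero
      simpa using this
    have := h1.add h2
    simpa using this
  have hfmem : ∀ x, f x ∈ φ x := by
    intro x
    have hid : Metric.infDist (f x) (φ x) = 0 := by
      have hub : ∀ n, Metric.infDist (f x) (φ x) ≤
          (seq n).2 x + dist (f x) ((seq n).1 x) := by
        intro n
        calc Metric.infDist (f x) (φ x)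
            ≤ Metric.infDist ((seq n).1 x) (φ x) + dist (f x) ((seq n).1 x) :=
              Metric.infDist_le_infDist_add_dist
          _ ≤ (seq n).2 x + dist (f x) ((seq n).1 x) := by
              linarith [(hGood n).2.2.2 x]
      have htd : Filter.Tendsto (fun n => (seq n).2 x + dist (f x) ((seq n).1 x))
          Filter.atTop (nhds 0) := by
        have h1 : Filter.Tendsto (fun n => dist (f x) ((seq n).1 x)) Filter.atTop (nhds 0) := by
          have := (tendsto_const_nhds (x := f x) (f := Filter.atTop (α := ℕ))).dist (htendf x)
          simpa using this
        have := (hrtend x).add h1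
        simpa using this
      have h2 : Metric.infDist (f x) (φ x) ≤ 0 := ge_of_tendsto' htd hub
      exact le_antisymm h2 Metric.infDist_nonneg
    rcases hφval x with ⟨hc, hne, -⟩ | hu
    · exact (hc.isClosed.mem_iff_infDist_zero hne).2 hid
    · rw [hu]; trivial
  exact ⟨f, hfc, hfmem⟩
end

section
/- Let X be a paracompact Hausdorff space, let E be a Banach space, let 0 ≤ α < 1, and let φ : X → F_α(E) be a lower semicontinuous set-valued mapping whose values are nonempty closed α-paraconvex subsets of E. Then φ has a continuous selection. -/
open Set Metric Filter Topology Cardinal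

universe u v

section Aux

open Pointwise

lemma open_infDist_lt {X E : Type*} [TopologicalSpace X] [NormedAddCommGroup E]
    {φ : X → Set E} (hφ : LowerSemicontinuousSV φ) (hne : ∀ x, (φ x).Nonempty)
    {f : X → E} (hf : Continuous f) {r : X → ℝ} (hr : Continuous r) :
    IsOpen {x | infDist (f x) (φ x) < r x} := by
  rw [isOpen_iff_forall_mem_open]
  intro x₀ hx₀
  obtain ⟨y, hyφ, hy⟩ := (infDist_lt_iff (hne x₀)).1 hx₀
  set δ : ℝ := (r x₀ - dist (f x₀) y) / 3 with hδdef
  have hδ : 0 < δ := by rw [hδdef]; linarith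
  refine ⟨{x | (φ x ∩ ball y δ).Nonempty} ∩ f ⁻¹' ball (f x₀) δ ∩ r ⁻¹' Ioi (r x₀ - δ),
    ?_, ?_, ?_⟩
  · intro x hx
    obtain ⟨⟨⟨z, hzφ, hz⟩, hfx⟩, hrx⟩ := hx
    have h1 : dist (f x) z ≤ dist (f x) (f x₀) + dist (f x₀) y + dist y z := dist_triangle4 _ _ _ _
    have h2 : dist (f x) (f x₀) < δ := hfx
    have h3 : dist y z < δ := by rw [dist_comm]; exact hz
    have h4 : r x₀ - δ < r x := hrx
    calc infDist (f x) (φ x) ≤ dist (f x) z := infDist_le_dist_of_mem hzφ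
      _ < r x := by dsimp [hδdef] at *; linarith
  · exact ((hφ _ isOpen_ball).inter (isOpen_ball.preimage hf)).inter
      (isOpen_Ioi.preimage hr)
  · exact ⟨⟨⟨y, hyφ, mem_ball_self hδ⟩, mem_ball_self hδ⟩, by simp only [mem_preimage, mem_Ioi]; linarith⟩

lemma exists_cont_gt {X : Type*} [TopologicalSpace X] [ParacompactSpace X] [T2Space X]
    (h : X → ℝ) (hopen : ∀ c : ℝ, IsOpen {x | h x < c}) :
    ∃ r : X → ℝ, Continuous r ∧ ∀ x, h x < r x := by
  obtain ⟨g, hg⟩ := exists_continuous_forall_mem_convex_of_local_const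
    (t := fun x => Ioi (h x)) (fun x => convex_Ioi _)
    (fun x₀ => ⟨h x₀ + 1, (hopen (h x₀ + 1)).mem_nhds (by simp)⟩)
  exact ⟨g, g.continuous, hg⟩

lemma step_lemma {X : Type*} [TopologicalSpace X] [ParacompactSpace X] [T2Space X]
    {E : Type*} [NormedAddCommGroup E] [NormedSpace ℝ E]
    {α : ℝ} {φ : X → Set E}
    (hφval : ∀ x, (φ x).Nonempty ∧ IsClosed (φ x) ∧ Paraconvex α (φ x))
    (hφ : LowerSemicontinuousSV φ)
    {f : X → E} (hf : Continuous f) {r : X → ℝ} (hr : Continuous r)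
    (hrpos : ∀ x, 0 < r x) (happ : ∀ x, infDist (f x) (φ x) < r x)
    {ε : ℝ} (hε : 0 < ε) :
    ∃ g : X → E, Continuous g ∧ (∀ x, infDist (g x) (φ x) < (α + ε) * r x) ∧
      ∀ x, dist (g x) (f x) < (1 + ε) * r x := by
  set t : X → Set E :=
    fun x => convexHull ℝ (thickening (ε * r x) (ball (f x) (r x) ∩ φ x)) with ht_def
  have hconv : ∀ x, Convex ℝ (t x) := fun x => convex_convexHull ℝ _
  have hloc : ∀ x₀ : X, ∃ c : E, ∀ᶠ x in 𝓝 x₀, c ∈ t x := by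
    intro x₀
    obtain ⟨y, hyφ, hy⟩ := (infDist_lt_iff (hφval x₀).1).1 (happ x₀)
    refine ⟨y, ?_⟩
    set δ : ℝ := min ((r x₀ - dist (f x₀) y) / 3) (ε * r x₀ / 2) with hδdef
    have hδ : 0 < δ := by
      have h1 := hrpos x₀
      have h2 := mul_pos hε h1
      exact lt_min (by linarith) (by linarith)
    have hδ3 : 3 * δ ≤ r x₀ - dist (f x₀) y := by
      have := min_le_left ((r x₀ - dist (f x₀) y) / 3) (ε * r x₀ / 2)
      rw [← hδdef] at this; linarith
    set U : Set X := {x | (φ x ∩ ball y δ).Nonempty} ∩ f ⁻¹' ball (f x₀) δ ∩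
      r ⁻¹' Ioi (r x₀ - δ) ∩ {x | δ < ε * r x} with hU_def
    have hUopen : IsOpen U := by
      refine (((hφ _ isOpen_ball).inter (isOpen_ball.preimage hf)).inter
        (isOpen_Ioi.preimage hr)).inter ?_
      have : Continuous fun x => ε * r x := continuous_const.mul hr
      exact isOpen_lt continuous_const this
    have hx₀U : x₀ ∈ U := by
      refine ⟨⟨⟨⟨y, hyφ, mem_ball_self hδ⟩, mem_ball_self hδ⟩, ?_⟩, ?_⟩
      · simp only [mem_preimage, mem_Ioi]; linarith
      · have h2 : δ ≤ ε * r x₀ / 2 := by rw [hδdef]; exact min_le_right _ _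
        have : 0 < ε * r x₀ := mul_pos hε (hrpos x₀)
        simp only [mem_setOf_eq]; linarith
    filter_upwards [hUopen.mem_nhds hx₀U] with x hx
    obtain ⟨⟨⟨⟨z, hzφ, hz⟩, hfx⟩, hrx⟩, hεx⟩ := hx
    have hdfz : dist z (f x) < r x := by
      have h1 : dist (f x) z ≤ dist (f x) (f x₀) + dist (f x₀) y + dist y z :=
        dist_triangle4 _ _ _ _
      have h2 : dist (f x) (f x₀) < δ := hfx
      have h3 : dist y z < δ := by rw [dist_comm]; exact hz
      have h4 : r x₀ - δ < r x := hrx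
      rw [dist_comm]; linarith
    have hyz : dist y z < ε * r x := by
      have h3 : dist y z < δ := by rw [dist_comm]; exact hz
      exact h3.trans hεx
    exact subset_convexHull ℝ _ (mem_thickening_iff.2 ⟨z, ⟨hdfz, hzφ⟩, hyz⟩)
  obtain ⟨g, hg⟩ := exists_continuous_forall_mem_convex_of_local_const hconv hloc
  refine ⟨g, g.continuous, ?_⟩
  have key : ∀ x, infDist (g x) (φ x) < (α + ε) * r x ∧ dist (g x) (f x) < (1 + ε) * r x := by
    intro x
    set S : Set E := ball (f x) (r x) ∩ φ x with hS_def
    have hsub : t x ⊆ convexHull ℝ S + ball (0 : E) (ε * r x) := by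
      refine convexHull_min ?_ ((convex_convexHull ℝ S).add (convex_ball 0 _))
      intro w hw
      obtain ⟨z, hz, hd⟩ := mem_thickening_iff.1 hw
      refine Set.mem_add.2 ⟨z, subset_convexHull ℝ _ hz, w - z, ?_, add_sub_cancel z w⟩
      simpa [mem_ball, dist_zero_right, ← dist_eq_norm] using hd
    obtain ⟨q, hq, e, he, hqe⟩ := Set.mem_add.1 (hsub (hg x))
    have hqd : infDist q (φ x) ≤ α * r x :=
      (hφval x).2.2 (r x) (hrpos x) (f x) (happ x) q hq
    have hgq : dist (g x) q < ε * r x := by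
      have : g x - q = e := by rw [← hqe]; abel
      rw [dist_eq_norm, this]
      simpa [mem_ball, dist_zero_right] using he
    have hqf : dist q (f x) < r x := by
      have : convexHull ℝ S ⊆ ball (f x) (r x) :=
        convexHull_min inter_subset_left (convex_ball _ _)
      exact this hq
    constructor
    · calc infDist (g x) (φ x) ≤ infDist q (φ x) + dist (g x) q :=
          infDist_le_infDist_add_dist
        _ < α * r x + ε * r x := by linarith
        _ = (α + ε) * r x := by ring
    · calc dist (g x) (f x) ≤ dist (g x) q + dist q (f x) := dist_triangle _ _ _
        _ < ε * r x + r x := by linarith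
        _ = (1 + ε) * r x := by ring
  exact ⟨fun x => (key x).1, fun x => (key x).2⟩

end Aux

/-- Michael's paraconvex-valued selection theorem for paracompact
spaces. -/
theorem paraconvex_selection_paracompact
    (X : Type*) [TopologicalSpace X] [ParacompactSpace X] [T2Space X]
    (E : Type*) [NormedAddCommGroup E] [NormedSpace ℝ E] [CompleteSpace E]
    (α : ℝ) (hα0 : 0 ≤ α) (hα1 : α < 1)
    (φ : X → Set E)
    (hφval : ∀ x, (φ x).Nonempty ∧ IsClosed (φ x) ∧ Paraconvex α (φ x))
    (hφ : LowerSemicontinuousSV φ) :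
    ∃ f : X → E, Continuous f ∧ ∀ x, f x ∈ φ x := by
  classical
  set β : ℝ := (1 + α) / 2 with hβdef
  have hβ0 : 0 < β := by rw [hβdef]; linarith
  have hβ1 : β < 1 := by rw [hβdef]; linarith
  have hαβ : 0 < β - α := by rw [hβdef]; linarith
  have hβ2 : 1 + (β - α) ≤ 2 := by rw [hβdef]; linarith
  -- initial continuous radius function
  obtain ⟨r₀, hr₀c, hr₀⟩ := exists_cont_gt (fun x => infDist (0 : E) (φ x))
    (fun c => open_infDist_lt hφ (fun x => (hφval x).1) continuous_const continuous_const)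
  have hr₀pos : ∀ x, 0 < r₀ x := fun x => infDist_nonneg.trans_lt (hr₀ x)
  -- the recursive construction
  have hstep : ∀ (n : ℕ) (f : X → E), Continuous f →
      (∀ x, infDist (f x) (φ x) < β ^ n * r₀ x) →
      ∃ g : X → E, Continuous g ∧ (∀ x, infDist (g x) (φ x) < β ^ (n + 1) * r₀ x) ∧
        ∀ x, dist (g x) (f x) ≤ 2 * r₀ x * β ^ n := by
    intro n f hf happ
    obtain ⟨g, hgc, hg1, hg2⟩ := step_lemma hφval hφ hf
      (continuous_const.mul hr₀c) (fun x => mul_pos (pow_pos hβ0 n) (hr₀pos x)) happ hαβ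
    refine ⟨g, hgc, fun x => ?_, fun x => ?_⟩
    · have := hg1 x
      calc infDist (g x) (φ x) < (α + (β - α)) * (β ^ n * r₀ x) := this
        _ = β ^ (n + 1) * r₀ x := by ring
    · have h1 := hg2 x
      have h2 : (0:ℝ) ≤ β ^ n * r₀ x := (mul_pos (pow_pos hβ0 n) (hr₀pos x)).le
      have h3 : (1 + (β - α)) * (β ^ n * r₀ x) ≤ 2 * (β ^ n * r₀ x) := by nlinarith
      calc dist (g x) (f x) ≤ 2 * (β ^ n * r₀ x) := le_of_lt (h1.trans_le h3)
        _ = 2 * r₀ x * β ^ n := by ring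
  -- build the sequence of approximate selections
  let Good : ℕ → Type _ := fun n =>
    {f : X → E // Continuous f ∧ ∀ x, infDist (f x) (φ x) < β ^ n * r₀ x}
  have init : Good 0 := ⟨fun _ => 0, continuous_const, fun x => by
    simpa using hr₀ x⟩
  let next : ∀ n, Good n → Good (n + 1) := fun n f =>
    ⟨(hstep n f.1 f.2.1 f.2.2).choose, (hstep n f.1 f.2.1 f.2.2).choose_spec.1,
      (hstep n f.1 f.2.1 f.2.2).choose_spec.2.1⟩
  let u' : ∀ n, Good n := fun n => Nat.rec init next n
  let u : ℕ → X → E := fun n => (u' n).1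
  have hucont : ∀ n, Continuous (u n) := fun n => (u' n).2.1
  have huapp : ∀ n x, infDist (u n x) (φ x) < β ^ n * r₀ x := fun n x => (u' n).2.2 x
  have hudist : ∀ n x, dist (u (n + 1) x) (u n x) ≤ 2 * r₀ x * β ^ n := by
    intro n x
    have : u (n + 1) = (hstep n (u' n).1 (u' n).2.1 (u' n).2.2).choose := rfl
    rw [this]
    exact (hstep n (u' n).1 (u' n).2.1 (u' n).2.2).choose_spec.2.2 x
  have hudist' : ∀ x n, dist (u n x) (u (n + 1) x) ≤ 2 * r₀ x * β ^ n := fun x n => by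
    rw [dist_comm]; exact hudist n x
  -- convergence
  have hconv : ∀ x : X, ∃ y : E, Tendsto (fun n => u n x) atTop (𝓝 y) := by
    intro x
    exact cauchySeq_tendsto_of_complete
      (cauchySeq_of_le_geometric β (2 * r₀ x) hβ1 (hudist' x))
  choose F hF using hconv
  have hFdist : ∀ n x, dist (u n x) (F x) ≤ 2 * r₀ x * β ^ n / (1 - β) := fun n x =>
    dist_le_of_le_geometric_of_tendsto β (2 * r₀ x) hβ1 (hudist' x) (hF x) n
  -- the limit is a selection
  have hmem : ∀ x, F x ∈ φ x := by
    intro x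
    have h1 : Tendsto (fun n => infDist (u n x) (φ x)) atTop (𝓝 (infDist (F x) (φ x))) :=
      ((continuous_infDist_pt (φ x)).tendsto (F x)).comp (hF x)
    have h2 : Tendsto (fun n : ℕ => β ^ n * r₀ x) atTop (𝓝 0) := by
      simpa using (tendsto_pow_atTop_nhds_zero_of_lt_one hβ0.le hβ1).mul_const (r₀ x)
    have h3 : infDist (F x) (φ x) ≤ 0 :=
      le_of_tendsto_of_tendsto h1 h2 (Eventually.of_forall fun n => (huapp n x).le)
    have h4 : infDist (F x) (φ x) = 0 := le_antisymm h3 infDist_nonneg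
    exact (((hφval x).2.1).mem_iff_infDist_zero (hφval x).1).2 h4
  -- continuity of the limit
  have hFcont : Continuous F := by
    rw [continuous_iff_continuousAt]
    intro x₀
    rw [ContinuousAt, Metric.tendsto_nhds]
    intro ε hε
    have hK : (0:ℝ) < 2 * (r₀ x₀ + 1) / (1 - β) := by
      have := hr₀pos x₀
      have h1β : 0 < 1 - β := by linarith
      positivity
    obtain ⟨n, hn⟩ : ∃ n : ℕ, 2 * (r₀ x₀ + 1) * β ^ n / (1 - β) < ε / 3 := by
      have ht : Tendsto (fun n : ℕ => 2 * (r₀ x₀ + 1) * β ^ n / (1 - β)) atTop (𝓝 0) := by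
        simpa using ((tendsto_pow_atTop_nhds_zero_of_lt_one hβ0.le hβ1).const_mul
          (2 * (r₀ x₀ + 1))).div_const (1 - β)
      exact (ht.eventually (gt_mem_nhds (by positivity : (0:ℝ) < ε / 3))).exists
    have ev1 : ∀ᶠ x in 𝓝 x₀, r₀ x < r₀ x₀ + 1 :=
      (isOpen_lt hr₀c continuous_const).mem_nhds (by simp [lt_add_one])
    have ev2 : ∀ᶠ x in 𝓝 x₀, dist (u n x) (u n x₀) < ε / 3 :=
      Metric.tendsto_nhds.1 ((hucont n).continuousAt (x := x₀)) (ε / 3) (by positivity)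
    filter_upwards [ev1, ev2] with x hx1 hx2
    have h1β : 0 < 1 - β := by linarith
    have b1 : dist (F x) (u n x) ≤ 2 * r₀ x * β ^ n / (1 - β) := by
      rw [dist_comm]; exact hFdist n x
    have b1' : 2 * r₀ x * β ^ n / (1 - β) ≤ 2 * (r₀ x₀ + 1) * β ^ n / (1 - β) := by
      have hβn : (0:ℝ) ≤ β ^ n := by positivity
      gcongr
    have b3 : dist (u n x₀) (F x₀) ≤ 2 * r₀ x₀ * β ^ n / (1 - β) := hFdist n x₀
    have b3' : 2 * r₀ x₀ * β ^ n / (1 - β) ≤ 2 * (r₀ x₀ + 1) * β ^ n / (1 - β) := by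
      have hβn : (0:ℝ) ≤ β ^ n := by positivity
      gcongr
      linarith
    calc dist (F x) (F x₀) ≤ dist (F x) (u n x) + dist (u n x) (u n x₀) + dist (u n x₀) (F x₀) :=
        dist_triangle4 _ _ _ _
      _ < ε / 3 + ε / 3 + ε / 3 := by
          have := b1.trans (b1'.trans hn.le)
          have := b3.trans (b3'.trans hn.le)
          linarith [b1.trans (b1'.trans hn.le), b3.trans (b3'.trans hn.le), hx2]
      _ = ε := by ring
  exact ⟨F, hFcont, hmem⟩
end

section
/- Let X be a paracompact Hausdorff space, let E be a Banach space, let 0 ≤ α < 1, and let φ : X → F_α(E) be a lower semicontinuous set-valued mapping whose values are nonempty closed α-paraconvex subsets of E. Then there exists δ > 0, depending only on α, such that for every r > 0 and every continuous map g : X → E with d(g(x), φ(x)) < r for all x ∈ X, there exists a continuous selection f for φ with d(g(x), f(x)) < δ·r for all x ∈ X. -/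
open Set Metric Filter Topology Cardinal

universe u v

open scoped Pointwise

/-- Approximation step lemma: from a continuous `r`-approximate selection one can build a
continuous `((1+α)/2)·r`-approximate selection at distance `< r`. -/
lemma paraconvex_step
    {X : Type*} [TopologicalSpace X] [ParacompactSpace X] [T2Space X]
    {E : Type*} [NormedAddCommGroup E] [NormedSpace ℝ E]
    {α : ℝ} (hα0 : 0 ≤ α) (hα1 : α < 1)
    {φ : X → Set E}
    (hφval : ∀ x, (φ x).Nonempty ∧ IsClosed (φ x) ∧ Paraconvex α (φ x))
    (hφ : LowerSemicontinuousSV φ)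
    {r : ℝ} (hr : 0 < r) {g : X → E} (hg : Continuous g)
    (hgd : ∀ x, Metric.infDist (g x) (φ x) < r) :
    ∃ h : X → E, Continuous h ∧ (∀ x, dist (g x) (h x) < r) ∧
      ∀ x, Metric.infDist (h x) (φ x) < (1 + α) / 2 * r := by
  have hα1' : 0 < 1 - α := by linarith
  set τ : ℝ := (1 - α) / (4 * (α + 1)) with hτdef
  have hτ : 0 < τ := div_pos hα1' (by linarith)
  set ε : ℝ := τ * r with hεdef
  have hε : 0 < ε := mul_pos hτ hr
  set t : X → Set E :=
    fun x => convexHull ℝ (ball (g x) r ∩ {e | Metric.infDist e (φ x) < ε}) with ht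
  have hconv : ∀ x, Convex ℝ (t x) := fun x => convex_convexHull ℝ _
  have hloc : ∀ x : X, ∃ c : E, ∀ᶠ y in 𝓝 x, c ∈ t y := by
    intro x
    obtain ⟨v, hvφ, hvd⟩ := (Metric.infDist_lt_iff (hφval x).1).1 (hgd x)
    refine ⟨v, ?_⟩
    have hU1 : IsOpen {y : X | dist (g y) v < r} :=
      isOpen_lt (hg.dist continuous_const) continuous_const
    have hU2 : IsOpen {y : X | (φ y ∩ ball v ε).Nonempty} := hφ _ isOpen_ball
    have hxU : x ∈ {y : X | dist (g y) v < r} ∩ {y : X | (φ y ∩ ball v ε).Nonempty} :=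
      ⟨hvd, ⟨v, hvφ, mem_ball_self hε⟩⟩
    filter_upwards [(hU1.inter hU2).mem_nhds hxU] with y hy
    obtain ⟨hy1, w, hwφ, hwv⟩ := hy
    refine subset_convexHull ℝ _ ⟨?_, ?_⟩
    · exact mem_ball.2 (by rw [dist_comm]; exact hy1)
    · exact lt_of_le_of_lt (Metric.infDist_le_dist_of_mem hwφ) (by rwa [dist_comm, ← mem_ball])
  obtain ⟨h, hmem⟩ := exists_continuous_forall_mem_convex_of_local_const hconv hloc
  refine ⟨h, h.continuous, ?_, ?_⟩
  · intro x
    have : t x ⊆ ball (g x) r := by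
      rw [ht]
      refine (convexHull_mono inter_subset_left).trans ?_
      rw [(convex_ball (g x) r).convexHull_eq]
    have := this (hmem x)
    rw [dist_comm]; exact mem_ball.1 this
  · intro x
    -- key subset inclusion
    have hsub : ball (g x) r ∩ {e | Metric.infDist e (φ x) < ε} ⊆
        (ball (g x) (r + ε) ∩ φ x) + ball 0 ε := by
      rintro a ⟨ha1, ha2⟩
      obtain ⟨b, hbφ, hab⟩ := (Metric.infDist_lt_iff (hφval x).1).1 ha2
      refine ⟨b, ⟨?_, hbφ⟩, a - b, ?_, by module⟩
      · have : dist b (g x) ≤ dist b a + dist a (g x) := dist_triangle _ _ _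
        rw [mem_ball]
        calc dist b (g x) ≤ dist b a + dist a (g x) := dist_triangle _ _ _
          _ < ε + r := by
              have := mem_ball.1 ha1
              rw [dist_comm] at hab
              linarith
          _ = r + ε := by ring
      · rw [mem_ball_zero_iff, ← dist_eq_norm]; exact hab
    have hhx : h x ∈ convexHull ℝ (ball (g x) (r + ε) ∩ φ x) + ball (0 : E) ε := by
      have h1 : t x ⊆ convexHull ℝ ((ball (g x) (r + ε) ∩ φ x) + ball (0 : E) ε) :=
        convexHull_mono hsub
      have h2 : convexHull ℝ ((ball (g x) (r + ε) ∩ φ x) + ball (0 : E) ε) =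
          convexHull ℝ (ball (g x) (r + ε) ∩ φ x) + convexHull ℝ (ball (0 : E) ε) :=
        convexHull_add _ _
      have h3 : convexHull ℝ (ball (0 : E) ε) = ball (0 : E) ε :=
        (convex_ball (0 : E) ε).convexHull_eq
      have := h1 (hmem x)
      rwa [h2, h3] at this
    obtain ⟨q, hq, e, he, hqe⟩ := hhx
    have hqd : Metric.infDist q (φ x) ≤ α * (r + ε) :=
      (hφval x).2.2 (r + ε) (by linarith) (g x) (lt_of_lt_of_le (hgd x) (by linarith)) q hq
    have hdist : dist (h x) q < ε := by
      rw [dist_eq_norm, ← hqe]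
      simpa using mem_ball_zero_iff.1 he
    have hkey : Metric.infDist (h x) (φ x) < α * (r + ε) + ε :=
      lt_of_le_of_lt Metric.infDist_le_infDist_add_dist (by linarith)
    refine lt_of_lt_of_le hkey ?_
    have hτε : (α + 1) * ε = (1 - α) / 4 * r := by
      rw [hεdef, hτdef]; field_simp
    nlinarith [mul_pos hτ hr, hr.le, hα1']

/-- approximate version of Michael's paraconvex-valued selection
theorem for paracompact spaces. -/
theorem paraconvex_selection_paracompact_approx
    (X : Type*) [TopologicalSpace X] [ParacompactSpace X] [T2Space X]
    (E : Type*) [NormedAddCommGroup E] [NormedSpace ℝ E] [CompleteSpace E]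
    (α : ℝ) (hα0 : 0 ≤ α) (hα1 : α < 1)
    (φ : X → Set E)
    (hφval : ∀ x, (φ x).Nonempty ∧ IsClosed (φ x) ∧ Paraconvex α (φ x))
    (hφ : LowerSemicontinuousSV φ) :
    ∃ δ : ℝ, 0 < δ ∧ ∀ r : ℝ, 0 < r → ∀ g : X → E, Continuous g →
      (∀ x, Metric.infDist (g x) (φ x) < r) →
      ∃ f : X → E, Continuous f ∧ (∀ x, f x ∈ φ x) ∧ ∀ x, dist (g x) (f x) < δ * r := by
  set β : ℝ := (1 + α) / 2 with hβdef
  have hβ0 : 0 ≤ β := by positivity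
  have hβ1 : β < 1 := by rw [hβdef]; linarith
  have h1β : 0 < 1 - β := by linarith
  refine ⟨1 / (1 - β) + 1, by positivity, ?_⟩
  intro r hr g hg hgd
  set P : ℕ → (X → E) → Prop :=
    fun n h => Continuous h ∧ ∀ x, Metric.infDist (h x) (φ x) < β ^ n * r with hP
  have hstep : ∀ n (h : X → E), P n h →
      ∃ h', P (n + 1) h' ∧ ∀ x, dist (h x) (h' x) < β ^ n * r := by
    intro n h hh
    obtain ⟨h', hc', hd', hi'⟩ :=
      paraconvex_step hα0 hα1 hφval hφ (by positivity : (0:ℝ) < β ^ n * r) hh.1 hh.2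
    refine ⟨h', ⟨hc', fun x => ?_⟩, hd'⟩
    have := hi' x
    calc Metric.infDist (h' x) (φ x) < (1 + α) / 2 * (β ^ n * r) := this
      _ = β ^ (n + 1) * r := by rw [hβdef]; ring
  have hP0 : P 0 g := ⟨hg, fun x => by simpa using hgd x⟩
  -- construct the sequence by recursion with choice
  let next : ∀ n, {h : X → E // P n h} → {h : X → E // P (n + 1) h} :=
    fun n p => ⟨(hstep n p.1 p.2).choose, (hstep n p.1 p.2).choose_spec.1⟩
  let s : ∀ n, {h : X → E // P n h} := fun n => Nat.rec ⟨g, hP0⟩ next n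
  have hs0 : (s 0).1 = g := rfl
  have hQ : ∀ n x, dist ((s n).1 x) ((s (n + 1)).1 x) < β ^ n * r := by
    intro n x
    exact (hstep n (s n).1 (s n).2).choose_spec.2 x
  set f : ℕ → X → E := fun n => (s n).1 with hf
  have hd : ∀ x n, dist (f n x) (f (n + 1) x) ≤ r * β ^ n := fun x n =>
    le_of_lt (by rw [mul_comm]; exact hQ n x)
  have hcauchy : ∀ x, CauchySeq (fun n => f n x) := fun x =>
    cauchySeq_of_le_geometric β r hβ1 (hd x)
  have hlim : ∀ x, ∃ l, Tendsto (fun n => f n x) atTop (𝓝 l) := fun x =>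
    cauchySeq_tendsto_of_complete (hcauchy x)
  choose F hF using hlim
  have hFd : ∀ x n, dist (f n x) (F x) ≤ r * β ^ n / (1 - β) := fun x n =>
    dist_le_of_le_geometric_of_tendsto β r hβ1 (hd x) (hF x) n
  -- the bound sequence tends to 0
  have hbound0 : Tendsto (fun n : ℕ => r * β ^ n / (1 - β)) atTop (𝓝 0) := by
    have h1 : Tendsto (fun n : ℕ => β ^ n) atTop (𝓝 0) :=
      tendsto_pow_atTop_nhds_zero_of_lt_one hβ0 hβ1
    have := (h1.const_mul r).div_const (1 - β)
    simpa using this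
  have hunif : TendstoUniformly f F atTop := by
    rw [Metric.tendstoUniformly_iff]
    intro η hη
    filter_upwards [hbound0.eventually (gt_mem_nhds hη)] with n hn x
    calc dist (F x) (f n x) = dist (f n x) (F x) := dist_comm _ _
      _ ≤ r * β ^ n / (1 - β) := hFd x n
      _ < η := hn
  have hFcont : Continuous F :=
    hunif.continuous (Frequently.of_forall fun n => (s n).2.1)
  refine ⟨F, hFcont, ?_, ?_⟩
  · intro x
    have hle : ∀ n, Metric.infDist (F x) (φ x) ≤ β ^ n * r + r * β ^ n / (1 - β) := by
      intro n
      calc Metric.infDist (F x) (φ x)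
          ≤ Metric.infDist (f n x) (φ x) + dist (F x) (f n x) :=
            Metric.infDist_le_infDist_add_dist
        _ ≤ β ^ n * r + r * β ^ n / (1 - β) := by
            have h1 := le_of_lt ((s n).2.2 x)
            have h2 := hFd x n
            rw [dist_comm] at h2
            exact add_le_add h1 h2
    have htend : Tendsto (fun n : ℕ => β ^ n * r + r * β ^ n / (1 - β)) atTop (𝓝 0) := by
      have h1 : Tendsto (fun n : ℕ => β ^ n) atTop (𝓝 0) :=
        tendsto_pow_atTop_nhds_zero_of_lt_one hβ0 hβ1
      have := (h1.mul_const r).add hbound0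
      simpa using this
    have hle0 : Metric.infDist (F x) (φ x) ≤ 0 :=
      ge_of_tendsto' htend hle
    have h0 : Metric.infDist (F x) (φ x) = 0 :=
      le_antisymm hle0 Metric.infDist_nonneg
    exact ((hφval x).2.1.mem_iff_infDist_zero (hφval x).1).2 h0
  · intro x
    have h0 : dist (g x) (F x) ≤ r * β ^ 0 / (1 - β) := by
      have := hFd x 0
      rwa [show f 0 x = g x from rfl] at this
    calc dist (g x) (F x) ≤ r * β ^ 0 / (1 - β) := h0
      _ = 1 / (1 - β) * r := by rw [pow_zero]; ring
      _ < (1 / (1 - β) + 1) * r := by nlinarith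
end

section
/- Let τ be an infinite cardinal, let X be a τ-paracompact normal T1 space, let E be a Banach space with topological weight w(E) ≤ τ, let 0 ≤ α < 1, and let φ : X → F_α(E) be a lower semicontinuous set-valued mapping whose values are nonempty closed α-paraconvex subsets of E. Then φ has a continuous selection. -/
open Set Metric Filter Topology Cardinal

universe u v

/-- A `T₁` space is `τ`-paracompact if every open cover of cardinality at most
`τ` has a locally finite open refinement (which is again a cover). -/
def TauParacompact (X : Type u) [TopologicalSpace X] (τ : Cardinal.{u}) : Prop :=
  ∀ 𝒰 : Set (Set X), Cardinal.mk 𝒰 ≤ τ → (∀ U ∈ 𝒰, IsOpen U) → ⋃₀ 𝒰 = Set.univ →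
    ∃ 𝒱 : Set (Set X), (∀ V ∈ 𝒱, IsOpen V) ∧ ⋃₀ 𝒱 = Set.univ ∧
      LocallyFinite (fun V : 𝒱 => (V : Set X)) ∧ ∀ V ∈ 𝒱, ∃ U ∈ 𝒰, V ⊆ U

section Aux

variable {X E : Type u} [TopologicalSpace X] [T1Space X] [NormalSpace X]
  [NormedAddCommGroup E] [NormedSpace ℝ E]

/-- From the weight bound, extract a dense subset of cardinality at most `τ`. -/
lemma aux_dense (τ : Cardinal.{u}) (hw : topWeight E ≤ τ) :
    ∃ D : Set E, Cardinal.mk D ≤ τ ∧ Dense D := by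
  classical
  -- the infimum defining the weight is attained
  have hne : Nonempty {B : Set (Set E) // TopologicalSpace.IsTopologicalBasis B} :=
    ⟨⟨{U | IsOpen U}, TopologicalSpace.isTopologicalBasis_opens⟩⟩
  have hmem : topWeight E ∈ Set.range
      (fun B : {B : Set (Set E) // TopologicalSpace.IsTopologicalBasis B} => Cardinal.mk B.1) := by
    have := csInf_mem (Set.range_nonempty
      (fun B : {B : Set (Set E) // TopologicalSpace.IsTopologicalBasis B} => Cardinal.mk B.1))
    simpa [topWeight, iInf] using this
  obtain ⟨⟨B, hB⟩, hBcard⟩ := hmem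
  -- pick a point from each nonempty basic set
  let g : B → E := fun b => if h : (b : Set E).Nonempty then h.choose else 0
  refine ⟨Set.range g, ?_, ?_⟩
  · calc Cardinal.mk (Set.range g) ≤ Cardinal.mk B := Cardinal.mk_range_le
      _ = topWeight E := hBcard
      _ ≤ τ := hw
  · rw [dense_iff_inter_open]
    intro U hU hUne
    obtain ⟨x, hx⟩ := hUne
    obtain ⟨b, hbB, hxb, hbU⟩ := hB.exists_subset_of_mem_open hx hU
    have hbne : (b : Set E).Nonempty := ⟨x, hxb⟩
    refine ⟨g ⟨b, hbB⟩, hbU ?_, ⟨⟨b, hbB⟩, rfl⟩⟩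
    simp only [g, dif_pos hbne]
    exact hbne.choose_spec

/-- From an open cover indexed by points of a small set `D`, produce a partition of unity
subordinate to it. -/
lemma aux_pou (τ : Cardinal.{u}) (hX : TauParacompact X τ)
    (D : Set E) (hD : Cardinal.mk D ≤ τ)
    (U : E → Set X) (hUo : ∀ y ∈ D, IsOpen (U y))
    (hcov : ∀ x : X, ∃ y ∈ D, x ∈ U y) :
    ∃ (ι : Type u) (y : ι → E) (p : PartitionOfUnity ι X Set.univ),
      (∀ i, y i ∈ D) ∧ p.IsSubordinate (fun i => U (y i)) := by
  classical
  obtain ⟨𝒱, h𝒱o, h𝒱cov, h𝒱lf, h𝒱ref⟩ := hX (U '' D)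
    (le_trans Cardinal.mk_image_le hD)
    (by rintro _ ⟨y, hy, rfl⟩; exact hUo y hy)
    (by
      apply Set.eq_univ_of_forall
      intro x
      obtain ⟨y, hy, hxy⟩ := hcov x
      exact ⟨U y, ⟨y, hy, rfl⟩, hxy⟩)
  have hcov' : (Set.univ : Set X) ⊆ ⋃ i : 𝒱, (i : Set X) := by
    rw [← Set.sUnion_eq_iUnion, h𝒱cov]
  obtain ⟨b, hb⟩ := BumpCovering.exists_isSubordinate_of_locallyFinite isClosed_univ
    (fun i : 𝒱 => (i : Set X)) (fun i => h𝒱o i i.2) h𝒱lf hcov'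
  -- choose, for each refinement piece, a point of D whose cover-set contains it
  have hch : ∀ i : 𝒱, ∃ y ∈ D, (i : Set X) ⊆ U y := by
    intro i
    obtain ⟨u, ⟨y, hy, rfl⟩, hiu⟩ := h𝒱ref i i.2
    exact ⟨y, hy, hiu⟩
  choose y hyD hysub using hch
  refine ⟨𝒱, y, b.toPartitionOfUnity, hyD, ?_⟩
  intro i
  exact (hb.toPartitionOfUnity i).trans (hysub i)

/-- Elementary estimate: a convex combination is close to another one with termwise-close points. -/
lemma aux_comb_dist {ι : Type u} (T : Finset ι) (w : ι → ℝ) (hw : ∀ i ∈ T, 0 ≤ w i)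
    (hw1 : ∑ i ∈ T, w i = 1) (v z : ι → E) (b : ℝ)
    (h : ∀ i ∈ T, dist (v i) (z i) ≤ b) :
    dist (∑ i ∈ T, w i • v i) (∑ i ∈ T, w i • z i) ≤ b := by
  rw [dist_eq_norm, ← Finset.sum_sub_distrib]
  have : ∀ i ∈ T, w i • v i - w i • z i = w i • (v i - z i) := by
    intro i _; rw [smul_sub]
  rw [Finset.sum_congr rfl this]
  calc ‖∑ i ∈ T, w i • (v i - z i)‖ ≤ ∑ i ∈ T, ‖w i • (v i - z i)‖ := norm_sum_le _ _
    _ ≤ ∑ i ∈ T, w i * b := by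
        apply Finset.sum_le_sum
        intro i hi
        rw [norm_smul, Real.norm_of_nonneg (hw i hi)]
        have hd : ‖v i - z i‖ ≤ b := by rw [← dist_eq_norm]; exact h i hi
        exact mul_le_mul_of_nonneg_left hd (hw i hi)
    _ = b := by rw [← Finset.sum_mul, hw1, one_mul]

/-- A convex combination of points each at distance `≤ b` from `c` is at distance `≤ b` from `c`. -/
lemma aux_comb_dist_const {ι : Type u} (T : Finset ι) (w : ι → ℝ) (hw : ∀ i ∈ T, 0 ≤ w i)
    (hw1 : ∑ i ∈ T, w i = 1) (v : ι → E) (c : E) (b : ℝ)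
    (h : ∀ i ∈ T, dist (v i) c ≤ b) :
    dist (∑ i ∈ T, w i • v i) c ≤ b := by
  have hc : (∑ i ∈ T, w i • c) = c := by
    rw [← Finset.sum_smul, hw1, one_smul]
  calc dist (∑ i ∈ T, w i • v i) c = dist (∑ i ∈ T, w i • v i) (∑ i ∈ T, w i • c) := by rw [hc]
    _ ≤ b := aux_comb_dist T w hw hw1 v (fun _ => c) b h

/-- Base step: a continuous map with continuous (variable) bound on its distance to `φ`. -/
lemma aux_base (τ : Cardinal.{u}) (hX : TauParacompact X τ)
    (φ : X → Set E) (hφne : ∀ x, (φ x).Nonempty) (hφ : LowerSemicontinuousSV φ)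
    (D : Set E) (hDc : Cardinal.mk D ≤ τ) (hDd : Dense D) :
    ∃ (g : X → E) (ρ : X → ℝ), Continuous g ∧ Continuous ρ ∧ (∀ x, 0 < ρ x) ∧
      ∀ x, Metric.infDist (g x) (φ x) < ρ x := by
  classical
  set U : E → Set X := fun y => {x : X | (φ x ∩ Metric.ball y 1).Nonempty} with hU
  have hUo : ∀ y ∈ D, IsOpen (U y) := fun y _ => hφ _ Metric.isOpen_ball
  have hcov : ∀ x : X, ∃ y ∈ D, x ∈ U y := by
    intro x
    obtain ⟨z, hz⟩ := hφne x
    obtain ⟨y, hy, hdy⟩ := hDd.exists_dist_lt z one_pos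
    exact ⟨y, hy, ⟨z, hz, by simpa [Metric.mem_ball, dist_comm] using hdy⟩⟩
  obtain ⟨ι, y, p, hyD, hsub⟩ := aux_pou τ hX D hDc U hUo hcov
  set g : X → E := fun x => ∑ᶠ i, p i x • y i with hg
  have hgc : Continuous g :=
    p.continuous_finsum_smul (g := fun i _ => y i) (fun _ _ _ => continuousAt_const)
  set ρ : X → ℝ := fun x => 2 + ∑ᶠ i, p i x • dist (y i) (g x) with hρ
  have hρc : Continuous ρ := by
    apply continuous_const.add
    exact p.continuous_finsum_smul (g := fun i x => dist (y i) (g x))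
      (fun i x _ => (continuous_const.dist hgc).continuousAt)
  have hSnn : ∀ x, 0 ≤ ∑ᶠ i, p i x • dist (y i) (g x) := by
    intro x
    apply finsum_nonneg
    intro i
    exact smul_nonneg (p.nonneg i x) dist_nonneg
  refine ⟨g, ρ, hgc, hρc, fun x => by have := hSnn x; simp only [hρ]; linarith, ?_⟩
  intro x
  set T := p.finsupport x with hT
  have hT1 : ∑ i ∈ T, p i x = 1 := p.sum_finsupport (Set.mem_univ x)
  have hTne : T.Nonempty := by
    obtain ⟨i, hi⟩ := p.exists_pos (Set.mem_univ x)
    exact ⟨i, by simp [hT, p.mem_finsupport, hi.ne']⟩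
  have hmemU : ∀ i ∈ T, x ∈ U (y i) := by
    intro i hi
    apply hsub i
    apply subset_closure
    simpa [hT, p.mem_finsupport] using hi
  -- the finsum is the T-sum
  have hgsum : g x = ∑ i ∈ T, p i x • y i := (p.sum_finsupport_smul_eq_finsum (fun i _ => y i)).symm
  have hρsum : ρ x = 2 + ∑ i ∈ T, p i x • dist (y i) (g x) := by
    rw [hT]
    simp only [hρ]
    rw [← p.sum_finsupport_smul_eq_finsum (x₀ := x) (fun i x' => dist (y i) (g x'))]
  have hSnn' : 0 ≤ ∑ i ∈ T, p i x • dist (y i) (g x) :=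
    Finset.sum_nonneg fun i _ => smul_nonneg (p.nonneg i x) dist_nonneg
  -- pick the closest y i to g x among contributing indices
  obtain ⟨i₀, hi₀, hmin⟩ := T.exists_min_image (fun i => dist (g x) (y i)) hTne
  obtain ⟨z, hzφ, hzb⟩ := hmemU i₀ hi₀
  have hz1 : dist z (y i₀) < 1 := by simpa [Metric.mem_ball] using hzb
  have h1 : Metric.infDist (g x) (φ x) ≤ dist (g x) z := Metric.infDist_le_dist_of_mem hzφ
  have h2 : dist (g x) z ≤ dist (g x) (y i₀) + dist z (y i₀) := by
    rw [dist_comm z (y i₀)]; exact dist_triangle _ _ _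
  have h3 : dist (g x) (y i₀) ≤ ∑ i ∈ T, p i x • dist (y i) (g x) := by
    calc dist (g x) (y i₀) = (∑ i ∈ T, p i x) * dist (g x) (y i₀) := by rw [hT1, one_mul]
      _ = ∑ i ∈ T, p i x * dist (g x) (y i₀) := Finset.sum_mul ..
      _ ≤ ∑ i ∈ T, p i x • dist (y i) (g x) := by
          apply Finset.sum_le_sum
          intro i hi
          rw [smul_eq_mul, dist_comm (y i) (g x)]
          exact mul_le_mul_of_nonneg_left (hmin i hi) (p.nonneg i x)
  calc Metric.infDist (g x) (φ x) ≤ dist (g x) (y i₀) + dist z (y i₀) := h1.trans h2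
    _ < dist (g x) (y i₀) + 1 := by linarith
    _ ≤ (∑ i ∈ T, p i x • dist (y i) (g x)) + 1 := by linarith
    _ < ρ x := by rw [hρsum]; linarith

/-- Improvement step: given a continuous `g` within (variable) `ρ` of `φ`, produce a better
approximation, moving by at most `ρ`. -/
lemma aux_step (τ : Cardinal.{u}) (hX : TauParacompact X τ)
    (α : ℝ) (hα0 : 0 ≤ α) (hα1 : α < 1)
    (φ : X → Set E) (hφval : ∀ x, (φ x).Nonempty ∧ IsClosed (φ x) ∧ Paraconvex α (φ x))
    (hφ : LowerSemicontinuousSV φ)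
    (D : Set E) (hDc : Cardinal.mk D ≤ τ) (hDd : Dense D)
    (g : X → E) (hg : Continuous g) (ρ : X → ℝ) (hρ : Continuous ρ)
    (hρpos : ∀ x, 0 < ρ x) (hclose : ∀ x, Metric.infDist (g x) (φ x) < ρ x) :
    ∃ f : X → E, Continuous f ∧ (∀ x, dist (f x) (g x) ≤ ρ x) ∧
      ∀ x, Metric.infDist (f x) (φ x) < ((1 + α) / 2) * ρ x := by
  classical
  set c : ℝ := (1 - α) / (4 * (1 + α)) with hc
  have hcpos : 0 < c := by
    apply div_pos (by linarith) (by linarith)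
  have hckey : c * (1 + α) = (1 - α) / 4 := by
    field_simp [hc]
    have h1 : (4 * (1 + α)) ≠ 0 := (by linarith : (0:ℝ) < 4 * (1 + α)).ne'
    have h2 : c * (4 * (1 + α)) = 1 - α := by rw [hc]; exact div_mul_cancel₀ _ h1
    linear_combination h2
  set U : E → Set X := fun y =>
    {x : X | dist (g x) y < ρ x} ∩ {x : X | (φ x ∩ Metric.ball y (c * ρ x)).Nonempty} with hU
  have hUo : ∀ y ∈ D, IsOpen (U y) := by
    intro y _
    apply IsOpen.inter
    · have : Continuous fun x => ρ x - dist (g x) y := hρ.sub (hg.dist continuous_const)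
      have heq : {x : X | dist (g x) y < ρ x} = (fun x => ρ x - dist (g x) y) ⁻¹' (Set.Ioi 0) := by
        ext x; simp [sub_pos]
      rw [heq]
      exact this.isOpen_preimage _ isOpen_Ioi
    · have heq : {x : X | (φ x ∩ Metric.ball y (c * ρ x)).Nonempty} =
          ⋃ q : ℚ, ({x : X | (q : ℝ) < c * ρ x} ∩
            {x : X | (φ x ∩ Metric.ball y (q : ℝ)).Nonempty}) := by
        ext x
        simp only [Set.mem_iUnion, Set.mem_inter_iff, Set.mem_setOf_eq]
        constructor
        · rintro ⟨z, hzφ, hzb⟩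
          rw [Metric.mem_ball] at hzb
          obtain ⟨q, hq1, hq2⟩ := exists_rat_btwn hzb
          exact ⟨q, hq2, z, hzφ, by rwa [Metric.mem_ball]⟩
        · rintro ⟨q, hq, z, hzφ, hzb⟩
          rw [Metric.mem_ball] at hzb
          exact ⟨z, hzφ, by rw [Metric.mem_ball]; linarith⟩
      rw [heq]
      apply isOpen_iUnion
      intro q
      apply IsOpen.inter
      · have : Continuous fun x => c * ρ x := continuous_const.mul hρ
        have heq2 : {x : X | (q : ℝ) < c * ρ x} = (fun x => c * ρ x) ⁻¹' (Set.Ioi (q : ℝ)) := rfl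
        rw [heq2]
        exact this.isOpen_preimage _ isOpen_Ioi
      · exact hφ _ Metric.isOpen_ball
  have hcov : ∀ x : X, ∃ y ∈ D, x ∈ U y := by
    intro x
    obtain ⟨z, hzφ, hzd⟩ := (Metric.infDist_lt_iff (hφval x).1).1 (hclose x)
    have hεpos : 0 < min (c * ρ x) (ρ x - dist (g x) z) := by
      apply lt_min (mul_pos hcpos (hρpos x)) (by linarith)
    obtain ⟨y, hyD, hyd⟩ := hDd.exists_dist_lt z hεpos
    refine ⟨y, hyD, ?_, ⟨z, hzφ, ?_⟩⟩
    · have h1 : dist z y < ρ x - dist (g x) z := lt_of_lt_of_le hyd (min_le_right _ _)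
      calc dist (g x) y ≤ dist (g x) z + dist z y := dist_triangle _ _ _
        _ < ρ x := by linarith
    · rw [Metric.mem_ball]
      exact lt_of_lt_of_le hyd (min_le_left _ _)
  obtain ⟨ι, y, p, hyD, hsub⟩ := aux_pou τ hX D hDc U hUo hcov
  set f : X → E := fun x => ∑ᶠ i, p i x • y i with hf
  have hfc : Continuous f :=
    p.continuous_finsum_smul (g := fun i _ => y i) (fun _ _ _ => continuousAt_const)
  refine ⟨f, hfc, ?_, ?_⟩ <;> intro x
  all_goals
    have hT1 : ∑ i ∈ p.finsupport x, p i x = 1 := p.sum_finsupport (Set.mem_univ x)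
    have hTnn : ∀ i ∈ p.finsupport x, 0 ≤ p i x := fun i _ => p.nonneg i x
    have hmemU : ∀ i ∈ p.finsupport x, x ∈ U (y i) := by
      intro i hi
      apply hsub i
      apply subset_closure
      simpa [p.mem_finsupport] using hi
    have hfsum : f x = ∑ i ∈ p.finsupport x, p i x • y i :=
      (p.sum_finsupport_smul_eq_finsum (fun i _ => y i)).symm
  · -- distance to g
    rw [hfsum]
    apply aux_comb_dist_const _ _ hTnn hT1
    intro i hi
    have := (hmemU i hi).1
    rw [dist_comm]
    exact le_of_lt this
  · -- distance to φ x
    -- choose points z i ∈ φ x near y i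
    have hch : ∀ i ∈ p.finsupport x, ∃ z, z ∈ φ x ∧ dist z (y i) < c * ρ x := by
      intro i hi
      obtain ⟨z, hz1, hz2⟩ := (hmemU i hi).2
      exact ⟨z, hz1, by rwa [Metric.mem_ball] at hz2⟩
    set z : ι → E := fun i =>
      if h : ∃ z, z ∈ φ x ∧ dist z (y i) < c * ρ x then h.choose else (hφval x).1.choose with hz
    have hzφ : ∀ i ∈ p.finsupport x, z i ∈ φ x ∧ dist (z i) (y i) < c * ρ x := by
      intro i hi
      have h := hch i hi
      simp only [hz, dif_pos h]
      exact h.choose_spec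
    set q : E := ∑ i ∈ p.finsupport x, p i x • z i with hq
    -- q lies in the convex hull of ball(g x, (1+c)ρ x) ∩ φ x
    have hqhull : q ∈ convexHull ℝ (Metric.ball (g x) ((1 + c) * ρ x) ∩ φ x) := by
      rw [hq, ← Finset.centerMass_eq_of_sum_1 _ z hT1]
      apply Finset.centerMass_mem_convexHull _ hTnn (by rw [hT1]; norm_num)
      intro i hi
      obtain ⟨hz1, hz2⟩ := hzφ i hi
      have hgy : dist (g x) (y i) < ρ x := (hmemU i hi).1
      refine ⟨?_, hz1⟩
      rw [Metric.mem_ball]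
      calc dist (z i) (g x) ≤ dist (z i) (y i) + dist (y i) (g x) := dist_triangle _ _ _
        _ < c * ρ x + ρ x := by rw [dist_comm (y i) (g x)]; linarith
        _ = (1 + c) * ρ x := by ring
    -- paraconvexity estimate
    have hr1 : (0 : ℝ) < (1 + c) * ρ x := mul_pos (by linarith) (hρpos x)
    have hr2 : Metric.infDist (g x) (φ x) < (1 + c) * ρ x := by
      have := hclose x
      nlinarith [hρpos x]
    have hpara := (hφval x).2.2 ((1 + c) * ρ x) hr1 (g x) hr2 q hqhull
    -- f x is close to q
    have hfq : dist (f x) q ≤ c * ρ x := by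
      rw [hfsum, hq]
      apply aux_comb_dist _ _ hTnn hT1
      intro i hi
      rw [dist_comm (y i) (z i)]
      exact le_of_lt (hzφ i hi).2
    calc Metric.infDist (f x) (φ x)
        ≤ Metric.infDist q (φ x) + dist (f x) q := Metric.infDist_le_infDist_add_dist
      _ ≤ α * ((1 + c) * ρ x) + c * ρ x := by linarith
      _ = (α + c * (1 + α)) * ρ x := by ring
      _ = (α + (1 - α) / 4) * ρ x := by rw [hckey]
      _ < ((1 + α) / 2) * ρ x := by nlinarith [hρpos x]

end Aux

/-- paraconvex-valued selections on τ-paracompact normal spaces. -/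
theorem paraconvex_selection_tauParacompact
    (τ : Cardinal.{u}) (hτ : Cardinal.aleph0 ≤ τ)
    (X : Type u) [TopologicalSpace X] [T1Space X] [NormalSpace X]
    (hX : TauParacompact X τ)
    (E : Type u) [NormedAddCommGroup E] [NormedSpace ℝ E] [CompleteSpace E]
    (hw : topWeight E ≤ τ)
    (α : ℝ) (hα0 : 0 ≤ α) (hα1 : α < 1)
    (φ : X → Set E)
    (hφval : ∀ x, (φ x).Nonempty ∧ IsClosed (φ x) ∧ Paraconvex α (φ x))
    (hφ : LowerSemicontinuousSV φ) :
    ∃ f : X → E, Continuous f ∧ ∀ x, f x ∈ φ x := by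
  classical
  set β : ℝ := (1 + α) / 2 with hβ
  have hβ0 : 0 < β := by rw [hβ]; linarith
  have hβ1 : β < 1 := by rw [hβ]; linarith
  obtain ⟨D, hDc, hDd⟩ := aux_dense (E := E) τ hw
  obtain ⟨g0, ρ0, hg0c, hρ0c, hρ0pos, h0⟩ :=
    aux_base τ hX φ (fun x => (hφval x).1) hφ D hDc hDd
  -- the good property at stage n
  set Good : ℕ → (X → E) → Prop := fun n f =>
    Continuous f ∧ ∀ x, Metric.infDist (f x) (φ x) < β ^ n * ρ0 x with hGood
  have hstep : ∀ n : ℕ, ∀ f : X → E, Good n f →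
      ∃ f' : X → E, Good (n + 1) f' ∧ ∀ x, dist (f' x) (f x) ≤ β ^ n * ρ0 x := by
    intro n f ⟨hfc, hfd⟩
    obtain ⟨f', h1, h2, h3⟩ := aux_step τ hX α hα0 hα1 φ hφval hφ D hDc hDd
      f hfc (fun x => β ^ n * ρ0 x) (continuous_const.mul hρ0c)
      (fun x => mul_pos (pow_pos hβ0 n) (hρ0pos x)) hfd
    refine ⟨f', ⟨h1, fun x => ?_⟩, h2⟩
    have := h3 x
    calc Metric.infDist (f' x) (φ x) < ((1 + α) / 2) * (β ^ n * ρ0 x) := this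
      _ = β ^ (n + 1) * ρ0 x := by rw [hβ, pow_succ]; ring
  -- recursive sequence
  let F : ∀ n : ℕ, {f : X → E // Good n f} := fun n =>
    Nat.rec ⟨g0, hg0c, fun x => by simpa using h0 x⟩
      (fun n p => ⟨(hstep n p.1 p.2).choose, (hstep n p.1 p.2).choose_spec.1⟩) n
  have hFdist : ∀ n x, dist ((F (n + 1)).1 x) ((F n).1 x) ≤ β ^ n * ρ0 x := by
    intro n x
    exact (hstep n (F n).1 (F n).2).choose_spec.2 x
  -- pointwise Cauchy, hence converging
  have hcauchy : ∀ x : X, CauchySeq (fun n => (F n).1 x) := by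
    intro x
    apply cauchySeq_of_le_geometric β (ρ0 x) hβ1
    intro n
    rw [dist_comm]
    calc dist ((F (n + 1)).1 x) ((F n).1 x) ≤ β ^ n * ρ0 x := hFdist n x
      _ = ρ0 x * β ^ n := mul_comm _ _
  have hlim : ∀ x : X, ∃ l : E, Tendsto (fun n => (F n).1 x) atTop (𝓝 l) := fun x =>
    cauchySeq_tendsto_of_complete (hcauchy x)
  set f : X → E := fun x => (hlim x).choose with hfdef
  have hft : ∀ x, Tendsto (fun n => (F n).1 x) atTop (𝓝 (f x)) := fun x => (hlim x).choose_spec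
  -- geometric tail bound
  have htail : ∀ x n, dist ((F n).1 x) (f x) ≤ ρ0 x * β ^ n / (1 - β) := by
    intro x n
    apply dist_le_of_le_geometric_of_tendsto β (ρ0 x) hβ1 ?_ (hft x) n
    intro m
    rw [dist_comm]
    calc dist ((F (m + 1)).1 x) ((F m).1 x) ≤ β ^ m * ρ0 x := hFdist m x
      _ = ρ0 x * β ^ m := mul_comm _ _
  -- continuity of the limit, via locally uniform convergence
  have hfc : Continuous f := by
    rw [continuous_iff_continuousAt]
    intro x₀
    set W : Set X := ρ0 ⁻¹' (Set.Iio (ρ0 x₀ + 1)) with hW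
    have hWo : IsOpen W := hρ0c.isOpen_preimage _ isOpen_Iio
    have hWx : x₀ ∈ W := by simp [hW]
    have hWn : W ∈ 𝓝 x₀ := hWo.mem_nhds hWx
    have hM : ∀ x ∈ W, ρ0 x ≤ ρ0 x₀ + 1 := fun x hx => le_of_lt hx
    have hMpos : 0 < ρ0 x₀ + 1 := by linarith [hρ0pos x₀]
    have hunif : TendstoUniformlyOn (fun n x => (F n).1 x) f atTop W := by
      rw [Metric.tendstoUniformlyOn_iff]
      intro ε hε
      have hgeo : Tendsto (fun n : ℕ => (ρ0 x₀ + 1) * β ^ n / (1 - β)) atTop (𝓝 0) := by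
        have h1 : Tendsto (fun n : ℕ => β ^ n) atTop (𝓝 0) :=
          tendsto_pow_atTop_nhds_zero_of_lt_one (le_of_lt hβ0) hβ1
        have := (h1.const_mul (ρ0 x₀ + 1)).div_const (1 - β)
        simpa using this
      filter_upwards [hgeo.eventually (gt_mem_nhds hε)] with n hn x hx
      calc dist (f x) ((F n).1 x) = dist ((F n).1 x) (f x) := dist_comm _ _
        _ ≤ ρ0 x * β ^ n / (1 - β) := htail x n
        _ ≤ (ρ0 x₀ + 1) * β ^ n / (1 - β) := by
            have h1β : (0 : ℝ) < 1 - β := by linarith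
            have hnum : ρ0 x * β ^ n ≤ (ρ0 x₀ + 1) * β ^ n :=
              mul_le_mul_of_nonneg_right (hM x hx) (pow_nonneg hβ0.le n)
            exact (div_le_div_iff_of_pos_right h1β).mpr hnum
        _ < ε := hn
    have hcont : ContinuousOn f W :=
      hunif.continuousOn (Eventually.of_forall (fun n => ((F n).2.1).continuousOn)).frequently
    exact hcont.continuousAt hWn
  refine ⟨f, hfc, ?_⟩
  intro x
  have hzero : Metric.infDist (f x) (φ x) = 0 := by
    have hle : ∀ n : ℕ, Metric.infDist (f x) (φ x) ≤
        β ^ n * ρ0 x + ρ0 x * β ^ n / (1 - β) := by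
      intro n
      calc Metric.infDist (f x) (φ x)
          ≤ Metric.infDist ((F n).1 x) (φ x) + dist (f x) ((F n).1 x) :=
            Metric.infDist_le_infDist_add_dist
        _ ≤ β ^ n * ρ0 x + ρ0 x * β ^ n / (1 - β) := by
            have h1 := (F n).2.2 x
            have h2 := htail x n
            rw [dist_comm] at h2
            linarith
    have hgeo : Tendsto (fun n : ℕ => β ^ n * ρ0 x + ρ0 x * β ^ n / (1 - β)) atTop (𝓝 0) := by
      have h1 : Tendsto (fun n : ℕ => β ^ n) atTop (𝓝 0) :=
        tendsto_pow_atTop_nhds_zero_of_lt_one (le_of_lt hβ0) hβ1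
      have h2 := h1.mul_const (ρ0 x)
      have h3 := (h1.const_mul (ρ0 x)).div_const (1 - β)
      have := h2.add h3
      simpa using this
    have h4 : Metric.infDist (f x) (φ x) ≤ 0 := ge_of_tendsto' hgeo hle
    exact le_antisymm h4 Metric.infDist_nonneg
  exact ((hφval x).2.1.mem_iff_infDist_zero (hφval x).1).2 hzero
end

section
/- Let τ be an infinite cardinal, let X be a τ-paracompact normal T1 space, let E be a Banach space with topological weight w(E) ≤ τ, let 0 ≤ α < 1, and let φ : X → F_α(E) be a lower semicontinuous set-valued mapping whose values are nonempty closed α-paraconvex subsets of E. Then there exists δ > 0, depending only on α, such that for every r > 0 and every continuous map g : X → E with d(g(x), φ(x)) < r for all x ∈ X, there exists a continuous selection f for φ with d(g(x), f(x)) < δ·r for all x ∈ X. -/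
open Set Metric Filter Topology Cardinal

universe u v

open Pointwise

lemma exists_dense_card_le (E : Type v) [TopologicalSpace E] [Nonempty E]
    {τ : Cardinal.{v}} (hw : topWeight E ≤ τ) :
    ∃ D : Set E, Dense D ∧ Cardinal.mk D ≤ τ := by
  rw [topWeight] at hw
  haveI : Nonempty {B : Set (Set E) // TopologicalSpace.IsTopologicalBasis B} :=
    ⟨⟨_, TopologicalSpace.isTopologicalBasis_opens⟩⟩
  obtain ⟨B, hB⟩ : ∃ B : {B : Set (Set E) // TopologicalSpace.IsTopologicalBasis B},
      Cardinal.mk B.1 ≤ τ := by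
    by_contra h
    push_neg at h
    have h2 : Order.succ τ ≤ ⨅ B : {B : Set (Set E) // TopologicalSpace.IsTopologicalBasis B},
        Cardinal.mk B.1 := le_ciInf fun B => Order.succ_le_of_lt (h B)
    exact absurd (h2.trans hw) (not_le.2 (Order.lt_succ τ))
  classical
  set p : B.1 → E := fun b => if h : (b : Set E).Nonempty then h.some else Classical.arbitrary E
    with hp
  refine ⟨Set.range p, ?_, le_trans Cardinal.mk_range_le hB⟩
  rw [dense_iff_inter_open]
  rintro U hU ⟨x, hx⟩
  obtain ⟨v, hvB, hxv, hvU⟩ := B.2.exists_subset_of_mem_open hx hU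
  have hv : (v : Set E).Nonempty := ⟨x, hxv⟩
  refine ⟨p ⟨v, hvB⟩, hvU ?_, Set.mem_range_self _⟩
  simp only [hp, dif_pos hv]
  exact hv.some_mem

lemma isOpen_Ue {X : Type u} {E : Type v} [TopologicalSpace X] [NormedAddCommGroup E]
    [NormedSpace ℝ E] {φ : X → Set E} (hφ : LowerSemicontinuousSV φ) {g : X → E}
    (hg : Continuous g) (r ε : ℝ) (e : E) :
    IsOpen {x : X | (φ x ∩ Metric.ball (g x) r ∩ Metric.ball e ε).Nonempty} := by
  rw [isOpen_iff_mem_nhds]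
  rintro x₀ ⟨z, ⟨⟨hz1, hz2⟩, hz3⟩⟩
  rw [Metric.mem_ball] at hz2 hz3
  set a : ℝ := r - dist z (g x₀) with ha
  set b : ℝ := ε - dist z e with hb
  have ha0 : 0 < a := by linarith
  have hb0 : 0 < b := by linarith
  set η : ℝ := min a b / 3 with hη
  have hη0 : 0 < η := by positivity
  have hmem : g ⁻¹' (Metric.ball (g x₀) η) ∩ {x | (φ x ∩ Metric.ball z η).Nonempty} ∈ 𝓝 x₀ := by
    refine ((isOpen_ball.preimage hg).inter (hφ _ isOpen_ball)).mem_nhds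
      ⟨by simp [hη0], ⟨z, hz1, Metric.mem_ball_self hη0⟩⟩
  refine Filter.mem_of_superset hmem ?_
  rintro x ⟨hgx, z', hz'1, hz'2⟩
  rw [Set.mem_preimage, Metric.mem_ball] at hgx
  rw [Metric.mem_ball] at hz'2
  have hηa : η ≤ a / 3 := by
    rw [hη]; gcongr; exact min_le_left _ _
  have hηb : η ≤ b / 3 := by
    rw [hη]; gcongr; exact min_le_right _ _
  refine ⟨z', ⟨⟨hz'1, ?_⟩, ?_⟩⟩
  · rw [Metric.mem_ball]
    have h4 := dist_triangle4 z' z (g x₀) (g x)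
    have hco : dist (g x₀) (g x) = dist (g x) (g x₀) := dist_comm _ _
    linarith
  · rw [Metric.mem_ball]
    have h3 := dist_triangle z' z e
    linarith


lemma step_lemma_s7 {X : Type u} [TopologicalSpace X] [T1Space X] [NormalSpace X]
    {E : Type u} [NormedAddCommGroup E] [NormedSpace ℝ E]
    {τ : Cardinal.{u}} (hX : TauParacompact X τ)
    (D : Set E) (hD : Dense D) (hDcard : Cardinal.mk D ≤ τ)
    {α : ℝ} (hα0 : 0 ≤ α) (hα1 : α < 1)
    {φ : X → Set E} (hφval : ∀ x, (φ x).Nonempty ∧ IsClosed (φ x) ∧ Paraconvex α (φ x))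
    (hφ : LowerSemicontinuousSV φ)
    {r : ℝ} (hr : 0 < r) {g : X → E} (hg : Continuous g)
    (hgr : ∀ x, Metric.infDist (g x) (φ x) < r) :
    ∃ g' : X → E, Continuous g' ∧ (∀ x, Metric.infDist (g' x) (φ x) < (1 + α) / 2 * r) ∧
      ∀ x, dist (g x) (g' x) ≤ 2 * r := by
  classical
  set ε : ℝ := (1 - α) / 4 * r with hεdef
  have h1α : (0:ℝ) < 1 - α := by linarith
  have hε0 : 0 < ε := by rw [hεdef]; positivity
  have hεr : ε ≤ r := by rw [hεdef]; nlinarith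
  set U : E → Set X := fun e => {x | (φ x ∩ Metric.ball (g x) r ∩ Metric.ball e ε).Nonempty}
    with hUdef
  -- the cover
  have hcard : Cardinal.mk (U '' D) ≤ τ := le_trans Cardinal.mk_image_le hDcard
  have hopen : ∀ W ∈ U '' D, IsOpen W := by
    rintro W ⟨e, -, rfl⟩; exact isOpen_Ue hφ hg r ε e
  have hcover : ⋃₀ (U '' D) = Set.univ := by
    rw [Set.eq_univ_iff_forall]
    intro x
    obtain ⟨z, hzφ, hzd⟩ := (Metric.infDist_lt_iff (hφval x).1).1 (hgr x)
    obtain ⟨e, he1, he2⟩ := hD.inter_open_nonempty (Metric.ball z ε) isOpen_ball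
      ⟨z, Metric.mem_ball_self hε0⟩
    refine Set.mem_sUnion.2 ⟨U e, Set.mem_image_of_mem _ he2, ⟨z, ⟨⟨hzφ, ?_⟩, ?_⟩⟩⟩
    · rw [Metric.mem_ball, dist_comm]; exact hzd
    · rw [Metric.mem_ball, dist_comm]; exact Metric.mem_ball.1 he1
  obtain ⟨𝒱, hVopen, hVcover, hVlf, hVref⟩ := hX (U '' D) hcard hopen hcover
  -- choose for each V an element e of D with V ⊆ U e
  have hVsel : ∀ V : 𝒱, ∃ e : E, (V : Set X) ⊆ U e := by
    rintro ⟨V, hV⟩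
    obtain ⟨W, ⟨e, -, rfl⟩, hsub⟩ := hVref V hV
    exact ⟨e, hsub⟩
  choose e' he' using hVsel
  -- shrink the cover
  have hiUnion : (⋃ i : 𝒱, (i : Set X)) = Set.univ := by
    rw [← hVcover, Set.sUnion_eq_iUnion]
  obtain ⟨v, hvcov, hvopen, hvcl⟩ := exists_subset_iUnion_closure_subset isClosed_univ
    (u := fun i : 𝒱 => (i : Set X)) (fun i => hVopen i i.2)
    (fun x _ => hVlf.point_finite x) (by rw [hiUnion])
  -- Urysohn functions
  have hury : ∀ i : 𝒱, ∃ f : C(X, ℝ), Set.EqOn f 0 ((i : Set X)ᶜ) ∧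
      Set.EqOn f 1 (closure (v i)) ∧ ∀ x, f x ∈ Set.Icc (0 : ℝ) 1 := by
    intro i
    refine exists_continuous_zero_one_of_isClosed (hVopen i i.2).isClosed_compl
      isClosed_closure ?_
    rw [Set.disjoint_compl_left_iff_subset]
    exact hvcl i
  choose H hH0 hH1 hH01 using hury
  have hsupp : ∀ i : 𝒱, Function.support (fun x => H i x) ⊆ (i : Set X) := by
    intro i x hx
    by_contra hxc
    exact hx (hH0 i hxc)
  have hlf : LocallyFinite fun i : 𝒱 => Function.support (fun x => H i x) :=
    hVlf.subset hsupp
  set S : X → ℝ := fun x => ∑ᶠ i, H i x with hSdef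
  have hScont : Continuous S := continuous_finsum (fun i => (H i).continuous) hlf
  have hptfin : ∀ x : X, (Function.support fun i : 𝒱 => H i x).Finite := by
    intro x
    exact (hlf.point_finite x).subset fun i hi => hi
  have hS1 : ∀ x, 1 ≤ S x := by
    intro x
    have hx : x ∈ ⋃ i, v i := hvcov (Set.mem_univ x)
    obtain ⟨i₀, hi₀⟩ := Set.mem_iUnion.1 hx
    have h1 : H i₀ x = 1 := hH1 i₀ (subset_closure hi₀)
    calc (1 : ℝ) = H i₀ x := h1.symm
      _ ≤ S x := single_le_finsum i₀ (hptfin x) fun j => (hH01 j x).1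
  have hS0 : ∀ x, S x ≠ 0 := fun x => by linarith [hS1 x]
  set T : X → E := fun x => ∑ᶠ i, H i x • e' i with hTdef
  have hTcont : Continuous T := by
    refine continuous_finsum (fun i => ((H i).continuous).smul continuous_const)
      (hlf.subset fun i x hx => ?_)
    simp only [Function.mem_support] at hx ⊢
    intro h0
    exact hx (by rw [h0, zero_smul])
  have hmem : ∀ x : X, (S x)⁻¹ • T x ∈ convexHull ℝ
      {y : E | ∃ z ∈ Metric.ball (g x) r ∩ φ x, dist z y < ε} := by
    intro x
    set t : Finset 𝒱 := (hptfin x).toFinset with ht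
    have hSx : S x = ∑ i ∈ t, H i x := finsum_eq_sum _ (hptfin x)
    have hTx : T x = ∑ i ∈ t, H i x • e' i := by
      refine finsum_eq_finset_sum_of_support_subset _ fun i hi => ?_
      have : H i x ≠ 0 := by
        intro h0
        exact hi (by simp [h0])
      simpa [ht, Set.Finite.mem_toFinset] using this
    have hcm : (S x)⁻¹ • T x = t.centerMass (fun i => H i x) e' := by
      rw [Finset.centerMass, ← hSx, ← hTx]
    rw [hcm]
    refine Finset.centerMass_mem_convexHull t (fun i _ => (hH01 i x).1) ?_ ?_
    · rw [← hSx]; linarith [hS1 x]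
    · intro i hi
      have hix : H i x ≠ 0 := by
        rw [ht, Set.Finite.mem_toFinset, Function.mem_support] at hi
        exact hi
      have hxU : x ∈ U (e' i) := he' i (hsupp i (Function.mem_support.2 hix))
      obtain ⟨z, ⟨⟨hz1, hz2⟩, hz3⟩⟩ := hxU
      exact ⟨z, ⟨hz2, hz1⟩, Metric.mem_ball.1 hz3⟩
  refine ⟨fun x => (S x)⁻¹ • T x, ((hScont.inv₀ hS0).smul hTcont), ?_, ?_⟩
  · intro x
    have h1 := hmem x
    have hsub : {y : E | ∃ z ∈ Metric.ball (g x) r ∩ φ x, dist z y < ε} ⊆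
        (Metric.ball (g x) r ∩ φ x) + Metric.ball (0 : E) ε := by
      rintro y ⟨z, hz, hdz⟩
      have hy : y = z + (y - z) := by abel
      rw [hy]
      refine Set.add_mem_add hz ?_
      rw [mem_ball_zero_iff, ← dist_eq_norm, dist_comm]
      exact hdz
    have h2 : (S x)⁻¹ • T x ∈ convexHull ℝ (Metric.ball (g x) r ∩ φ x) + Metric.ball (0:E) ε := by
      have h3 := convexHull_mono hsub h1
      rwa [convexHull_add, (convex_ball (0:E) ε).convexHull_eq] at h3
    obtain ⟨q, hq, b, hb, hqb⟩ := Set.mem_add.1 h2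
    have hq' := (hφval x).2.2 r hr (g x) (hgr x) q hq
    have hdist : dist ((S x)⁻¹ • T x) q < ε := by
      rw [← hqb, dist_eq_norm]
      simpa using (mem_ball_zero_iff.1 hb)
    calc Metric.infDist ((S x)⁻¹ • T x) (φ x)
        ≤ Metric.infDist q (φ x) + dist ((S x)⁻¹ • T x) q := Metric.infDist_le_infDist_add_dist
      _ < α * r + ε := add_lt_add_of_le_of_lt hq' hdist
      _ < (1 + α) / 2 * r := by rw [hεdef]; nlinarith
  · intro x
    have hsub2 : {y : E | ∃ z ∈ Metric.ball (g x) r ∩ φ x, dist z y < ε} ⊆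
        Metric.ball (g x) (2 * r) := by
      rintro y ⟨z, ⟨hz1, hz2⟩, hdz⟩
      rw [Metric.mem_ball] at hz1 ⊢
      have h3 := dist_triangle y z (g x)
      have h4 : dist y z = dist z y := dist_comm _ _
      linarith
    have h5 := convexHull_min hsub2 (convex_ball _ _) (hmem x)
    rw [Metric.mem_ball] at h5
    rw [dist_comm]
    linarith


/-- approximate paraconvex-valued selections on τ-paracompact
normal spaces. -/
theorem paraconvex_selection_tauParacompact_approx
    (τ : Cardinal.{u}) (hτ : Cardinal.aleph0 ≤ τ)
    (X : Type u) [TopologicalSpace X] [T1Space X] [NormalSpace X]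
    (hX : TauParacompact X τ)
    (E : Type u) [NormedAddCommGroup E] [NormedSpace ℝ E] [CompleteSpace E]
    (hw : topWeight E ≤ τ)
    (α : ℝ) (hα0 : 0 ≤ α) (hα1 : α < 1)
    (φ : X → Set E)
    (hφval : ∀ x, (φ x).Nonempty ∧ IsClosed (φ x) ∧ Paraconvex α (φ x))
    (hφ : LowerSemicontinuousSV φ) :
    ∃ δ : ℝ, 0 < δ ∧ ∀ r : ℝ, 0 < r → ∀ g : X → E, Continuous g →
      (∀ x, Metric.infDist (g x) (φ x) < r) →
      ∃ f : X → E, Continuous f ∧ (∀ x, f x ∈ φ x) ∧ ∀ x, dist (g x) (f x) < δ * r := by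
  classical
  rcases isEmpty_or_nonempty X with hX0 | hX0
  · exact ⟨1, one_pos, fun r hr g hg _ =>
      ⟨g, hg, fun x => isEmptyElim x, fun x => isEmptyElim x⟩⟩
  obtain ⟨x₀⟩ := hX0
  haveI : Nonempty E := ⟨(hφval x₀).1.some⟩
  obtain ⟨D, hD, hDcard⟩ := exists_dense_card_le E hw
  set β : ℝ := (1 + α) / 2 with hβdef
  have hβpos : 0 < β := by rw [hβdef]; linarith
  have hβ0 : 0 ≤ β := hβpos.le
  have hβ1 : β < 1 := by rw [hβdef]; linarith
  have h1β : 0 < 1 - β := by linarith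
  refine ⟨2 / (1 - β) + 1, by positivity, ?_⟩
  intro r hr g hg hgr
  have step : ∀ n : ℕ, ∀ h : X → E,
      (Continuous h ∧ ∀ x, Metric.infDist (h x) (φ x) < β ^ n * r) →
      ∃ h' : X → E, (Continuous h' ∧ ∀ x, Metric.infDist (h' x) (φ x) < β ^ (n + 1) * r) ∧
        ∀ x, dist (h x) (h' x) ≤ 2 * r * β ^ n := by
    rintro n h ⟨hc, hd⟩
    have hrn : 0 < β ^ n * r := by positivity
    obtain ⟨h', h'c, h'd, h'dist⟩ := step_lemma_s7 hX D hD hDcard hα0 hα1 hφval hφ hrn hc hd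
    refine ⟨h', ⟨h'c, fun x => ?_⟩, fun x => ?_⟩
    · have h1 := h'd x
      have h2 : (1 + α) / 2 * (β ^ n * r) = β ^ (n + 1) * r := by
        rw [hβdef]; ring
      linarith
    · have h1 := h'dist x
      have h2 : 2 * (β ^ n * r) = 2 * r * β ^ n := by ring
      linarith
  have step' : ∀ n : ℕ, ∀ h : X → E, ∃ h' : X → E,
      (Continuous h ∧ ∀ x, Metric.infDist (h x) (φ x) < β ^ n * r) →
      ((Continuous h' ∧ ∀ x, Metric.infDist (h' x) (φ x) < β ^ (n + 1) * r) ∧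
        ∀ x, dist (h x) (h' x) ≤ 2 * r * β ^ n) := by
    intro n h
    by_cases hp : Continuous h ∧ ∀ x, Metric.infDist (h x) (φ x) < β ^ n * r
    · obtain ⟨h', h1, h2⟩ := step n h hp
      exact ⟨h', fun _ => ⟨h1, h2⟩⟩
    · exact ⟨h, fun hcon => absurd hcon hp⟩
  choose nextf hnextf using step'
  set seq : ℕ → X → E := fun n => Nat.rec g (fun n h => nextf n h) n with hseqdef
  have hseqsucc : ∀ n, seq (n + 1) = nextf n (seq n) := fun n => rfl
  have hP : ∀ n, Continuous (seq n) ∧ ∀ x, Metric.infDist (seq n x) (φ x) < β ^ n * r := by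
    intro n
    induction n with
    | zero => exact ⟨hg, fun x => by show Metric.infDist (g x) (φ x) < β ^ 0 * r; simpa using hgr x⟩
    | succ n ih =>
      rw [hseqsucc]
      exact (hnextf n (seq n) ih).1
  have hdist : ∀ n x, dist (seq n x) (seq (n + 1) x) ≤ 2 * r * β ^ n := by
    intro n x
    rw [hseqsucc]
    exact (hnextf n (seq n) (hP n)).2 x
  have hcauchy : ∀ x, ∃ a : E, Tendsto (fun n => seq n x) atTop (𝓝 a) := by
    intro x
    exact cauchySeq_tendsto_of_complete
      (cauchySeq_of_le_geometric β (2 * r) hβ1 fun n => hdist n x)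
  choose f hf using hcauchy
  have hdlim : ∀ n x, dist (seq n x) (f x) ≤ 2 * r * β ^ n / (1 - β) := fun n x =>
    dist_le_of_le_geometric_of_tendsto β (2 * r) hβ1 (fun n => hdist n x) (hf x) n
  have hb0 : Tendsto (fun n : ℕ => 2 * r * β ^ n / (1 - β)) atTop (𝓝 0) := by
    have h1 := tendsto_pow_atTop_nhds_zero_of_lt_one hβ0 hβ1
    have h2 := (h1.const_mul (2 * r)).div_const (1 - β)
    simpa using h2
  have huni : TendstoUniformly (fun n x => seq n x) f atTop := by
    rw [Metric.tendstoUniformly_iff]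
    intro ε hε
    filter_upwards [hb0.eventually (gt_mem_nhds hε)] with n hn x
    calc dist (f x) (seq n x) = dist (seq n x) (f x) := dist_comm _ _
      _ ≤ 2 * r * β ^ n / (1 - β) := hdlim n x
      _ < ε := hn
  have hfc : Continuous f := huni.continuous (Filter.Eventually.of_forall fun n => (hP n).1).frequently
  have hmem : ∀ x, f x ∈ φ x := by
    intro x
    have hle : ∀ n : ℕ, Metric.infDist (f x) (φ x) ≤ (r + 2 * r / (1 - β)) * β ^ n := by
      intro n
      calc Metric.infDist (f x) (φ x)
          ≤ Metric.infDist (seq n x) (φ x) + dist (f x) (seq n x) :=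
            Metric.infDist_le_infDist_add_dist
        _ ≤ β ^ n * r + 2 * r * β ^ n / (1 - β) := by
            have h1 := (hP n).2 x
            have h2 := hdlim n x
            rw [dist_comm]
            linarith
        _ = (r + 2 * r / (1 - β)) * β ^ n := by field_simp
    have htend : Tendsto (fun n : ℕ => (r + 2 * r / (1 - β)) * β ^ n) atTop (𝓝 0) := by
      simpa using (tendsto_pow_atTop_nhds_zero_of_lt_one hβ0 hβ1).const_mul
        (r + 2 * r / (1 - β))
    have h0 : Metric.infDist (f x) (φ x) ≤ 0 := ge_of_tendsto' htend hle
    exact ((hφval x).2.1.mem_iff_infDist_zero (hφval x).1).2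
      (le_antisymm h0 Metric.infDist_nonneg)
  refine ⟨f, hfc, hmem, fun x => ?_⟩
  have h1 : dist (g x) (f x) ≤ 2 * r / (1 - β) := by
    have h0 := hdlim 0 x
    change dist (g x) (f x) ≤ _ at h0
    simpa using h0
  have h2 : 2 * r / (1 - β) < (2 / (1 - β) + 1) * r := by
    have h3 : 2 * r / (1 - β) = 2 / (1 - β) * r := by ring
    rw [h3]
    nlinarith
  linarith
end

section
/- Let X be a countably paracompact normal T1 space, let E be a separable Banach space, let 0 ≤ α < 1, and let φ : X → F_α(E) be a lower semicontinuous set-valued mapping whose values are nonempty closed α-paraconvex subsets of E. Then φ has a continuous selection. -/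
open Set Metric Filter Topology Cardinal

universe u v

/-- A `T₁` space is countably paracompact if every countable open cover has a
locally finite open refinement (which is again a cover). -/
def CountablyParacompact (X : Type*) [TopologicalSpace X] : Prop :=
  ∀ 𝒰 : Set (Set X), 𝒰.Countable → (∀ U ∈ 𝒰, IsOpen U) → ⋃₀ 𝒰 = Set.univ →
    ∃ 𝒱 : Set (Set X), (∀ V ∈ 𝒱, IsOpen V) ∧ ⋃₀ 𝒱 = Set.univ ∧
      LocallyFinite (fun V : 𝒱 => (V : Set X)) ∧ ∀ V ∈ 𝒱, ∃ U ∈ 𝒰, V ⊆ U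

lemma exists_pu {X : Type u} [TopologicalSpace X] [NormalSpace X]
    (hX : CountablyParacompact X) (𝒰 : Set (Set X)) (hc : 𝒰.Countable)
    (ho : ∀ U ∈ 𝒰, IsOpen U) (hcov : ⋃₀ 𝒰 = Set.univ) :
    ∃ (J : Type u) (p : J → X → ℝ) (c : J → Set X),
      (∀ j, Continuous (p j)) ∧ (∀ j x, 0 ≤ p j x) ∧
      LocallyFinite (fun j => Function.support (p j)) ∧
      (∀ x, ∑ᶠ j, p j x = 1) ∧
      (∀ j, c j ∈ 𝒰) ∧ (∀ j, Function.support (p j) ⊆ c j) := by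
  obtain ⟨𝒱, hVo, hVcov, hVlf, hVref⟩ := hX 𝒰 hc ho hcov
  set J := ↥𝒱 with hJ
  set u : J → Set X := fun j => (j : Set X) with hu
  have huo : ∀ j, IsOpen (u j) := fun j => hVo _ j.2
  have hucov : (Set.univ : Set X) ⊆ ⋃ j, u j := by
    rw [← sUnion_eq_iUnion, hVcov]
  have hpf : ∀ x ∈ (Set.univ : Set X), {j : J | x ∈ u j}.Finite :=
    fun x _ => hVlf.point_finite x
  obtain ⟨v, hvcov, hvo, hvcl⟩ :=
    exists_subset_iUnion_closure_subset isClosed_univ huo hpf hucov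
  have hury : ∀ j : J, ∃ g : C(X, ℝ), EqOn g 0 (u j)ᶜ ∧ EqOn g 1 (closure (v j)) ∧
      ∀ x, g x ∈ Icc (0:ℝ) 1 := by
    intro j
    refine exists_continuous_zero_one_of_isClosed (huo j).isClosed_compl isClosed_closure ?_
    rw [disjoint_compl_left_iff]
    exact hvcl j
  choose g hg0 hg1 hg01 using hury
  have hsupp : ∀ j, Function.support (fun x => g j x) ⊆ u j := by
    intro j x hx
    by_contra h
    exact hx (hg0 j h)
  have hlf : LocallyFinite (fun j => Function.support fun x => g j x) :=
    hVlf.subset hsupp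
  set S : X → ℝ := fun x => ∑ᶠ j, g j x with hS
  have hSc : Continuous S := continuous_finsum (fun j => (g j).continuous) hlf
  have hfin : ∀ x, (Function.support fun j => g j x).Finite := by
    intro x
    exact (hlf.point_finite x).subset (fun j hj => hj)
  have hS1 : ∀ x, 1 ≤ S x := by
    intro x
    obtain ⟨j0, hj0⟩ : ∃ j, x ∈ v j := mem_iUnion.mp (hvcov (mem_univ x))
    calc (1:ℝ) = g j0 x := (hg1 j0 (subset_closure hj0)).symm
    _ ≤ S x := single_le_finsum j0 (hfin x) (fun j => (hg01 j x).1)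
  have hSpos : ∀ x, (0:ℝ) < S x := fun x => lt_of_lt_of_le one_pos (hS1 x)
  refine ⟨J, fun j x => g j x / S x, fun j => (hVref _ j.2).choose, ?_, ?_, ?_, ?_, ?_, ?_⟩
  · exact fun j => (g j).continuous.div hSc (fun x => (hSpos x).ne')
  · exact fun j x => div_nonneg (hg01 j x).1 (hSpos x).le
  · refine hlf.subset (fun j x hx => ?_)
    simp only [Function.mem_support] at hx ⊢
    intro h
    exact hx (by simp [h])
  · intro x
    have : ∀ j : J, g j x / S x = g j x • (S x)⁻¹ := by
      intro j; rw [smul_eq_mul, div_eq_mul_inv]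
    simp_rw [this]
    rw [← finsum_smul' (hfin x), smul_eq_mul, mul_inv_cancel₀ (hSpos x).ne']
  · exact fun j => (hVref _ j.2).choose_spec.1
  · intro j x hx
    have hxu : x ∈ u j := by
      apply hsupp j
      simp only [Function.mem_support] at hx ⊢
      intro h
      exact hx (by simp [h])
    exact (hVref _ j.2).choose_spec.2 hxu

lemma approx_step {X : Type u} [TopologicalSpace X] [NormalSpace X]
    (hX : CountablyParacompact X)
    {E : Type v} [NormedAddCommGroup E] [NormedSpace ℝ E]
    {D : Set E} (hD : D.Countable) (hDd : Dense D)
    {α : ℝ} (hα0 : 0 ≤ α)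
    {φ : X → Set E}
    (hφval : ∀ x, (φ x).Nonempty ∧ IsClosed (φ x) ∧ Paraconvex α (φ x))
    (hφ : LowerSemicontinuousSV φ)
    (f : X → E) (r : X → ℝ) (δ : ℝ) (hδ : 0 < δ)
    (hf : Continuous f) (hr : Continuous r)
    (h : ∀ x, ∃ y ∈ φ x, dist y (f x) < r x) :
    ∃ g : X → E, Continuous g ∧ (∀ x, dist (g x) (f x) ≤ r x + δ) ∧
      ∀ x, ∃ y ∈ φ x, dist y (g x) < α * r x + 2 * δ := by
  classical
  set U : E → Set X := fun e => {x | ∃ y, y ∈ φ x ∧ dist y (f x) < r x ∧ dist y e < δ} with hU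
  have hUo : ∀ e, IsOpen (U e) := by
    intro e
    rw [isOpen_iff_mem_nhds]
    rintro x0 ⟨y0, hy0φ, hy0f, hy0e⟩
    set η : ℝ := min ((r x0 - dist y0 (f x0)) / 4) ((δ - dist y0 e) / 2) with hη
    have hη0 : 0 < η := lt_min (by linarith) (by linarith)
    have hη1 : 4 * η ≤ r x0 - dist y0 (f x0) := by
      have := min_le_left ((r x0 - dist y0 (f x0)) / 4) ((δ - dist y0 e) / 2)
      rw [← hη] at this; linarith
    have hη2 : 2 * η ≤ δ - dist y0 e := by
      have := min_le_right ((r x0 - dist y0 (f x0)) / 4) ((δ - dist y0 e) / 2)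
      rw [← hη] at this; linarith
    have hW1 : IsOpen {x | (φ x ∩ ball y0 η).Nonempty} := hφ _ isOpen_ball
    have hW2 : IsOpen {x | dist (f x) (f x0) < η} := by
      have : {x | dist (f x) (f x0) < η} = f ⁻¹' ball (f x0) η := by
        ext x; simp [mem_ball]
      rw [this]; exact isOpen_ball.preimage hf
    have hW3 : IsOpen {x | dist y0 (f x0) + 2 * η < r x} := by
      have : {x | dist y0 (f x0) + 2 * η < r x} = r ⁻¹' Ioi (dist y0 (f x0) + 2 * η) := rfl
      rw [this]; exact isOpen_Ioi.preimage hr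
    have hmem : x0 ∈ {x | (φ x ∩ ball y0 η).Nonempty} ∩
        ({x | dist (f x) (f x0) < η} ∩ {x | dist y0 (f x0) + 2 * η < r x}) := by
      refine ⟨⟨y0, hy0φ, mem_ball_self hη0⟩, by simp [hη0], by simp only [mem_setOf_eq]; linarith⟩
    refine Filter.mem_of_superset
      (((hW1.inter (hW2.inter hW3)).mem_nhds hmem)) ?_
    rintro x ⟨⟨y, hyφ, hyb⟩, hx2, hx3⟩
    rw [mem_ball] at hyb
    refine ⟨y, hyφ, ?_, ?_⟩
    · have : dist y (f x) ≤ dist y y0 + dist y0 (f x0) + dist (f x0) (f x) :=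
        dist_triangle4 y y0 (f x0) (f x)
      have hfx : dist (f x0) (f x) < η := by rw [dist_comm]; exact hx2
      simp only [mem_setOf_eq] at hx3
      linarith
    · have : dist y e ≤ dist y y0 + dist y0 e := dist_triangle y y0 e
      linarith
  have hcov : ⋃₀ (U '' D) = Set.univ := by
    rw [eq_univ_iff_forall]
    intro x
    obtain ⟨y, hyφ, hyf⟩ := h x
    obtain ⟨e, heD, hey⟩ := hDd.exists_mem_open isOpen_ball ⟨y, mem_ball_self hδ⟩
    exact ⟨U e, mem_image_of_mem _ heD, y, hyφ, hyf, by rw [dist_comm]; exact mem_ball.mp hey⟩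
  obtain ⟨J, p, c, hpc, hp0, hplf, hps1, hcU, hsupp⟩ :=
    exists_pu hX (U '' D) (hD.image U) (by rintro _ ⟨e, -, rfl⟩; exact hUo e) hcov
  choose e heD hec using fun j => hcU j
  set g : X → E := fun x => ∑ᶠ j, p j x • e j with hg
  have hsupp' : ∀ j, Function.support (fun x => p j x • e j) ⊆ Function.support (p j) := by
    intro j x hx
    simp only [Function.mem_support] at hx ⊢
    intro hz; exact hx (by simp [hz])
  have hgc : Continuous g :=
    continuous_finsum (fun j => (hpc j).smul continuous_const) (hplf.subset hsupp')
  have key : ∀ x, dist (g x) (f x) ≤ r x + δ ∧ Metric.infDist (g x) (φ x) ≤ α * r x + δ := by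
    intro x
    have hTfin : (Function.support fun j => p j x).Finite :=
      (hplf.point_finite x).subset (fun j hj => hj)
    set t : Finset J := hTfin.toFinset with ht
    have htsub : (Function.support fun j => p j x) ⊆ ↑t := by
      rw [ht, Set.Finite.coe_toFinset]
    have hsum1 : ∑ j ∈ t, p j x = 1 := by
      rw [← finsum_eq_finset_sum_of_support_subset _ htsub]
      exact hps1 x
    have hgx : g x = ∑ j ∈ t, p j x • e j := by
      refine finsum_eq_finset_sum_of_support_subset _ ?_
      refine Subset.trans ?_ htsub
      intro j hj
      simp only [Function.mem_support] at hj ⊢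
      intro hz; exact hj (by simp [hz])
    -- witnesses
    have hw : ∀ j : J, ∃ y, y ∈ φ x ∧ (j ∈ t → dist y (f x) < r x ∧ dist y (e j) < δ) := by
      intro j
      by_cases hj : j ∈ t
      · have hxs : x ∈ Function.support (p j) := by
          rw [ht, Set.Finite.mem_toFinset] at hj; exact hj
        have hxU : x ∈ U (e j) := by rw [hec j]; exact hsupp j hxs
        obtain ⟨y, hyφ, hy1, hy2⟩ := hxU
        exact ⟨y, hyφ, fun _ => ⟨hy1, hy2⟩⟩
      · obtain ⟨y, hy⟩ := (hφval x).1
        exact ⟨y, hy, fun hc => absurd hc hj⟩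
    choose Y hYφ hY using hw
    set z : E := ∑ j ∈ t, p j x • Y j with hz
    have hp0t : ∀ j ∈ t, 0 ≤ p j x := fun j _ => hp0 j x
    have hzhull : z ∈ convexHull ℝ (ball (f x) (r x) ∩ φ x) := by
      have : z = t.centerMass (fun j => p j x) Y := by
        rw [Finset.centerMass_eq_of_sum_1 _ _ hsum1, hz]
      rw [this]
      refine Finset.centerMass_mem_convexHull t hp0t (by rw [hsum1]; exact one_pos) ?_
      intro j hj
      exact ⟨mem_ball.mpr (hY j hj).1, hYφ j⟩
    obtain ⟨y0, hy0φ, hy0f⟩ := h x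
    have hrpos : 0 < r x := lt_of_le_of_lt dist_nonneg hy0f
    have hinf : Metric.infDist (f x) (φ x) < r x :=
      lt_of_le_of_lt (Metric.infDist_le_dist_of_mem hy0φ) (by rwa [dist_comm])
    have hzdist : Metric.infDist z (φ x) ≤ α * r x :=
      (hφval x).2.2 (r x) hrpos (f x) hinf z hzhull
    have hgz : dist (g x) z ≤ δ := by
      rw [hgx, hz, dist_eq_norm, ← Finset.sum_sub_distrib]
      have : ∀ j ∈ t, p j x • e j - p j x • Y j = p j x • (e j - Y j) := by
        intro j _; rw [smul_sub]
      rw [Finset.sum_congr rfl this]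
      calc ‖∑ j ∈ t, p j x • (e j - Y j)‖ ≤ ∑ j ∈ t, ‖p j x • (e j - Y j)‖ :=
            norm_sum_le _ _
        _ ≤ ∑ j ∈ t, p j x * δ := by
            refine Finset.sum_le_sum (fun j hj => ?_)
            rw [norm_smul, Real.norm_eq_abs, abs_of_nonneg (hp0 j x)]
            refine mul_le_mul_of_nonneg_left ?_ (hp0 j x)
            have := (hY j hj).2
            rw [← dist_eq_norm, dist_comm]
            exact this.le
        _ = δ := by rw [← Finset.sum_mul, hsum1, one_mul]
    have hzf : dist z (f x) ≤ r x := by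
      rw [hz, dist_eq_norm]
      have h1 : (∑ j ∈ t, p j x • Y j) - f x = ∑ j ∈ t, p j x • (Y j - f x) := by
        simp only [smul_sub, Finset.sum_sub_distrib, ← Finset.sum_smul, hsum1, one_smul]
      rw [h1]
      calc ‖∑ j ∈ t, p j x • (Y j - f x)‖ ≤ ∑ j ∈ t, ‖p j x • (Y j - f x)‖ :=
            norm_sum_le _ _
        _ ≤ ∑ j ∈ t, p j x * r x := by
            refine Finset.sum_le_sum (fun j hj => ?_)
            rw [norm_smul, Real.norm_eq_abs, abs_of_nonneg (hp0 j x)]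
            refine mul_le_mul_of_nonneg_left ?_ (hp0 j x)
            rw [← dist_eq_norm]
            exact (hY j hj).1.le
        _ = r x := by rw [← Finset.sum_mul, hsum1, one_mul]
    constructor
    · calc dist (g x) (f x) ≤ dist (g x) z + dist z (f x) := dist_triangle _ _ _
        _ ≤ δ + r x := add_le_add hgz hzf
        _ = r x + δ := by ring
    · calc Metric.infDist (g x) (φ x) ≤ Metric.infDist z (φ x) + dist (g x) z :=
            Metric.infDist_le_infDist_add_dist
        _ ≤ α * r x + δ := add_le_add hzdist hgz
  refine ⟨g, hgc, fun x => (key x).1, fun x => ?_⟩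
  have h2 : Metric.infDist (g x) (φ x) < α * r x + 2 * δ :=
    lt_of_le_of_lt (key x).2 (by linarith)
  obtain ⟨y, hyφ, hy⟩ := (Metric.infDist_lt_iff (hφval x).1).mp h2
  exact ⟨y, hyφ, by rw [dist_comm]; exact hy⟩

lemma approx_base {X : Type u} [TopologicalSpace X] [NormalSpace X]
    (hX : CountablyParacompact X)
    {E : Type v} [NormedAddCommGroup E] [NormedSpace ℝ E]
    {φ : X → Set E}
    (hne : ∀ x, (φ x).Nonempty)
    (hφ : LowerSemicontinuousSV φ) :
    ∃ r0 : X → ℝ, Continuous r0 ∧ ∀ x, ∃ y ∈ φ x, dist y 0 < r0 x := by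
  classical
  set V : ℕ → Set X := fun n => {x | (φ x ∩ ball (0:E) n).Nonempty} with hV
  have hVo : ∀ n, IsOpen (V n) := fun n => hφ _ isOpen_ball
  have hcov : ⋃₀ (V '' univ) = Set.univ := by
    rw [eq_univ_iff_forall]; intro x
    obtain ⟨y, hy⟩ := hne x
    obtain ⟨n, hn⟩ := exists_nat_gt (dist y 0)
    exact ⟨V n, mem_image_of_mem _ (mem_univ n), y, hy, mem_ball.mpr hn⟩
  obtain ⟨J, p, c, hpc, hp0, hplf, hps1, hcU, hsupp⟩ :=
    exists_pu hX (V '' univ) (countable_univ.image V) (by rintro _ ⟨n, -, rfl⟩; exact hVo n) hcov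
  choose m hm using fun j => hcU j
  replace hm : ∀ j, V (m j) = c j := fun j => (hm j).2
  refine ⟨fun x => ∑ᶠ j, p j x * (m j : ℝ), ?_, ?_⟩
  · refine continuous_finsum (fun j => (hpc j).mul continuous_const) (hplf.subset ?_)
    intro j x hx
    simp only [Function.mem_support] at hx ⊢
    intro hz; exact hx (by simp [hz])
  · intro x
    have hTfin : (Function.support fun j => p j x).Finite :=
      (hplf.point_finite x).subset (fun j hj => hj)
    set t : Finset J := hTfin.toFinset with ht
    have htsub : (Function.support fun j => p j x) ⊆ ↑t := by
      rw [ht, Set.Finite.coe_toFinset]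
    have hsum1 : ∑ j ∈ t, p j x = 1 := by
      rw [← finsum_eq_finset_sum_of_support_subset _ htsub]; exact hps1 x
    have hrx : (∑ᶠ j, p j x * (m j : ℝ)) = ∑ j ∈ t, p j x * (m j : ℝ) := by
      refine finsum_eq_finset_sum_of_support_subset _ (Subset.trans ?_ htsub)
      intro j hj
      simp only [Function.mem_support] at hj ⊢
      intro hz; exact hj (by simp [hz])
    have htne : t.Nonempty := by
      by_contra hemp
      rw [Finset.not_nonempty_iff_eq_empty] at hemp
      rw [hemp, Finset.sum_empty] at hsum1
      exact one_ne_zero hsum1.symm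
    obtain ⟨j0, hj0t, hj0min⟩ := t.exists_min_image (fun j => m j) htne
    have hxV : x ∈ V (m j0) := by
      rw [hm j0]
      refine hsupp j0 ?_
      rw [ht, Set.Finite.mem_toFinset] at hj0t
      exact hj0t
    obtain ⟨y, hyφ, hyb⟩ := hxV
    refine ⟨y, hyφ, lt_of_lt_of_le (mem_ball.mp hyb) ?_⟩
    show ((m j0 : ℝ)) ≤ ∑ᶠ j, p j x * (m j : ℝ)
    rw [hrx]
    calc ((m j0 : ℝ)) = ∑ j ∈ t, p j x * (m j0 : ℝ) := by
          rw [← Finset.sum_mul, hsum1, one_mul]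
      _ ≤ ∑ j ∈ t, p j x * (m j : ℝ) := by
          refine Finset.sum_le_sum (fun j hj => ?_)
          exact mul_le_mul_of_nonneg_left (Nat.cast_le.mpr (hj0min j hj)) (hp0 j x)

/-- paraconvex-valued selections on countably paracompact normal
spaces, for separable Banach range spaces. -/
theorem paraconvex_selection_countablyParacompact
    (X : Type*) [TopologicalSpace X] [T1Space X] [NormalSpace X]
    (hX : CountablyParacompact X)
    (E : Type*) [NormedAddCommGroup E] [NormedSpace ℝ E] [CompleteSpace E]
    [TopologicalSpace.SeparableSpace E]
    (α : ℝ) (hα0 : 0 ≤ α) (hα1 : α < 1)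
    (φ : X → Set E)
    (hφval : ∀ x, (φ x).Nonempty ∧ IsClosed (φ x) ∧ Paraconvex α (φ x))
    (hφ : LowerSemicontinuousSV φ) :
    ∃ f : X → E, Continuous f ∧ ∀ x, f x ∈ φ x := by
  classical
  obtain ⟨D, hDc, hDd⟩ := TopologicalSpace.exists_countable_dense E
  obtain ⟨r0, hr0c, hbase⟩ := approx_base hX (fun x => (hφval x).1) hφ
  set τ : ℝ := (1 + α) / 2 with hτ
  have hατ : α < τ := by rw [hτ]; linarith
  have hτ1 : τ < 1 := by rw [hτ]; linarith
  have hτ0 : 0 < τ := by rw [hτ]; linarith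
  have step : ∀ (n : ℕ) (fr : (X → E) × (X → ℝ)),
      (Continuous fr.1 ∧ Continuous fr.2 ∧ ∀ x, ∃ y ∈ φ x, dist y (fr.1 x) < fr.2 x) →
      ∃ g : X → E, Continuous g ∧ (∀ x, dist (g x) (fr.1 x) ≤ fr.2 x + τ ^ n) ∧
      (∀ x, ∃ y ∈ φ x, dist y (g x) < α * fr.2 x + 2 * τ ^ n) := fun n fr hfr =>
    approx_step hX hDc hDd hα0 hφval hφ fr.1 fr.2 (τ ^ n) (pow_pos hτ0 n) hfr.1 hfr.2.1 hfr.2.2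
  choose G hGc hGd hGy using step
  let F : ℕ → {fr : (X → E) × (X → ℝ) //
      Continuous fr.1 ∧ Continuous fr.2 ∧ ∀ x, ∃ y ∈ φ x, dist y (fr.1 x) < fr.2 x} :=
    fun n => Nat.rec ⟨((fun _ => 0), r0), continuous_const, hr0c, hbase⟩
      (fun n fr => ⟨(G n fr.1 fr.2, fun x => α * fr.1.2 x + 2 * τ ^ n),
        hGc n fr.1 fr.2,
        (continuous_const.mul fr.2.2.1).add continuous_const,
        hGy n fr.1 fr.2⟩) n
  set fn : ℕ → X → E := fun n => (F n).1.1 with hfn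
  set rn : ℕ → X → ℝ := fun n => (F n).1.2 with hrn
  have hGoodn : ∀ n, Continuous (fn n) ∧ Continuous (rn n) ∧
      ∀ x, ∃ y ∈ φ x, dist y (fn n x) < rn n x := fun n => (F n).2
  have hrsucc : ∀ n x, rn (n+1) x = α * rn n x + 2 * τ ^ n := fun n x => rfl
  have hdsucc : ∀ n x, dist (fn (n+1) x) (fn n x) ≤ rn n x + τ ^ n :=
    fun n x => hGd n (F n).1 (F n).2 x
  have hrpos : ∀ n x, 0 < rn n x := by
    intro n x
    obtain ⟨y, -, hy⟩ := (hGoodn n).2.2 x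
    exact lt_of_le_of_lt dist_nonneg hy
  set K : ℝ := 2 / (τ - α) with hK
  have hτα : 0 < τ - α := by linarith
  have hKval : (τ - α) * K = 2 := by rw [hK]; field_simp
  have hKpos : 0 < K := div_pos two_pos hτα
  have hrb : ∀ n x, rn n x ≤ τ ^ n * (rn 0 x + K) := by
    intro n
    induction n with
    | zero => intro x; simpa using by linarith [hKpos]
    | succ n ih =>
      intro x
      rw [hrsucc n x]
      have h1 := ih x
      have h2 : (0:ℝ) < τ ^ n := pow_pos hτ0 n
      have h3 := hrpos 0 x
      have : α * rn n x + 2 * τ ^ n ≤ τ ^ n * (α * (rn 0 x + K) + 2) := by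
        nlinarith
      refine this.trans ?_
      rw [pow_succ]
      have h4 : α * (rn 0 x + K) + 2 ≤ τ * (rn 0 x + K) := by nlinarith
      nlinarith
  have hdb : ∀ x n, dist (fn n x) (fn (n+1) x) ≤ (rn 0 x + K + 1) * τ ^ n := by
    intro x n
    rw [dist_comm]
    have h1 := hdsucc n x
    have h2 := hrb n x
    have h3 : (0:ℝ) < τ ^ n := pow_pos hτ0 n
    nlinarith
  have hcauchy : ∀ x, CauchySeq (fun n => fn n x) :=
    fun x => cauchySeq_of_le_geometric τ (rn 0 x + K + 1) hτ1 (hdb x)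
  choose L hL using fun x => cauchySeq_tendsto_of_complete (hcauchy x)
  have hdistL : ∀ x n, dist (fn n x) (L x) ≤ (rn 0 x + K + 1) * τ ^ n / (1 - τ) :=
    fun x n => dist_le_of_le_geometric_of_tendsto τ (rn 0 x + K + 1) hτ1 (hdb x) (hL x) n
  have hτ1' : 0 < 1 - τ := by linarith
  have hLc : Continuous L := by
    have hloc : TendstoLocallyUniformly (fun n x => fn n x) L atTop := by
      rw [Metric.tendstoLocallyUniformly_iff]
      intro ε hε x0
      set M : ℝ := rn 0 x0 + 1 + K + 1 with hM
      have hMpos : 0 < M := by have := hrpos 0 x0; rw [hM]; linarith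
      refine ⟨{x | rn 0 x < rn 0 x0 + 1}, ?_, ?_⟩
      · have : IsOpen {x | rn 0 x < rn 0 x0 + 1} :=
          isOpen_lt (hGoodn 0).2.1 continuous_const
        exact this.mem_nhds (by simp only [mem_setOf_eq]; linarith [hrpos 0 x0])
      · have htend : Tendsto (fun n : ℕ => M * τ ^ n / (1 - τ)) atTop (𝓝 0) := by
          have := tendsto_pow_atTop_nhds_zero_of_lt_one hτ0.le hτ1
          have h2 : Tendsto (fun n : ℕ => M * τ ^ n / (1 - τ)) atTop
              (𝓝 (M * 0 / (1 - τ))) := (this.const_mul M).div_const (1 - τ)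
          simpa using h2
        filter_upwards [htend.eventually (gt_mem_nhds hε)] with n hn x hx
        have h1 : dist (L x) (fn n x) ≤ (rn 0 x + K + 1) * τ ^ n / (1 - τ) := by
          rw [dist_comm]; exact hdistL x n
        have h2 : (rn 0 x + K + 1) * τ ^ n / (1 - τ) ≤ M * τ ^ n / (1 - τ) := by
          have h3 : (0:ℝ) ≤ τ ^ n := (pow_pos hτ0 n).le
          have hx' : rn 0 x < rn 0 x0 + 1 := hx
          have : (rn 0 x + K + 1) * τ ^ n ≤ M * τ ^ n := by nlinarith
          exact div_le_div_of_nonneg_right this hτ1'.le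
        exact lt_of_le_of_lt (h1.trans h2) hn
    exact hloc.continuous (Eventually.of_forall fun n => (hGoodn n).1).frequently
  refine ⟨L, hLc, fun x => ?_⟩
  have hle : ∀ n, Metric.infDist (L x) (φ x) ≤
      τ ^ n * (rn 0 x + K) + (rn 0 x + K + 1) * τ ^ n / (1 - τ) := by
    intro n
    obtain ⟨y, hyφ, hy⟩ := (hGoodn n).2.2 x
    have h1 : Metric.infDist (fn n x) (φ x) ≤ rn n x :=
      le_trans (Metric.infDist_le_dist_of_mem hyφ) (by rw [dist_comm]; exact hy.le)
    calc Metric.infDist (L x) (φ x)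
        ≤ Metric.infDist (fn n x) (φ x) + dist (L x) (fn n x) :=
          Metric.infDist_le_infDist_add_dist
      _ ≤ rn n x + (rn 0 x + K + 1) * τ ^ n / (1 - τ) := by
          rw [dist_comm]
          exact add_le_add h1 (hdistL x n)
      _ ≤ _ := add_le_add (hrb n x) le_rfl
  have htend0 : Tendsto (fun n : ℕ => τ ^ n * (rn 0 x + K) +
      (rn 0 x + K + 1) * τ ^ n / (1 - τ)) atTop (𝓝 0) := by
    have hp := tendsto_pow_atTop_nhds_zero_of_lt_one hτ0.le hτ1
    have h1 : Tendsto (fun n : ℕ => τ ^ n * (rn 0 x + K)) atTop (𝓝 (0 * (rn 0 x + K))) :=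
      hp.mul_const _
    have h2 : Tendsto (fun n : ℕ => (rn 0 x + K + 1) * τ ^ n / (1 - τ)) atTop
        (𝓝 ((rn 0 x + K + 1) * 0 / (1 - τ))) := (hp.const_mul _).div_const _
    have := h1.add h2
    simpa using this
  have hinf0 : Metric.infDist (L x) (φ x) ≤ 0 :=
    ge_of_tendsto htend0 (Eventually.of_forall hle)
  exact ((hφval x).2.1.mem_iff_infDist_zero (hφval x).1).mpr
    (le_antisymm hinf0 Metric.infDist_nonneg)
end

section
/- Let X be a countably paracompact normal T1 space, let E be a separable Banach space, let 0 ≤ α < 1, and let φ : X → F_α(E) be a lower semicontinuous set-valued mapping whose values are nonempty closed α-paraconvex subsets of E. Then there exists δ > 0, depending only on α, such that for every r > 0 and every continuous map g : X → E with d(g(x), φ(x)) < r for all x ∈ X, there exists a continuous selection f for φ with d(g(x), f(x)) < δ·r for all x ∈ X. -/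
open Set Metric Filter Topology Cardinal

universe u v

theorem approx_step_aux
    {X : Type*} [TopologicalSpace X] [NormalSpace X]
    (hX : CountablyParacompact X)
    {E : Type*} [NormedAddCommGroup E] [NormedSpace ℝ E]
    (u : ℕ → E) (hu : DenseRange u)
    {α : ℝ}
    {φ : X → Set E}
    (hφval : ∀ x, (φ x).Nonempty ∧ IsClosed (φ x) ∧ Paraconvex α (φ x))
    (hφ : LowerSemicontinuousSV φ)
    {r ε : ℝ} (hr : 0 < r) (hε : 0 < ε)
    {g : X → E} (hg : Continuous g) (hgr : ∀ x, Metric.infDist (g x) (φ x) < r) :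
    ∃ h : X → E, Continuous h ∧ (∀ x, dist (g x) (h x) ≤ r + ε) ∧
      ∀ x, Metric.infDist (h x) (φ x) ≤ α * r + ε := by
  classical
  set U : ℕ → Set X := fun n => {x | (φ x ∩ (ball (g x) r ∩ ball (u n) ε)).Nonempty} with hU
  have hUopen : ∀ n, IsOpen (U n) := by
    intro n
    rw [isOpen_iff_mem_nhds]
    rintro x₀ ⟨p, hpφ, hp1, hp2⟩
    rw [mem_ball] at hp1 hp2
    set s : ℝ := min ((r - dist p (g x₀)) / 3) ((ε - dist p (u n)) / 2) with hs
    have hs0 : 0 < s := by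
      apply lt_min <;> [skip; skip] <;> linarith
    have hWopen : IsOpen ({x | (φ x ∩ ball p s).Nonempty} ∩ g ⁻¹' ball (g x₀) s) :=
      (hφ _ isOpen_ball).inter (isOpen_ball.preimage hg)
    have hx₀W : x₀ ∈ {x | (φ x ∩ ball p s).Nonempty} ∩ g ⁻¹' ball (g x₀) s :=
      ⟨⟨p, hpφ, mem_ball_self hs0⟩, mem_ball_self hs0⟩
    refine mem_of_superset (hWopen.mem_nhds hx₀W) ?_
    rintro x ⟨⟨q, hqφ, hqp⟩, hgx⟩
    rw [mem_ball] at hqp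
    rw [mem_preimage, mem_ball] at hgx
    have hs1 : s ≤ (r - dist p (g x₀)) / 3 := min_le_left _ _
    have hs2 : s ≤ (ε - dist p (u n)) / 2 := min_le_right _ _
    refine ⟨q, hqφ, ?_, ?_⟩
    · rw [mem_ball]
      calc dist q (g x) ≤ dist q p + dist p (g x₀) + dist (g x₀) (g x) := dist_triangle4 _ _ _ _
        _ < s + dist p (g x₀) + s := by
            gcongr
            exact dist_comm (g x) (g x₀) ▸ hgx
        _ < r := by linarith
    · rw [mem_ball]
      calc dist q (u n) ≤ dist q p + dist p (u n) := dist_triangle _ _ _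
        _ < s + dist p (u n) := by gcongr
        _ ≤ ε := by linarith
  have hUcover : ⋃₀ (Set.range U) = Set.univ := by
    rw [sUnion_range]
    refine eq_univ_of_forall fun x => mem_iUnion.2 ?_
    obtain ⟨p, hpφ, hpd⟩ := (infDist_lt_iff (hφval x).1).mp (hgr x)
    obtain ⟨n, hn⟩ := (Metric.denseRange_iff).mp hu p ε hε
    exact ⟨n, p, hpφ, mem_ball.2 (dist_comm (g x) p ▸ hpd), mem_ball.2 hn⟩
  obtain ⟨𝒱, h𝒱open, h𝒱cover, h𝒱lf, h𝒱ref⟩ :=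
    hX (Set.range U) (countable_range U) (by rintro _ ⟨n, rfl⟩; exact hUopen n) hUcover
  have hnn : ∀ V : 𝒱, ∃ m : ℕ, (V : Set X) ⊆ U m := by
    rintro ⟨V, hV⟩
    obtain ⟨W, ⟨m, rfl⟩, hsub⟩ := h𝒱ref V hV
    exact ⟨m, hsub⟩
  choose nn hnnsub using hnn
  obtain ⟨ρ, hρ⟩ := PartitionOfUnity.exists_isSubordinate_of_locallyFinite isClosed_univ
    (fun V : 𝒱 => (V : Set X)) (fun V => h𝒱open V V.2) h𝒱lf
    (by rw [← sUnion_eq_iUnion, h𝒱cover])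
  have key : ∀ x, dist (g x) (∑ᶠ i, ρ i x • u (nn i)) ≤ r + ε ∧
      Metric.infDist (∑ᶠ i, ρ i x • u (nn i)) (φ x) ≤ α * r + ε := by
    intro x
    have hE : Nonempty E := ⟨u 0⟩
    set T := ρ.finsupport x with hT
    have hsum1 : ∑ i ∈ T, ρ i x = 1 := ρ.sum_finsupport (mem_univ x)
    have heq : ∑ᶠ i, ρ i x • u (nn i) = ∑ i ∈ T, ρ i x • u (nn i) :=
      (ρ.sum_finsupport_smul_eq_finsum (x₀ := x) (fun i _ => u (nn i))).symm
    have hmem : ∀ i ∈ T, ∃ q, q ∈ φ x ∧ dist q (g x) < r ∧ dist q (u (nn i)) < ε := by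
      intro i hi
      have hx : x ∈ U (nn i) := by
        apply hnnsub i
        apply hρ i
        exact subset_closure (by rwa [ρ.mem_finsupport] at hi)
      obtain ⟨qq, hq1, hq2, hq3⟩ := hx
      exact ⟨qq, hq1, mem_ball.1 hq2, mem_ball.1 hq3⟩
    choose! q hq1 hq2 hq3 using hmem
    set w := ∑ i ∈ T, ρ i x • q i with hw
    have hwmem : w ∈ convexHull ℝ (ball (g x) r ∩ φ x) := by
      rw [hw, ← Finset.centerMass_eq_of_sum_1 _ _ hsum1]
      exact T.centerMass_mem_convexHull (fun i _ => ρ.nonneg i x)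
        (by rw [hsum1]; exact one_pos) (fun i hi => ⟨mem_ball.2 (hq2 i hi), hq1 i hi⟩)
    have hdistw : dist (∑ i ∈ T, ρ i x • u (nn i)) w ≤ ε := by
      rw [dist_eq_norm, hw, ← Finset.sum_sub_distrib]
      calc ‖∑ i ∈ T, (ρ i x • u (nn i) - ρ i x • q i)‖
          ≤ ∑ i ∈ T, ‖ρ i x • (u (nn i) - q i)‖ := by
            simp_rw [← smul_sub]; exact norm_sum_le _ _
        _ ≤ ∑ i ∈ T, ρ i x * ε := by
            refine Finset.sum_le_sum fun i hi => ?_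
            rw [norm_smul, Real.norm_eq_abs, abs_of_nonneg (ρ.nonneg i x)]
            have hle : ‖u (nn i) - q i‖ ≤ ε := by
              rw [← dist_eq_norm, dist_comm]
              exact (hq3 i hi).le
            exact mul_le_mul_of_nonneg_left hle (ρ.nonneg i x)
        _ = ε := by rw [← Finset.sum_mul, hsum1, one_mul]
    have hwball : dist w (g x) < r := by
      have hsub2 : convexHull ℝ (ball (g x) r ∩ φ x) ⊆ ball (g x) r :=
        convexHull_min inter_subset_left (convex_ball _ _)
      exact mem_ball.1 (hsub2 hwmem)
    constructor
    · rw [heq]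
      calc dist (g x) (∑ i ∈ T, ρ i x • u (nn i))
          ≤ dist (g x) w + dist w (∑ i ∈ T, ρ i x • u (nn i)) := dist_triangle _ _ _
        _ ≤ r + ε := add_le_add (dist_comm w (g x) ▸ hwball.le) (dist_comm _ w ▸ hdistw)
    · rw [heq]
      have h1 : Metric.infDist w (φ x) ≤ α * r := (hφval x).2.2 r hr (g x) (hgr x) w hwmem
      calc Metric.infDist (∑ i ∈ T, ρ i x • u (nn i)) (φ x)
          ≤ Metric.infDist w (φ x) + dist (∑ i ∈ T, ρ i x • u (nn i)) w :=
            Metric.infDist_le_infDist_add_dist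
        _ ≤ α * r + ε := add_le_add h1 hdistw
  refine ⟨fun x => ∑ᶠ i, ρ i x • u (nn i), ?_, ?_, ?_⟩
  · exact ρ.continuous_finsum_smul (g := fun i _ => u (nn i)) (fun i x _ => continuousAt_const)
  · exact fun x => (key x).1
  · exact fun x => (key x).2

/-- approximate paraconvex-valued selections on countably
paracompact normal spaces, for separable Banach range spaces. -/
theorem paraconvex_selection_countablyParacompact_approx
    (X : Type*) [TopologicalSpace X] [T1Space X] [NormalSpace X]
    (hX : CountablyParacompact X)
    (E : Type*) [NormedAddCommGroup E] [NormedSpace ℝ E] [CompleteSpace E]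
    [TopologicalSpace.SeparableSpace E]
    (α : ℝ) (hα0 : 0 ≤ α) (hα1 : α < 1)
    (φ : X → Set E)
    (hφval : ∀ x, (φ x).Nonempty ∧ IsClosed (φ x) ∧ Paraconvex α (φ x))
    (hφ : LowerSemicontinuousSV φ) :
    ∃ δ : ℝ, 0 < δ ∧ ∀ r : ℝ, 0 < r → ∀ g : X → E, Continuous g →
      (∀ x, Metric.infDist (g x) (φ x) < r) →
      ∃ f : X → E, Continuous f ∧ (∀ x, f x ∈ φ x) ∧ ∀ x, dist (g x) (f x) < δ * r := by
  classical
  set β : ℝ := (1 + α) / 2 with hβ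
  have hαβ : α < β := by rw [hβ]; linarith
  have hβ1 : β < 1 := by rw [hβ]; linarith
  have hβ0 : 0 < β := by rw [hβ]; linarith
  have h1β : 0 < 1 - β := by linarith
  refine ⟨2 / (1 - β) + 1, by positivity, ?_⟩
  intro r hr g hg hgr
  rcases isEmpty_or_nonempty X with hXe | hXne
  · exact ⟨g, hg, fun x => (IsEmpty.false x).elim, fun x => (IsEmpty.false x).elim⟩
  have hE : Nonempty E := ⟨(hφval (Classical.arbitrary X)).1.some⟩
  obtain ⟨u, hu⟩ := TopologicalSpace.exists_dense_seq E
  have step : ∀ s : ℝ, 0 < s → ∀ g' : X → E, Continuous g' →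
      (∀ x, Metric.infDist (g' x) (φ x) < s) →
      ∃ h : X → E, Continuous h ∧ (∀ x, dist (g' x) (h x) ≤ 2 * s) ∧
        ∀ x, Metric.infDist (h x) (φ x) < β * s := by
    intro s hs g' hg' hg's
    have hεs : 0 < (β - α) / 2 * s := mul_pos (by linarith) hs
    obtain ⟨h, hc, hd, hi⟩ := approx_step_aux hX u hu hφval hφ hs hεs hg' hg's
    refine ⟨h, hc, fun x => (hd x).trans (by nlinarith), fun x => (hi x).trans_lt (by nlinarith)⟩
  set Q : ℕ → (X → E) → Prop := fun n f =>
    Continuous f ∧ ∀ x, Metric.infDist (f x) (φ x) < β ^ n * r with hQdef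
  have hstep : ∀ n (f : X → E), Q n f →
      ∃ h, Q (n + 1) h ∧ ∀ x, dist (f x) (h x) ≤ 2 * r * β ^ n := by
    intro n f hf
    obtain ⟨h, hc, hd, hi⟩ := step (β ^ n * r) (by positivity) f hf.1 hf.2
    refine ⟨h, ⟨hc, fun x => ?_⟩, fun x => (hd x).trans (by ring_nf; rfl)⟩
    have he : β * (β ^ n * r) = β ^ (n + 1) * r := by ring
    exact he ▸ hi x
  choose! next hnextQ hnextd using hstep
  set F : ℕ → X → E := fun n => Nat.rec g (fun k f => next k f) n with hF
  have hQF : ∀ n, Q n (F n) := by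
    intro n
    induction n with
    | zero => exact ⟨hg, fun x => by rw [pow_zero, one_mul]; exact hgr x⟩
    | succ n ih => exact hnextQ n (F n) ih
  have hFd : ∀ x n, dist (F n x) (F (n + 1) x) ≤ 2 * r * β ^ n :=
    fun x n => hnextd n (F n) (hQF n) x
  have hcauchy : ∀ x, CauchySeq fun n => F n x :=
    fun x => cauchySeq_of_le_geometric β (2 * r) hβ1 (hFd x)
  choose f hf using fun x => cauchySeq_tendsto_of_complete (hcauchy x)
  have hdistn : ∀ x n, dist (F n x) (f x) ≤ 2 * r * β ^ n / (1 - β) :=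
    fun x n => dist_le_of_le_geometric_of_tendsto β (2 * r) hβ1 (hFd x) (hf x) n
  have hunif : TendstoUniformly (fun n x => F n x) f atTop := by
    rw [Metric.tendstoUniformly_iff]
    intro ε hε
    have h0 : Tendsto (fun n : ℕ => 2 * r * β ^ n / (1 - β)) atTop (𝓝 0) := by
      have h0' := tendsto_pow_atTop_nhds_zero_of_lt_one hβ0.le hβ1
      simpa using (h0'.const_mul (2 * r)).div_const (1 - β)
    filter_upwards [h0.eventually (gt_mem_nhds hε)] with n hn x
    calc dist (f x) (F n x) = dist (F n x) (f x) := dist_comm _ _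
      _ ≤ 2 * r * β ^ n / (1 - β) := hdistn x n
      _ < ε := hn
  have hfc : Continuous f := hunif.continuous (Eventually.of_forall fun n => (hQF n).1).frequently
  refine ⟨f, hfc, ?_, ?_⟩
  · intro x
    have h1 : Tendsto (fun n => Metric.infDist (F n x) (φ x)) atTop
        (𝓝 (Metric.infDist (f x) (φ x))) :=
      ((continuous_infDist_pt (φ x)).tendsto (f x)).comp (hf x)
    have h2 : Tendsto (fun n : ℕ => β ^ n * r) atTop (𝓝 0) := by
      simpa using (tendsto_pow_atTop_nhds_zero_of_lt_one hβ0.le hβ1).mul_const r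
    have h3 : Metric.infDist (f x) (φ x) ≤ 0 :=
      le_of_tendsto_of_tendsto' h1 h2 fun n => ((hQF n).2 x).le
    have h4 : Metric.infDist (f x) (φ x) = 0 := le_antisymm h3 Metric.infDist_nonneg
    exact ((hφval x).2.1.mem_iff_infDist_zero (hφval x).1).mpr h4
  · intro x
    have h5 : dist (g x) (f x) ≤ 2 * r / (1 - β) := by
      have h5' := dist_le_of_le_geometric_of_tendsto₀ β (2 * r) hβ1 (hFd x) (hf x)
      exact h5'
    calc dist (g x) (f x) ≤ 2 * r / (1 - β) := h5
      _ = 2 / (1 - β) * r := by ring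
      _ < (2 / (1 - β) + 1) * r := by nlinarith
end
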